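/- arXiv:1908.05671 — 16 statements merged into one kernel-verified Lean document; each statement's English description precedes it below -/
import Mathlib

section
/- Let X be a compact Hausdorff space that is the disjoint union of two clopen compact subspaces Y and Z. Then every additive local multiplication on C(X) is a multiplication if and only if every additive local multiplication on C(Y) is a multiplication and every additive local multiplication on C(Z) is a multiplication. -/
open ContinuousMap

section Glue
variable {X : Type*} [TopologicalSpace X] {Y Z : Set X}

noncomputable def glue (hY : IsOpen Y) (hZ : IsOpen Z) (hunion : Y ∪ Z = Set.univ)
    (hdisj : Y ∩ Z = ∅) (f : C(Y, ℂ)) (g : C(Z, ℂ)) : C(X, ℂ) :=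
  ContinuousMap.liftCover (fun b : Bool => bif b then Y else Z)
    (fun b => match b with | true => f | false => g)
    (by
      rintro (_|_) (_|_) x hxi hxj
      · rfl
      · exact absurd (hdisj ▸ Set.mem_inter hxj hxi) (Set.notMem_empty x)
      · exact absurd (hdisj ▸ Set.mem_inter hxi hxj) (Set.notMem_empty x)
      · rfl)
    (fun x => by
      rcases (hunion ▸ Set.mem_univ x : x ∈ Y ∪ Z) with h | h
      · exact ⟨true, hY.mem_nhds h⟩
      · exact ⟨false, hZ.mem_nhds h⟩)

variable (hY : IsOpen Y) (hZ : IsOpen Z) (hunion : Y ∪ Z = Set.univ) (hdisj : Y ∩ Z = ∅)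

theorem glue_left (f : C(Y, ℂ)) (g : C(Z, ℂ)) {x : X} (hx : x ∈ Y) :
    glue hY hZ hunion hdisj f g x = f ⟨x, hx⟩ := by
  unfold glue
  exact ContinuousMap.liftCover_coe (i := true) ⟨x, hx⟩

theorem glue_right (f : C(Y, ℂ)) (g : C(Z, ℂ)) {x : X} (hx : x ∈ Z) :
    glue hY hZ hunion hdisj f g x = g ⟨x, hx⟩ := by
  unfold glue
  exact ContinuousMap.liftCover_coe (i := false) ⟨x, hx⟩

theorem glue_restrict_left (f : C(Y, ℂ)) (g : C(Z, ℂ)) :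
    (glue hY hZ hunion hdisj f g).restrict Y = f := by
  unfold glue
  exact ContinuousMap.liftCover_restrict (i := true)

end Glue


/-- A compact Hausdorff space `W` is an η-space: every additive local multiplication
on `C(W, ℂ)` is a multiplication. -/
def IsEtaSpace (W : Type*) [TopologicalSpace W] : Prop :=
  ∀ T : C(W, ℂ) → C(W, ℂ),
    (∀ f g, T (f + g) = T f + T g) →
    (∀ f, ∃ h, T f = h * f) →
    ∃ h, ∀ f, T f = h * f

section Main
variable {X : Type*} [TopologicalSpace X] {Y Z : Set X}

omit [TopologicalSpace X] in
theorem mem_or_mem (hunion : Y ∪ Z = Set.univ) (x : X) : x ∈ Y ∨ x ∈ Z := by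
  have : x ∈ Y ∪ Z := hunion ▸ Set.mem_univ x
  exact this

theorem glue_restrict_right (hY : IsOpen Y) (hZ : IsOpen Z) (hunion : Y ∪ Z = Set.univ)
    (hdisj : Y ∩ Z = ∅) (f : C(Y, ℂ)) (g : C(Z, ℂ)) :
    (glue hY hZ hunion hdisj f g).restrict Z = g := by
  unfold glue
  exact ContinuousMap.liftCover_restrict (i := false)

theorem glue_add (hY : IsOpen Y) (hZ : IsOpen Z) (hunion : Y ∪ Z = Set.univ)
    (hdisj : Y ∩ Z = ∅) (f₁ f₂ : C(Y, ℂ)) (g₁ g₂ : C(Z, ℂ)) :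
    glue hY hZ hunion hdisj (f₁ + f₂) (g₁ + g₂) =
      glue hY hZ hunion hdisj f₁ g₁ + glue hY hZ hunion hdisj f₂ g₂ := by
  ext x
  rcases mem_or_mem hunion x with h | h
  · simp only [ContinuousMap.add_apply, glue_left hY hZ hunion hdisj _ _ h]
  · simp only [ContinuousMap.add_apply, glue_right hY hZ hunion hdisj _ _ h]

theorem glue_add_left (hY : IsOpen Y) (hZ : IsOpen Z) (hunion : Y ∪ Z = Set.univ)
    (hdisj : Y ∩ Z = ∅) (f₁ f₂ : C(Y, ℂ)) :
    glue hY hZ hunion hdisj (f₁ + f₂) 0 =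
      glue hY hZ hunion hdisj f₁ 0 + glue hY hZ hunion hdisj f₂ 0 := by
  have := glue_add hY hZ hunion hdisj f₁ f₂ 0 0
  rwa [add_zero] at this

theorem glue_add_right (hY : IsOpen Y) (hZ : IsOpen Z) (hunion : Y ∪ Z = Set.univ)
    (hdisj : Y ∩ Z = ∅) (g₁ g₂ : C(Z, ℂ)) :
    glue hY hZ hunion hdisj 0 (g₁ + g₂) =
      glue hY hZ hunion hdisj 0 g₁ + glue hY hZ hunion hdisj 0 g₂ := by
  have := glue_add hY hZ hunion hdisj 0 0 g₁ g₂
  rwa [add_zero] at this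

theorem eta_left (hY : IsOpen Y) (hZ : IsOpen Z) (hunion : Y ∪ Z = Set.univ)
    (hdisj : Y ∩ Z = ∅) (hX : IsEtaSpace X) : IsEtaSpace Y := by
  intro T hadd hloc
  obtain ⟨H, hH⟩ := hX (fun f => glue hY hZ hunion hdisj (T (f.restrict Y)) 0)
    (by
      intro f g
      have hr : ContinuousMap.restrict Y (f + g) =
          ContinuousMap.restrict Y f + ContinuousMap.restrict Y g := rfl
      simp only [hr, hadd]
      exact glue_add_left hY hZ hunion hdisj _ _)
    (by
      intro f
      obtain ⟨h, hh⟩ := hloc (f.restrict Y)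
      refine ⟨glue hY hZ hunion hdisj h 0, ?_⟩
      ext x
      rcases mem_or_mem hunion x with hx | hx
      · rw [ContinuousMap.mul_apply, glue_left hY hZ hunion hdisj _ _ hx,
          glue_left hY hZ hunion hdisj _ _ hx, hh]
        rfl
      · rw [ContinuousMap.mul_apply, glue_right hY hZ hunion hdisj _ _ hx,
          glue_right hY hZ hunion hdisj _ _ hx]
        simp)
  refine ⟨H.restrict Y, fun g => ?_⟩
  ext y
  have h1 := ContinuousMap.congr_fun (hH (glue hY hZ hunion hdisj g 0)) (y : X)
  rw [glue_restrict_left hY hZ hunion hdisj g 0, ContinuousMap.mul_apply,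
    glue_left hY hZ hunion hdisj _ _ y.2, glue_left hY hZ hunion hdisj _ _ y.2] at h1
  simpa using h1

theorem eta_of_parts (hY : IsOpen Y) (hZ : IsOpen Z) (hunion : Y ∪ Z = Set.univ)
    (hdisj : Y ∩ Z = ∅) (h1 : IsEtaSpace Y) (h2 : IsEtaSpace Z) : IsEtaSpace X := by
  intro T hadd hloc
  obtain ⟨hy, hhy⟩ := h1 (fun f => (T (glue hY hZ hunion hdisj f 0)).restrict Y)
    (by
      intro f g
      simp only [glue_add_left hY hZ hunion hdisj, hadd]
      rfl)
    (by
      intro f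
      obtain ⟨k, hk⟩ := hloc (glue hY hZ hunion hdisj f 0)
      refine ⟨k.restrict Y, ?_⟩
      ext y
      have e := ContinuousMap.congr_fun hk (y : X)
      rw [ContinuousMap.mul_apply, glue_left hY hZ hunion hdisj _ _ y.2] at e
      simpa using e)
  obtain ⟨hz, hhz⟩ := h2 (fun g => (T (glue hY hZ hunion hdisj 0 g)).restrict Z)
    (by
      intro f g
      simp only [glue_add_right hY hZ hunion hdisj, hadd]
      rfl)
    (by
      intro g
      obtain ⟨k, hk⟩ := hloc (glue hY hZ hunion hdisj 0 g)
      refine ⟨k.restrict Z, ?_⟩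
      ext z
      have e := ContinuousMap.congr_fun hk (z : X)
      rw [ContinuousMap.mul_apply, glue_right hY hZ hunion hdisj _ _ z.2] at e
      simpa using e)
  refine ⟨glue hY hZ hunion hdisj hy hz, fun f => ?_⟩
  have hsplit : f = glue hY hZ hunion hdisj (f.restrict Y) 0 +
      glue hY hZ hunion hdisj 0 (f.restrict Z) := by
    ext x
    rcases mem_or_mem hunion x with hx | hx
    · simp only [ContinuousMap.add_apply, glue_left hY hZ hunion hdisj _ _ hx]
      simp
    · simp only [ContinuousMap.add_apply, glue_right hY hZ hunion hdisj _ _ hx]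
      simp
  obtain ⟨k1, hk1⟩ := hloc (glue hY hZ hunion hdisj (f.restrict Y) 0)
  obtain ⟨k2, hk2⟩ := hloc (glue hY hZ hunion hdisj 0 (f.restrict Z))
  conv_lhs => rw [hsplit]
  rw [hadd]
  ext x
  rcases mem_or_mem hunion x with hx | hx
  · have e1 := ContinuousMap.congr_fun (hhy (f.restrict Y)) ⟨x, hx⟩
    rw [ContinuousMap.restrict_apply, ContinuousMap.mul_apply,
      ContinuousMap.restrict_apply] at e1
    have e2 := ContinuousMap.congr_fun hk2 x
    rw [ContinuousMap.mul_apply, glue_left hY hZ hunion hdisj _ _ hx] at e2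
    simp only [ContinuousMap.zero_apply, mul_zero] at e2
    rw [ContinuousMap.add_apply, ContinuousMap.mul_apply,
      glue_left hY hZ hunion hdisj _ _ hx, e1, e2, add_zero]
  · have e1 := ContinuousMap.congr_fun (hhz (f.restrict Z)) ⟨x, hx⟩
    rw [ContinuousMap.restrict_apply, ContinuousMap.mul_apply,
      ContinuousMap.restrict_apply] at e1
    have e2 := ContinuousMap.congr_fun hk1 x
    rw [ContinuousMap.mul_apply, glue_right hY hZ hunion hdisj _ _ hx] at e2
    simp only [ContinuousMap.zero_apply, mul_zero] at e2
    rw [ContinuousMap.add_apply, ContinuousMap.mul_apply,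
      glue_right hY hZ hunion hdisj _ _ hx, e1, e2, zero_add]

end Main

theorem stmt0 {X : Type*} [TopologicalSpace X] [CompactSpace X] [T2Space X]
    (Y Z : Set X) (hY : IsClopen Y) (hZ : IsClopen Z)
    (hunion : Y ∪ Z = Set.univ) (hdisj : Y ∩ Z = ∅) :
    IsEtaSpace X ↔ (IsEtaSpace Y ∧ IsEtaSpace Z) := by
  have hunion' : Z ∪ Y = Set.univ := by rw [Set.union_comm]; exact hunion
  have hdisj' : Z ∩ Y = ∅ := by rw [Set.inter_comm]; exact hdisj
  constructor
  · intro hX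
    exact ⟨eta_left hY.isOpen hZ.isOpen hunion hdisj hX,
      eta_left hZ.isOpen hY.isOpen hunion' hdisj' hX⟩
  · rintro ⟨h1, h2⟩
    exact eta_of_parts hY.isOpen hZ.isOpen hunion hdisj h1 h2
end

section
/- If X is a compact Hausdorff space and every additive local multiplication on C(X) is a multiplication, then X has no isolated points. -/
theorem stmt1 {X : Type*} [TopologicalSpace X] [CompactSpace X] [T2Space X]
    (h : IsEtaSpace X) : ∀ x : X, ¬ IsOpen ({x} : Set X) := by
  intro x hx
  classical
  have econt : Continuous (fun y : X => if y = x then (1 : ℂ) else 0) := by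
    have : IsClopen ({x} : Set X) := ⟨isClosed_singleton, hx⟩
    have := (IsLocallyConstant.iff_isOpen_fiber
      (f := fun y : X => if y = x then (1 : ℂ) else 0)).2 ?_ |>.continuous
    · exact this
    · intro z
      by_cases hz1 : z = 1
      · subst hz1
        have : (fun y : X => if y = x then (1:ℂ) else 0) ⁻¹' {1} = {x} := by
          ext y; simp [Set.mem_preimage]
        rw [this]; exact hx
      · by_cases hz0 : z = 0
        · subst hz0
          have : (fun y : X => if y = x then (1:ℂ) else 0) ⁻¹' {0} = {x}ᶜ := by
            ext y; by_cases hy : y = x <;> simp [hy]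
          rw [this]; exact isOpen_compl_singleton
        · have : (fun y : X => if y = x then (1:ℂ) else 0) ⁻¹' {z} = ∅ := by
            ext y
            by_cases hy : y = x
            · simp only [Set.mem_preimage, hy, if_pos rfl, Set.mem_singleton_iff,
                Set.mem_empty_iff_false, iff_false]
              exact fun h => hz1 h.symm
            · simp only [Set.mem_preimage, if_neg hy, Set.mem_singleton_iff,
                Set.mem_empty_iff_false, iff_false]
              exact fun h => hz0 h.symm
          rw [this]; exact isOpen_empty
  set e : C(X, ℂ) := ⟨fun y => if y = x then (1 : ℂ) else 0, econt⟩ with he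
  set T : C(X, ℂ) → C(X, ℂ) := fun f => (starRingEnd ℂ (f x)) • e with hT
  have hadd : ∀ f g, T (f + g) = T f + T g := by
    intro f g
    simp only [hT, ContinuousMap.add_apply, map_add, add_smul]
  have hloc : ∀ f, ∃ hf, T f = hf * f := by
    intro f
    by_cases hfx : f x = 0
    · exact ⟨0, by simp [hT, hfx]⟩
    · refine ⟨(starRingEnd ℂ (f x) / f x) • e, ?_⟩
      ext y
      by_cases hy : y = x
      · subst hy
        simp [hT, he, div_mul_cancel₀, hfx, mul_comm,
          div_mul_eq_mul_div, mul_div_assoc]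
        field_simp
      · simp [hT, he, hy]
  obtain ⟨h0, hh0⟩ := h T hadd hloc
  have h1 := hh0 1
  have hi := hh0 (Complex.I • 1)
  have e1 : T 1 = e := by simp [hT]
  have e2 : T (Complex.I • 1) = (-Complex.I) • e := by
    simp [hT, Complex.conj_I]
  -- evaluate at x
  have q1 : h0 x = 1 := by
    have := congrArg (fun f => f x) h1
    simpa [e1, he] using this.symm
  have q2 : (-Complex.I) = Complex.I * h0 x := by
    have := congrArg (fun f => f x) hi
    simpa [e2, he] using this
  rw [q1, mul_one] at q2
  have h2 : (2:ℂ) * Complex.I = 0 := by linear_combination -q2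
  have : Complex.I = 0 := by
    have h2' := mul_eq_zero.mp h2
    rcases h2' with h2' | h2'
    · norm_num at h2'
    · exact h2'
  exact Complex.I_ne_zero this
end

section
/- Suppose X is a compact Hausdorff space and let A be the set of sequential limit points of X, i.e., points x such that there is a sequence in X∖{x} converging to x. If A is dense in X, then every additive local multiplication on C(X) is a multiplication. -/
open Filter Topology Complex OnePoint

lemma aux_inj_subseq {X : Type*} [TopologicalSpace X] [T2Space X] {x : X} {u : ℕ → X}
    (hux : ∀ n, u n ≠ x) (hlim : Filter.Tendsto u Filter.atTop (nhds x)) :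
    ∃ w : ℕ → X, (∀ n, w n ≠ x) ∧ Filter.Tendsto w Filter.atTop (nhds x) ∧
      Function.Injective w := by
  classical
  have hfib : ∀ y : X, {n | u n = y}.Finite := by
    intro y
    by_contra hinf
    obtain ⟨φ, hφ, hmem⟩ := Filter.extraction_of_frequently_atTop
      (Nat.frequently_atTop_iff_infinite.mpr hinf)
    have h1 : Filter.Tendsto (u ∘ φ) Filter.atTop (nhds x) := hlim.comp hφ.tendsto_atTop
    have h2 : (u ∘ φ) = fun _ => y := funext fun n => hmem n
    rw [h2] at h1
    exact hux (φ 0) (by rw [hmem 0, tendsto_nhds_unique h1 tendsto_const_nhds])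
  set S : Set ℕ := {n | ∀ m < n, u m ≠ u n} with hS
  have himg : u '' S = Set.range u := by
    apply Set.Subset.antisymm (Set.image_subset_range u S)
    rintro y ⟨n, rfl⟩
    have hex : ∃ m, u m = u n := ⟨n, rfl⟩
    refine ⟨Nat.find hex, fun m hm => ?_, Nat.find_spec hex⟩
    rw [Nat.find_spec hex]
    exact Nat.find_min hex hm
  have hrange : (Set.range u).Infinite := by
    intro hfin
    have hcov : (⋃ y ∈ Set.range u, {n | u n = y}) = Set.univ := by
      ext n; simp only [Set.mem_iUnion, Set.mem_univ, iff_true]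
      exact ⟨u n, ⟨n, rfl⟩, rfl⟩
    have hbu := hfin.biUnion (fun y _ => hfib y)
    rw [hcov] at hbu
    exact Set.infinite_univ hbu
  have hSinf : S.Infinite := fun hfin => hrange (himg ▸ hfin.image u)
  obtain ⟨φ, hφ, hmem⟩ := Filter.extraction_of_frequently_atTop
    (Nat.frequently_atTop_iff_infinite.mpr hSinf)
  refine ⟨u ∘ φ, fun n => hux (φ n), hlim.comp hφ.tendsto_atTop, ?_⟩
  intro a b hab
  by_contra hne
  rcases lt_or_gt_of_ne hne with h | h
  · exact (hmem b) (φ a) (hφ h) hab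
  · exact (hmem a) (φ b) (hφ h) hab.symm

lemma aux_ext {X : Type*} [TopologicalSpace X] [CompactSpace X] [T2Space X]
    {x : X} {u : ℕ → X} (hux : ∀ n, u n ≠ x) (hinj : Function.Injective u)
    (hlim : Filter.Tendsto u Filter.atTop (nhds x))
    (v : ℕ → ℂ) (c : ℂ) (hv : Filter.Tendsto v Filter.atTop (nhds c)) :
    ∃ g : C(X, ℂ), g x = c ∧ ∀ n, g (u n) = v n := by
  let e : C(OnePoint ℕ, X) := OnePoint.continuousMapMkNat u x hlim
  have he_infty : e ∞ = x := rfl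
  have he_coe : ∀ n : ℕ, e n = u n := fun n => rfl
  have heinj : Function.Injective e := by
    intro a b hab
    induction a using OnePoint.rec <;> induction b using OnePoint.rec
    · rfl
    · rename_i n; rw [he_infty, he_coe] at hab; exact absurd hab.symm (hux n)
    · rename_i n; rw [he_infty, he_coe] at hab; exact absurd hab (hux n)
    · rename_i n m; rw [he_coe, he_coe] at hab
      exact congrArg _ (hinj hab)
  have hce : IsClosedEmbedding e := e.continuous.isClosedEmbedding heinj
  let w : C(OnePoint ℕ, ℂ) := OnePoint.continuousMapMkNat v c hv
  obtain ⟨g, hg⟩ := ContinuousMap.exists_extension' hce w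
  exact ⟨g, congrFun hg ∞, fun n => congrFun hg n⟩

theorem stmt3 {X : Type*} [TopologicalSpace X] [CompactSpace X] [T2Space X]
    (A : Set X)
    (hA : A = {x : X | ∃ u : ℕ → X, (∀ n, u n ≠ x) ∧ Filter.Tendsto u Filter.atTop (nhds x)})
    (hdense : Dense A) :
    ∀ T : C(X, ℂ) → C(X, ℂ),
      (∀ f g, T (f + g) = T f + T g) →
      (∀ f, ∃ h, T f = h * f) →
      ∃ h, ∀ f, T f = h * f := by
  intro T hadd hloc
  let Φ : C(X, ℂ) →+ C(X, ℂ) := AddMonoidHom.mk' T hadd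
  have hΦ : ∀ f, Φ f = T f := fun f => rfl
  -- T f y only depends on f y
  have hdep : ∀ (f g : C(X, ℂ)) (y : X), f y = g y → T f y = T g y := by
    intro f g y hfg
    obtain ⟨h, hh⟩ := hloc (f - g)
    have h1 : T f - T g = h * (f - g) := by
      rw [← hΦ, ← hΦ, ← map_sub, hΦ, hh]
    have h2 := congrArg (fun k : C(X, ℂ) => k y) h1
    simp only [ContinuousMap.sub_apply, ContinuousMap.mul_apply] at h2
    rw [hfg, sub_self, mul_zero] at h2
    exact sub_eq_zero.mp h2
  -- rational constants
  have hconst1 : ∀ (q : ℚ) (y : X), T (ContinuousMap.const X (q : ℂ)) y = (q : ℂ) * T 1 y := by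
    intro q y
    have h1 : ContinuousMap.const X (q : ℂ) = (q : ℂ) • (1 : C(X, ℂ)) := by
      ext z; simp
    have h2 : T (ContinuousMap.const X (q : ℂ)) = (q : ℂ) • T 1 := by
      rw [← hΦ, ← hΦ, h1, map_ratCast_smul Φ ℂ ℂ q (1 : C(X, ℂ))]
    rw [h2]; simp
  have hconstI : ∀ (q : ℚ) (y : X), T (ContinuousMap.const X ((q : ℂ) * I)) y
      = (q : ℂ) * T (ContinuousMap.const X I) y := by
    intro q y
    have h1 : ContinuousMap.const X ((q : ℂ) * I) = (q : ℂ) • ContinuousMap.const X I := by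
      ext z; simp
    have h2 : T (ContinuousMap.const X ((q : ℂ) * I)) = (q : ℂ) • T (ContinuousMap.const X I) := by
      rw [← hΦ, ← hΦ, h1, map_ratCast_smul Φ ℂ ℂ q (ContinuousMap.const X I)]
    rw [h2]; simp
  -- key pointwise identity on A
  have key : ∀ x ∈ A, ∀ f : C(X, ℂ), T f x = T 1 x * f x := by
    intro x hxA f
    rw [hA] at hxA
    obtain ⟨u0, hu0, hl0⟩ := hxA
    obtain ⟨u, hux, hlim, hinj⟩ := aux_inj_subseq hu0 hl0
    have h2lim : Tendsto (fun n => u (2 * n)) atTop (𝓝 x) :=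
      hlim.comp (StrictMono.tendsto_atTop (fun a b hab => by omega))
    have h2lim' : Tendsto (fun n => u (2 * n + 1)) atTop (𝓝 x) :=
      hlim.comp (StrictMono.tendsto_atTop (fun a b hab => by omega))
    -- Step I : T (const I) x = I * T 1 x
    have hI : T (ContinuousMap.const X I) x = I * T 1 x := by
      set v : ℕ → ℂ := fun n => (if Even n then 1 else I) / (n + 1) with hv
      have hvlim : Tendsto v atTop (𝓝 0) := by
        apply squeeze_zero_norm (a := fun n : ℕ => 1 / ((n : ℝ) + 1))
          _ tendsto_one_div_add_atTop_nhds_zero_nat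
        intro n
        rw [hv]
        simp only [norm_div]
        have h3 : ‖if Even n then (1 : ℂ) else I‖ = 1 := by split <;> simp
        have h4 : ((n : ℂ) + 1) = ((n + 1 : ℕ) : ℂ) := by push_cast; ring
        rw [h3, h4, Complex.norm_natCast]
        push_cast
        exact le_rfl
      obtain ⟨g, hgx, hgu⟩ := aux_ext hux hinj hlim v 0 hvlim
      obtain ⟨h, hh⟩ := hloc g
      have hTg : ∀ n, T g (u n) = h (u n) * v n := by
        intro n
        rw [hh, ContinuousMap.mul_apply, hgu]
      have heven : ∀ n : ℕ, h (u (2 * n)) = T 1 (u (2 * n)) := by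
        intro n
        have hveq : v (2 * n) = (((1 : ℚ) / (2 * n + 1) : ℚ) : ℂ) := by
          rw [hv]
          simp only [even_two_mul n, if_pos]
          push_cast
          ring
        have e2 : T g (u (2 * n)) = (((1 : ℚ) / (2 * n + 1) : ℚ) : ℂ) * T 1 (u (2 * n)) := by
          rw [hdep g (ContinuousMap.const X (((1 : ℚ) / (2 * n + 1) : ℚ) : ℂ)) _
            (by rw [hgu, hveq]; rfl), hconst1]
        rw [hTg, hveq, mul_comm] at e2
        have hne : (((1 : ℚ) / (2 * n + 1) : ℚ) : ℂ) ≠ 0 := by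
          rw [Rat.cast_ne_zero]
          positivity
        exact mul_left_cancel₀ hne e2
      have hodd : ∀ n : ℕ, I * h (u (2 * n + 1)) = T (ContinuousMap.const X I) (u (2 * n + 1)) := by
        intro n
        have hveq : v (2 * n + 1) = (((1 : ℚ) / (2 * n + 2) : ℚ) : ℂ) * I := by
          rw [hv]
          have : ¬ Even (2 * n + 1) := by simp [Nat.even_add_one, even_two_mul n]
          simp only [this, if_neg, if_false]
          push_cast
          ring
        have e2 : T g (u (2 * n + 1)) =
            (((1 : ℚ) / (2 * n + 2) : ℚ) : ℂ) * T (ContinuousMap.const X I) (u (2 * n + 1)) := by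
          rw [hdep g (ContinuousMap.const X ((((1 : ℚ) / (2 * n + 2) : ℚ) : ℂ) * I)) _
            (by rw [hgu, hveq]; rfl), hconstI]
        rw [hTg, hveq] at e2
        have hne : (((1 : ℚ) / (2 * n + 2) : ℚ) : ℂ) ≠ 0 := by
          rw [Rat.cast_ne_zero]
          positivity
        have e3 : (((1 : ℚ) / (2 * n + 2) : ℚ) : ℂ) * (I * h (u (2 * n + 1)))
            = (((1 : ℚ) / (2 * n + 2) : ℚ) : ℂ)
              * T (ContinuousMap.const X I) (u (2 * n + 1)) := by
          rw [← e2]; ring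
        exact mul_left_cancel₀ hne e3
      have lim1 : h x = T 1 x := by
        have t1 : Tendsto (fun n => h (u (2 * n))) atTop (𝓝 (h x)) :=
          (h.continuous.tendsto x).comp h2lim
        have t2 : Tendsto (fun n => h (u (2 * n))) atTop (𝓝 (T 1 x)) := by
          simp only [heven]
          exact ((T 1).continuous.tendsto x).comp h2lim
        exact tendsto_nhds_unique t1 t2
      have lim2 : I * h x = T (ContinuousMap.const X I) x := by
        have t1 : Tendsto (fun n => I * h (u (2 * n + 1))) atTop (𝓝 (I * h x)) :=
          (tendsto_const_nhds.mul ((h.continuous.tendsto x).comp h2lim'))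
        have t2 : Tendsto (fun n => I * h (u (2 * n + 1))) atTop
            (𝓝 (T (ContinuousMap.const X I) x)) := by
          simp only [hodd]
          exact ((T (ContinuousMap.const X I)).continuous.tendsto x).comp h2lim'
        exact tendsto_nhds_unique t1 t2
      rw [← lim2, lim1]
    -- Step II : general f
    have hexa : ∀ n : ℕ, ∃ q : ℚ, |(f x).re - (q : ℝ)| < 1 / (n + 1) :=
      fun n => exists_rat_near _ (by positivity)
    have hexb : ∀ n : ℕ, ∃ q : ℚ, |(f x).im - (q : ℝ)| < 1 / (n + 1) :=
      fun n => exists_rat_near _ (by positivity)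
    choose a ha using hexa
    choose b hb using hexb
    have halim : Tendsto (fun n => ((a n : ℝ))) atTop (𝓝 (f x).re) := by
      rw [tendsto_iff_dist_tendsto_zero]
      apply squeeze_zero (fun n => dist_nonneg) (fun n => ?_)
        tendsto_one_div_add_atTop_nhds_zero_nat
      rw [Real.dist_eq, abs_sub_comm]
      exact (ha n).le
    have hblim : Tendsto (fun n => ((b n : ℝ))) atTop (𝓝 (f x).im) := by
      rw [tendsto_iff_dist_tendsto_zero]
      apply squeeze_zero (fun n => dist_nonneg) (fun n => ?_)
        tendsto_one_div_add_atTop_nhds_zero_nat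
      rw [Real.dist_eq, abs_sub_comm]
      exact (hb n).le
    set v : ℕ → ℂ := fun n => ((a n : ℚ) : ℂ) + ((b n : ℚ) : ℂ) * I with hv
    have hvlim : Tendsto v atTop (𝓝 (f x)) := by
      have t1 : Tendsto (fun n => (((a n : ℝ)) : ℂ) + (((b n : ℝ)) : ℂ) * I) atTop
          (𝓝 (((f x).re : ℂ) + ((f x).im : ℂ) * I)) := by
        exact ((Complex.continuous_ofReal.tendsto _).comp halim).add
          (((Complex.continuous_ofReal.tendsto _).comp hblim).mul tendsto_const_nhds)
      rw [Complex.re_add_im] at t1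
      convert t1 using 2 with n
      simp [hv]
    obtain ⟨g, hgx, hgu⟩ := aux_ext hux hinj hlim v (f x) hvlim
    have hTfg : T f x = T g x := hdep f g x hgx.symm
    have hTgu : ∀ n, T g (u n) = ((a n : ℚ) : ℂ) * T 1 (u n)
        + ((b n : ℚ) : ℂ) * T (ContinuousMap.const X I) (u n) := by
      intro n
      have hsplit : ContinuousMap.const X (v n)
          = ContinuousMap.const X ((a n : ℂ)) + ContinuousMap.const X (((b n : ℚ) : ℂ) * I) := by
        ext z; simp [hv]
      rw [hdep g (ContinuousMap.const X (v n)) _ (by rw [hgu]; rfl), hsplit, hadd,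
        ContinuousMap.add_apply, hconst1, hconstI]
    have t1 : Tendsto (fun n => T g (u n)) atTop (𝓝 (T g x)) :=
      ((T g).continuous.tendsto x).comp hlim
    have t2 : Tendsto (fun n => T g (u n)) atTop
        (𝓝 (((f x).re : ℂ) * T 1 x + ((f x).im : ℂ) * T (ContinuousMap.const X I) x)) := by
      simp only [hTgu]
      apply Tendsto.add
      · exact (((Complex.continuous_ofReal.tendsto _).comp halim).mul
          (((T 1).continuous.tendsto x).comp hlim))
      · exact (((Complex.continuous_ofReal.tendsto _).comp hblim).mul
          (((T (ContinuousMap.const X I)).continuous.tendsto x).comp hlim))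
    have e4 : T g x = ((f x).re : ℂ) * T 1 x + ((f x).im : ℂ) * T (ContinuousMap.const X I) x :=
      tendsto_nhds_unique t1 t2
    rw [hTfg, e4, hI]
    nth_rewrite 3 [← Complex.re_add_im (f x)]
    ring
  refine ⟨T 1, fun f => ?_⟩
  apply ContinuousMap.coe_injective
  apply Continuous.ext_on hdense (T f).continuous (T 1 * f).continuous
  intro x hx
  simp only [ContinuousMap.mul_apply]
  exact key x hx f
end

section
/- If X is a first countable compact Hausdorff space, then every additive local multiplication on C(X) is a multiplication if and only if X has no isolated points. -/
open Filter Topology Set Function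


lemma exists_inj_seq {X : Type*} [TopologicalSpace X] [T1Space X]
    [FirstCountableTopology X] (x : X) (hx : ¬ IsOpen ({x} : Set X)) :
    ∃ xs : ℕ → X, Function.Injective xs ∧ (∀ n, xs n ≠ x) ∧
      Tendsto xs atTop (𝓝 x) := by
  have hne : (𝓝[≠] x).NeBot := by
    rw [Filter.neBot_iff]
    intro h
    exact hx ((isOpen_singleton_iff_punctured_nhds x).2 h)
  obtain ⟨ys, hys⟩ := Filter.exists_seq_tendsto (𝓝[≠] x)
  have hysn : Tendsto ys atTop (𝓝 x) := hys.mono_right nhdsWithin_le_nhds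
  have key : ∀ (F : Finset X) (N : ℕ), ∃ n, N ≤ n ∧ ys n ∉ (F : Set X) ∧ ys n ≠ x := by
    intro F N
    have h1 : ∀ᶠ n in atTop, ys n ∉ (F : Set X) ∧ ys n ≠ x := by
      have hFo : IsOpen ((F : Set X) \ {x})ᶜ :=
        ((F.finite_toSet.diff).isClosed).isOpen_compl
      have hmem : x ∈ ((F : Set X) \ {x})ᶜ := by simp
      have h2 : ∀ᶠ n in atTop, ys n ∈ ((F : Set X) \ {x})ᶜ :=
        hysn (hFo.mem_nhds hmem)
      have h3 : ∀ᶠ n in atTop, ys n ≠ x := by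
        have := hys (by exact self_mem_nhdsWithin : {x}ᶜ ∈ 𝓝[≠] x)
        simpa using this
      filter_upwards [h2, h3] with n h2 h3
      refine ⟨fun hF => h2 (by simp [hF, h3]), h3⟩
    exact ((eventually_ge_atTop N).and h1).exists.imp (fun n hn => ⟨hn.1, hn.2.1, hn.2.2⟩)
  classical
  set step : ℕ × Finset X → ℕ × Finset X := fun p =>
    ((key p.2 (p.1 + 1)).choose, insert (ys (key p.2 (p.1 + 1)).choose) p.2) with hstepdef
  set st : ℕ → ℕ × Finset X := fun k =>
    Nat.rec ((key ∅ 0).choose, {ys (key ∅ 0).choose}) (fun _ p => step p) k with hstdef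
  have hst_succ : ∀ k, st (k + 1) = step (st k) := fun k => rfl
  have hspec : ∀ k, (st k).1 + 1 ≤ (st (k+1)).1 ∧
      ys ((st (k+1)).1) ∉ ((st k).2 : Set X) ∧ ys ((st (k+1)).1) ≠ x := by
    intro k
    have h := (key (st k).2 ((st k).1 + 1)).choose_spec
    rw [hst_succ k]
    exact h
  have hmem : ∀ k, ys ((st k).1) ∈ (st k).2 := by
    intro k
    cases k with
    | zero => exact Finset.mem_singleton_self _
    | succ j => rw [hst_succ j]; exact Finset.mem_insert_self _ _
  have hsub : ∀ k l, k ≤ l → (st k).2 ⊆ (st l).2 := by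
    intro k l hkl
    induction l with
    | zero => rw [Nat.le_zero.1 hkl]
    | succ j ih =>
      rcases Nat.le_add_one_iff.1 hkl with h | h
      · exact (ih h).trans (by rw [hst_succ j]; exact Finset.subset_insert _ _)
      · rw [h]
  have hnex : ∀ k, ys ((st k).1) ≠ x := by
    intro k
    cases k with
    | zero => exact (key ∅ 0).choose_spec.2.2
    | succ j => exact (hspec j).2.2
  have hmono : StrictMono fun k => (st k).1 :=
    strictMono_nat_of_lt_succ fun k => Nat.lt_of_succ_le (hspec k).1
  refine ⟨fun k => ys ((st k).1), ?_, fun k => hnex k, hysn.comp hmono.tendsto_atTop⟩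
  have hlt : ∀ k l, k < l → ys ((st l).1) ≠ ys ((st k).1) := by
    intro k l hkl
    obtain ⟨j, rfl⟩ := Nat.exists_eq_add_of_lt hkl
    intro heq
    have h1 : ys ((st (k + j + 1)).1) ∉ ((st (k + j)).2 : Set X) := (hspec (k + j)).2.1
    have h2 : ys ((st k).1) ∈ (st (k + j)).2 := hsub k (k + j) (Nat.le_add_right _ _) (hmem k)
    rw [heq] at h1
    exact h1 h2
  intro a b hab
  by_contra hne'
  rcases lt_or_gt_of_ne hne' with h | h
  · exact hlt a b h hab.symm
  · exact hlt b a h hab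


lemma interp_seq {X : Type*} [TopologicalSpace X] [CompactSpace X] [T2Space X]
    (x : X) (xs : ℕ → X) (hinj : Function.Injective xs) (hne : ∀ n, xs n ≠ x)
    (hlim : Tendsto xs atTop (𝓝 x)) (c : ℕ → ℂ) (L : ℂ)
    (hc : Tendsto c atTop (𝓝 L)) :
    ∃ f : C(X, ℂ), f x = L ∧ ∀ n, f (xs n) = c n := by
  classical
  set S : Set X := insert x (Set.range xs) with hSdef
  have hScpt : IsCompact S := hlim.isCompact_insert_range
  have hScl : IsClosed S := hScpt.isClosed
  set g : X → ℂ := fun y => if h : ∃ n, xs n = y then c h.choose else L with hgdef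
  have hgx : g x = L := by
    rw [hgdef]
    simp only
    rw [dif_neg]
    rintro ⟨n, hn⟩
    exact hne n hn
  have hgxs : ∀ n, g (xs n) = c n := by
    intro n
    have h : ∃ m, xs m = xs n := ⟨n, rfl⟩
    rw [hgdef]
    simp only
    rw [dif_pos h]
    congr 1
    exact hinj h.choose_spec
  have hcont : ContinuousOn g S := by
    intro y hy
    rcases hy with h | ⟨m, rfl⟩
    · -- continuity at x
      rw [h]
      rw [ContinuousWithinAt, hgx]
      rw [Metric.tendsto_nhds]
      intro ε hε
      obtain ⟨N, hN⟩ := (Metric.tendsto_atTop.1 hc) ε hε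
      have hU : IsOpen ((xs '' (Set.Iio N))ᶜ) :=
        (((Set.finite_Iio N).image xs).isClosed).isOpen_compl
      have hxU : x ∈ (xs '' (Set.Iio N))ᶜ := by
        rintro ⟨n, _, hn⟩
        exact hne n hn
      have : (xs '' (Set.Iio N))ᶜ ∈ 𝓝[S] x :=
        nhdsWithin_le_nhds (hU.mem_nhds hxU)
      filter_upwards [this, self_mem_nhdsWithin] with y hyU hyS
      rcases hyS with rfl | ⟨n, rfl⟩
      · rw [hgx]; simpa using hε
      · rw [hgxs n]
        have hnN : N ≤ n := by
          by_contra hn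
          exact hyU ⟨n, by simpa using Nat.lt_of_not_le hn, rfl⟩
        exact hN n hnN
    · -- continuity at xs m : isolated point of S
      have hshift : StrictMono (fun n => if n < m then n else n + 1) := by
        intro a b hab
        by_cases ha : a < m <;> by_cases hb : b < m <;> simp [ha, hb] <;> omega
      set xs' : ℕ → X := fun n => xs (if n < m then n else n + 1) with hxs'
      have hlim' : Tendsto xs' atTop (𝓝 x) := hlim.comp hshift.tendsto_atTop
      have hS' : IsClosed (insert x (Set.range xs')) := hlim'.isCompact_insert_range.isClosed
      have hxm : xs m ∉ insert x (Set.range xs') := by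
        rintro (h | ⟨n, hn⟩)
        · exact hne m h
        · have := hinj hn
          by_cases hnm : n < m <;> simp [hnm] at this <;> omega
      have hmemU : (insert x (Set.range xs'))ᶜ ∈ 𝓝[S] (xs m) :=
        nhdsWithin_le_nhds (hS'.isOpen_compl.mem_nhds hxm)
      have heq : ∀ᶠ y in 𝓝[S] (xs m), g y = g (xs m) := by
        filter_upwards [hmemU, self_mem_nhdsWithin] with y hyU hyS
        rcases hyS with rfl | ⟨n, rfl⟩
        · exact absurd (Set.mem_insert _ _) hyU
        · rcases eq_or_ne n m with rfl | hnm
          · rfl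
          · exfalso
            apply hyU
            refine Set.mem_insert_iff.2 (Or.inr ?_)
            rcases Nat.lt_or_ge n m with h | h
            · exact ⟨n, by simp [hxs', h]⟩
            · have hnm' : m < n := lt_of_le_of_ne h (Ne.symm hnm)
              refine ⟨n - 1, ?_⟩
              have : ¬ (n - 1 < m) := by omega
              simp [hxs', this]
              congr 1
              omega
      exact (continuousWithinAt_const (b := g (xs m))).congr_of_eventuallyEq heq rfl
  obtain ⟨f, hf⟩ := (ContinuousMap.mk _ (continuousOn_iff_continuous_restrict.1 hcont)).exists_restrict_eq hScl
  refine ⟨f, ?_, ?_⟩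
  · have := congrFun (congrArg DFunLike.coe hf) ⟨x, Set.mem_insert _ _⟩
    simpa using this.trans hgx
  · intro n
    have := congrFun (congrArg DFunLike.coe hf)
      ⟨xs n, Set.mem_insert_iff.2 (Or.inr ⟨n, rfl⟩)⟩
    simpa using this.trans (hgxs n)

theorem stmt4 {X : Type*} [TopologicalSpace X] [CompactSpace X] [T2Space X]
    [FirstCountableTopology X] :
    (∀ T : C(X, ℂ) → C(X, ℂ),
      (∀ f g, T (f + g) = T f + T g) →
      (∀ f, ∃ h, T f = h * f) →
      ∃ h, ∀ f, T f = h * f) ↔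
    (∀ x : X, ¬ IsOpen ({x} : Set X)) := by
  constructor
  · intro H
    intro x hx
    classical
    have hδc : Continuous fun y => if y = x then (1:ℂ) else 0 := by
      apply IsLocallyConstant.continuous
      intro s
      by_cases h1 : (1:ℂ) ∈ s <;> by_cases h0 : (0:ℂ) ∈ s
      · have : (fun y => if y = x then (1:ℂ) else 0) ⁻¹' s = Set.univ := by
          ext y; by_cases hy : y = x <;> simp [hy, h1, h0]
        rw [this]; exact isOpen_univ
      · have : (fun y => if y = x then (1:ℂ) else 0) ⁻¹' s = {x} := by
          ext y; by_cases hy : y = x <;> simp [hy, h1, h0]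
        rw [this]; exact hx
      · have : (fun y => if y = x then (1:ℂ) else 0) ⁻¹' s = {x}ᶜ := by
          ext y; by_cases hy : y = x <;> simp [hy, h1, h0]
        rw [this]; exact isClosed_singleton.isOpen_compl
      · have : (fun y => if y = x then (1:ℂ) else 0) ⁻¹' s = ∅ := by
          ext y; by_cases hy : y = x <;> simp [hy, h1, h0]
        rw [this]; exact isOpen_empty
    set δ : C(X, ℂ) := ⟨fun y => if y = x then 1 else 0, hδc⟩ with hδdef
    set T : C(X, ℂ) → C(X, ℂ) := fun f => (starRingEnd ℂ) (f x) • δ with hTdef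
    have hadd : ∀ f g, T (f + g) = T f + T g := by
      intro f g
      ext y
      simp [hTdef, add_smul]
    have hloc : ∀ f, ∃ h, T f = h * f := by
      intro f
      by_cases hf : f x = 0
      · exact ⟨0, by ext y; simp [hTdef, hf]⟩
      · refine ⟨((starRingEnd ℂ) (f x) / f x) • δ, ?_⟩
        ext y
        by_cases hy : y = x
        · subst hy
          simp [hTdef, hδdef, div_mul_cancel₀ _ hf]
        · simp [hTdef, hδdef, hy]
    obtain ⟨h, hh⟩ := H T hadd hloc
    have e1 : h x = 1 := by
      have := DFunLike.congr_fun (hh 1) x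
      simpa [hTdef, hδdef] using this.symm
    have e2 : -Complex.I = h x * Complex.I := by
      have := DFunLike.congr_fun (hh (ContinuousMap.const X Complex.I)) x
      simpa [hTdef, hδdef, Complex.conj_I] using this
    rw [e1, one_mul] at e2
    have : Complex.I = 0 := by linear_combination -e2 / 2
    exact Complex.I_ne_zero this
  · intro hniso
    intro T hadd hloc
    classical
    have hT0 : T 0 = 0 := by
      have h := hadd 0 0
      rw [add_zero] at h
      exact (left_eq_add.1 h)
    have key0 : ∀ (f g : C(X, ℂ)) (y : X), f y = g y → T f y = T g y := by
      intro f g y hy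
      obtain ⟨h, hh⟩ := hloc (f - g)
      have h0 : g + (f - g) = f := by abel
      have h1 : T f = T g + T (f - g) := by rw [← hadd, h0]
      rw [h1, hh]
      simp [hy]
    set ψ : X → ℂ → ℂ := fun y z => T (ContinuousMap.const X z) y with hψ
    have hpsi : ∀ (f : C(X, ℂ)) (y : X), T f y = ψ y (f y) := fun f y =>
      key0 f (ContinuousMap.const X (f y)) y rfl
    have psi_add : ∀ (y : X) (z w : ℂ), ψ y (z + w) = ψ y z + ψ y w := by
      intro y z w
      have h : (ContinuousMap.const X (z + w)) =
          ContinuousMap.const X z + ContinuousMap.const X w := by ext; simp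
      simp only [hψ]
      rw [h, hadd]
      simp
    have psi_zero : ∀ y : X, ψ y 0 = 0 := by
      intro y
      have h : (ContinuousMap.const X (0:ℂ)) = 0 := by ext; simp
      simp only [hψ]
      rw [h, hT0]
      rfl
    have psi_rat : ∀ (y : X) (q : ℚ) (z : ℂ), ψ y ((q:ℂ) * z) = (q:ℂ) * ψ y z := by
      intro y q z
      have := map_ratCast_smul (AddMonoidHom.mk' (ψ y) (fun a b => psi_add y a b)) ℂ ℂ q z
      simpa [smul_eq_mul] using this
    -- real homogeneity
    have psi_real : ∀ (y : X) (r : ℝ) (w : ℂ), ψ y ((r:ℂ) * w) = (r:ℂ) * ψ y w := by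
      intro y r w
      rcases eq_or_ne w 0 with rfl | hw
      · simp [psi_zero y]
      rcases eq_or_ne r 0 with rfl | hr
      · simp [psi_zero y]
      obtain ⟨xs, hinj, hnex, hlim⟩ := exists_inj_seq y (hniso y)
      have hq : ∃ q : ℕ → ℚ, Tendsto (fun n => (q n : ℝ)) atTop (𝓝 r) := by
        have h1 : ∀ n : ℕ, ∃ qq : ℚ, r - 1/(n+1) < (qq:ℝ) ∧ (qq:ℝ) < r := by
          intro n
          refine exists_rat_btwn ?_
          have h0 : (0:ℝ) < 1/(n+1) := by positivity
          linarith
        choose q hq1 hq2 using h1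
        refine ⟨q, ?_⟩
        have hlow : Tendsto (fun n : ℕ => r - 1/(n+1:ℝ)) atTop (𝓝 r) := by
          have := tendsto_one_div_add_atTop_nhds_zero_nat (𝕜 := ℝ)
          have h2 := (tendsto_const_nhds (x := r) (f := atTop)).sub this
          simpa using h2
        exact tendsto_of_tendsto_of_tendsto_of_le_of_le hlow tendsto_const_nhds
          (fun n => (hq1 n).le) (fun n => (hq2 n).le)
      obtain ⟨q, hqr⟩ := hq
      have hqc : Tendsto (fun n => ((q n : ℝ) : ℂ) * w) atTop (𝓝 ((r:ℂ) * w)) :=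
        ((Complex.continuous_ofReal.tendsto r).comp hqr).mul_const w
      obtain ⟨f, hfy, hfn⟩ := interp_seq y xs hinj hnex hlim _ _ hqc
      obtain ⟨hf, hhf⟩ := hloc f
      obtain ⟨hg, hhg⟩ := hloc (ContinuousMap.const X w)
      have psiw : ∀ u : X, ψ u w = hg u * w := by
        intro u
        have h2 := DFunLike.congr_fun hhg u
        simp only [ContinuousMap.mul_apply, ContinuousMap.const_apply] at h2
        rw [← (hpsi (ContinuousMap.const X w) u).symm.trans rfl] at h2
        exact (hpsi (ContinuousMap.const X w) u).symm.trans h2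
      have hqne : ∀ᶠ n in atTop, (q n : ℝ) ≠ 0 := hqr (isOpen_ne.mem_nhds hr)
      have ev : ∀ᶠ n in atTop, hf (xs n) * w = hg (xs n) * w := by
        filter_upwards [hqne] with n hn
        have e1 : T f (xs n) = hf (xs n) * (((q n : ℝ):ℂ) * w) := by
          have := DFunLike.congr_fun hhf (xs n)
          rw [ContinuousMap.mul_apply, hfn n] at this
          exact this
        have e2 : T f (xs n) = ((q n : ℝ):ℂ) * ψ (xs n) w := by
          rw [hpsi f (xs n), hfn n]
          have hcast : ((q n : ℝ):ℂ) = ((q n : ℚ):ℂ) := by push_cast; ring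
          rw [hcast, psi_rat]
        have hne0 : ((q n : ℝ):ℂ) ≠ 0 := by
          simpa using hn
        have h3 : ((q n : ℝ):ℂ) * (hf (xs n) * w) = ((q n : ℝ):ℂ) * (hg (xs n) * w) := by
          rw [← psiw (xs n)]
          linear_combination e2 - e1
        exact mul_left_cancel₀ hne0 h3
      have l1 : Tendsto (fun n => hf (xs n) * w) atTop (𝓝 (hf y * w)) :=
        ((hf.continuous.tendsto y).comp hlim).mul_const w
      have l2 : Tendsto (fun n => hg (xs n) * w) atTop (𝓝 (hg y * w)) :=
        ((hg.continuous.tendsto y).comp hlim).mul_const w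
      have heq : hf y * w = hg y * w :=
        tendsto_nhds_unique l1 (l2.congr' (ev.mono fun n h => h.symm))
      have e4 : T f y = hf y * ((r:ℂ) * w) := by
        have := DFunLike.congr_fun hhf y
        rw [ContinuousMap.mul_apply, hfy] at this
        exact this
      calc ψ y ((r:ℂ) * w) = T f y := by rw [hpsi f y, hfy]
        _ = hf y * ((r:ℂ) * w) := e4
        _ = (r:ℂ) * (hf y * w) := by ring
        _ = (r:ℂ) * (hg y * w) := by rw [heq]
        _ = (r:ℂ) * ψ y w := by rw [psiw y]
    -- ψ y I = ψ y 1 * I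
    have keyI : ∀ x0 : X, ψ x0 Complex.I = ψ x0 1 * Complex.I := by
      intro x0
      obtain ⟨xs, hinj, hnex, hlim⟩ := exists_inj_seq x0 (hniso x0)
      set c : ℕ → ℂ := fun n =>
        Complex.ofReal (1/(n+1:ℝ)) * (if Even n then 1 else Complex.I) with hc
      have hc0 : Tendsto c atTop (𝓝 0) := by
        rw [tendsto_zero_iff_norm_tendsto_zero]
        have hnorm : ∀ n : ℕ, ‖c n‖ = 1/(n+1:ℝ) := by
          intro n
          have hpos : (0:ℝ) ≤ 1/(n+1:ℝ) := by positivity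
          have h2 : ‖(if Even n then (1:ℂ) else Complex.I)‖ = 1 := by
            by_cases h : Even n <;> simp [h]
          simp only [hc]
          rw [norm_mul, h2, mul_one, Complex.norm_real, Real.norm_eq_abs]
          exact abs_of_nonneg hpos
        exact tendsto_one_div_add_atTop_nhds_zero_nat.congr fun n => (hnorm n).symm
      obtain ⟨f, hfx, hfn⟩ := interp_seq x0 xs hinj hnex hlim c 0 hc0
      obtain ⟨hf, hhf⟩ := hloc f
      have hne0 : ∀ n : ℕ, Complex.ofReal (1/(n+1:ℝ)) ≠ 0 := by
        intro n
        exact Complex.ofReal_ne_zero.2 (by positivity)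
      have evenstep : ∀ n, Even n → ψ (xs n) 1 = hf (xs n) := by
        intro n hn
        have hcn : c n = Complex.ofReal (1/(n+1:ℝ)) * 1 := by
          simp only [hc, if_pos hn]
        have e1 : T f (xs n) = hf (xs n) * (Complex.ofReal (1/(n+1:ℝ)) * 1) := by
          have := DFunLike.congr_fun hhf (xs n)
          rw [ContinuousMap.mul_apply, hfn n, hcn] at this
          exact this
        have e2 : T f (xs n) = Complex.ofReal (1/(n+1:ℝ)) * ψ (xs n) 1 := by
          rw [hpsi f (xs n), hfn n, hcn, psi_real]
        have h3 : Complex.ofReal (1/(n+1:ℝ)) * ψ (xs n) 1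
            = Complex.ofReal (1/(n+1:ℝ)) * hf (xs n) := by
          linear_combination e1 - e2
        exact mul_left_cancel₀ (hne0 n) h3
      have oddstep : ∀ n, ¬ Even n →
          ψ (xs n) Complex.I = hf (xs n) * Complex.I := by
        intro n hn
        have hcn : c n = Complex.ofReal (1/(n+1:ℝ)) * Complex.I := by
          simp only [hc, if_neg hn]
        have e1 : T f (xs n) = hf (xs n) * (Complex.ofReal (1/(n+1:ℝ)) * Complex.I) := by
          have := DFunLike.congr_fun hhf (xs n)
          rw [ContinuousMap.mul_apply, hfn n, hcn] at this
          exact this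
        have e2 : T f (xs n) = Complex.ofReal (1/(n+1:ℝ)) * ψ (xs n) Complex.I := by
          rw [hpsi f (xs n), hfn n, hcn, psi_real]
        have h3 : Complex.ofReal (1/(n+1:ℝ)) * ψ (xs n) Complex.I
            = Complex.ofReal (1/(n+1:ℝ)) * (hf (xs n) * Complex.I) := by
          linear_combination e1 - e2
        exact mul_left_cancel₀ (hne0 n) h3
      have contA : Continuous fun y : X => ψ y 1 := by
        simp only [hψ]
        exact (T (ContinuousMap.const X 1)).continuous
      have contB : Continuous fun y : X => ψ y Complex.I := by
        simp only [hψ]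
        exact (T (ContinuousMap.const X Complex.I)).continuous
      have ht2 : Tendsto (fun k : ℕ => 2*k) atTop atTop :=
        tendsto_atTop_mono (fun k => by simp only [id_eq]; omega) tendsto_id
      have ht2' : Tendsto (fun k : ℕ => 2*k+1) atTop atTop :=
        tendsto_atTop_mono (fun k => by simp only [id_eq]; omega) tendsto_id
      have eA : ψ x0 1 = hf x0 := by
        refine tendsto_nhds_unique ((contA.tendsto x0).comp (hlim.comp ht2)) ?_
        have lime : Tendsto (fun k => hf (xs (2*k))) atTop (𝓝 (hf x0)) :=
          (hf.continuous.tendsto x0).comp (hlim.comp ht2)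
        exact lime.congr fun k => (evenstep (2*k) ⟨k, (two_mul k)⟩).symm
      have eB : ψ x0 Complex.I = hf x0 * Complex.I := by
        refine tendsto_nhds_unique ((contB.tendsto x0).comp (hlim.comp ht2')) ?_
        have limo : Tendsto (fun k => hf (xs (2*k+1)) * Complex.I) atTop
            (𝓝 (hf x0 * Complex.I)) :=
          ((hf.continuous.tendsto x0).comp (hlim.comp ht2')).mul_const _
        refine limo.congr fun k => (oddstep (2*k+1) ?_).symm
        simp [parity_simps]
      rw [eA, eB]
    -- conclusion
    refine ⟨T (ContinuousMap.const X 1), ?_⟩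
    intro f
    ext y
    rw [ContinuousMap.mul_apply, hpsi f y]
    have hz : ((f y).re : ℂ) * 1 + ((f y).im : ℂ) * Complex.I = f y := by
      rw [mul_one]; exact Complex.re_add_im (f y)
    have : T (ContinuousMap.const X 1) y = ψ y 1 := rfl
    rw [this]
    calc ψ y (f y) = ψ y (((f y).re : ℂ) * 1 + ((f y).im : ℂ) * Complex.I) := by rw [hz]
      _ = ψ y (((f y).re : ℂ) * 1) + ψ y (((f y).im : ℂ) * Complex.I) := psi_add _ _ _
      _ = ((f y).re : ℂ) * ψ y 1 + ((f y).im : ℂ) * ψ y Complex.I := by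
          rw [psi_real, psi_real]
      _ = ((f y).re : ℂ) * ψ y 1 + ((f y).im : ℂ) * (ψ y 1 * Complex.I) := by rw [keyI y]
      _ = ψ y 1 * (((f y).re : ℂ) * 1 + ((f y).im : ℂ) * Complex.I) := by ring
      _ = ψ y 1 * f y := by rw [hz]
end

section
/- Suppose X is a compact Hausdorff space and {K_i}_{i∈I} is a family of closed subsets of X such that for each i, every additive local multiplication on C(K_i) is a multiplication. Then every additive local multiplication on C(K) is a multiplication, where K is the closure of ⋃_i K_i. -/
/-- `IsEtaSpace` transfers along homeomorphisms. -/
lemma isEtaSpace_of_homeomorph {W W' : Type*} [TopologicalSpace W] [TopologicalSpace W']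
    (e : W ≃ₜ W') (hW : IsEtaSpace W) : IsEtaSpace W' := by
  intro T hadd hloc
  set S : C(W, ℂ) → C(W, ℂ) := fun φ =>
    (T (φ.comp (e.symm : C(W', W)))).comp (e : C(W, W')) with hS
  have hSadd : ∀ φ ψ, S (φ + ψ) = S φ + S ψ := by
    intro φ ψ
    have : (φ + ψ).comp (e.symm : C(W', W)) =
        φ.comp (e.symm : C(W', W)) + ψ.comp (e.symm : C(W', W)) := by ext x; simp
    simp only [hS, this, hadd]
    ext x; simp
  have hSloc : ∀ φ, ∃ h, S φ = h * φ := by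
    intro φ
    obtain ⟨h, hh⟩ := hloc (φ.comp (e.symm : C(W', W)))
    refine ⟨h.comp (e : C(W, W')), ?_⟩
    ext x
    simp [hS, hh]
  obtain ⟨g, hg⟩ := hW S hSadd hSloc
  refine ⟨g.comp (e.symm : C(W', W)), fun f => ?_⟩
  have h1 : (f.comp (e : C(W, W'))).comp (e.symm : C(W', W)) = f := by ext x; simp
  have h2 := hg (f.comp (e : C(W, W')))
  simp only [hS, h1] at h2
  ext x
  have h3 := congrFun (congrArg DFunLike.coe h2) (e.symm x)
  simp at h3 ⊢
  simpa using h3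

/-- If a compact Hausdorff space is covered densely by closed η-subspaces, it is an η-space. -/
lemma isEtaSpace_of_dense_iUnion {Y : Type*} [TopologicalSpace Y] [CompactSpace Y] [T2Space Y]
    {J : Type*} (S : J → Set Y) (hcl : ∀ j, IsClosed (S j))
    (heta : ∀ j, IsEtaSpace (S j)) (hdense : Dense (⋃ j, S j)) : IsEtaSpace Y := by
  intro T hadd hloc
  have hsub : ∀ f g : C(Y, ℂ), T (f - g) = T f - T g := by
    intro f g
    have h1 := hadd (f - g) g
    rw [sub_add_cancel] at h1
    rw [h1]; ring
  -- key pointwise identity on each S j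
  have key : ∀ j (f : C(Y, ℂ)) (x : S j), T f x = T 1 x * f x := by
    intro j
    haveI : CompactSpace (S j) := isCompact_iff_compactSpace.1 (hcl j).isCompact
    set ι : C(S j, Y) := ⟨Subtype.val, continuous_subtype_val⟩ with hι
    have hce : Topology.IsClosedEmbedding (ι : S j → Y) :=
      Continuous.isClosedEmbedding ι.continuous Subtype.val_injective
    have hext : ∀ φ : C(S j, ℂ), ∃ F : C(Y, ℂ), F.comp ι = φ := fun φ =>
      φ.exists_extension hce
    choose F hF using hext
    have happ : ∀ (φ : C(S j, ℂ)) (x : S j), F φ x = φ x := by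
      intro φ x
      have := congrFun (congrArg DFunLike.coe (hF φ)) x
      simpa [hι] using this
    -- if g restricts to 0 then T g restricts to 0
    have hzero : ∀ g : C(Y, ℂ), (∀ x : S j, g x = 0) → ∀ x : S j, T g x = 0 := by
      intro g hg x
      obtain ⟨h, hh⟩ := hloc g
      rw [hh]
      simp [hg x]
    have hrestr : ∀ (f : C(Y, ℂ)) (x : S j), T f x = T (F (f.comp ι)) x := by
      intro f x
      have h0 : ∀ x : S j, (f - F (f.comp ι)) x = 0 := by
        intro x
        have := happ (f.comp ι) x
        simp [hι] at this ⊢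
        simp [this]
      have := hzero _ h0 x
      rw [hsub] at this
      simp at this
      linear_combination this
    -- the induced additive local multiplication on C(S j, ℂ)
    set Ti : C(S j, ℂ) → C(S j, ℂ) := fun φ => (T (F φ)).comp ι with hTi
    have hTiadd : ∀ φ ψ, Ti (φ + ψ) = Ti φ + Ti ψ := by
      intro φ ψ
      have h0 : ∀ x : S j, (F (φ + ψ) - (F φ + F ψ)) x = 0 := by
        intro x
        have h1 := happ (φ + ψ) x
        have h2 := happ φ x
        have h3 := happ ψ x
        simp at h1 ⊢
        simp [h1, h2, h3]
      have h4 := hzero _ h0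
      ext x
      have h5 := h4 x
      rw [hsub, hadd] at h5
      simp [hTi, hι] at h5 ⊢
      linear_combination h5
    have hTiloc : ∀ φ, ∃ h, Ti φ = h * φ := by
      intro φ
      obtain ⟨h, hh⟩ := hloc (F φ)
      refine ⟨h.comp ι, ?_⟩
      ext x
      have h2 := happ φ x
      simp [hTi, hh, hι] at h2 ⊢
      simp [h2]
    obtain ⟨hi, hhi⟩ := heta j Ti hTiadd hTiloc
    have hTival : ∀ (f : C(Y, ℂ)) (x : S j), T f x = hi x * f x := by
      intro f x
      have h2 := congrFun (congrArg DFunLike.coe (hhi (f.comp ι))) x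
      simp [hTi, hι] at h2
      rw [hrestr f x, h2]
    intro f x
    have h1 := hTival 1 x
    have h2 := hTival f x
    simp at h1
    rw [h2, h1]
  -- conclude by density
  refine ⟨T 1, fun f => ?_⟩
  have heq := Continuous.ext_on hdense (map_continuous (T f)) (map_continuous (T 1 * f)) ?_
  · ext x; exact congrFun heq x
  · rintro x hx
    simp only [Set.mem_iUnion] at hx
    obtain ⟨j, hj⟩ := hx
    simpa using key j f ⟨x, hj⟩

theorem stmt5 {X : Type*} [TopologicalSpace X] [CompactSpace X] [T2Space X]
    {I : Type*} (K : I → Set X)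
    (hclosed : ∀ i, IsClosed (K i))
    (heta : ∀ i, IsEtaSpace (K i)) :
    IsEtaSpace (closure (⋃ i, K i)) := by
  have hKcl : IsClosed (closure (⋃ i, K i)) := isClosed_closure
  haveI : CompactSpace (closure (⋃ i, K i)) := isCompact_iff_compactSpace.1 hKcl.isCompact
  have hmem : ∀ i, K i ⊆ closure (⋃ i, K i) := fun i =>
    (Set.subset_iUnion K i).trans subset_closure
  apply isEtaSpace_of_dense_iUnion
    (fun i => (Subtype.val ⁻¹' K i : Set (closure (⋃ i, K i))))
  · exact fun i => (hclosed i).preimage continuous_subtype_val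
  · intro i
    refine isEtaSpace_of_homeomorph ?_ (heta i)
    exact {
      toFun := fun x => ⟨⟨x.1, hmem i x.2⟩, x.2⟩
      invFun := fun y => ⟨y.1.1, y.2⟩
      left_inv := fun x => rfl
      right_inv := fun y => rfl
      continuous_toFun := by fun_prop
      continuous_invFun := by fun_prop }
  · rw [dense_iff_closure_eq]
    ext x
    simp only [Set.mem_univ, iff_true]
    rw [closure_subtype]
    have himg : Subtype.val '' (⋃ i, (Subtype.val ⁻¹' K i : Set (closure (⋃ i, K i))))
        = ⋃ i, K i := by
      rw [Set.image_iUnion]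
      refine Set.iUnion_congr fun i => ?_
      rw [Subtype.image_preimage_coe]
      exact Set.inter_eq_right.2 (hmem i)
    rw [himg]
    exact x.2
end

section
/- If K is a compact Hausdorff space such that every additive local multiplication on C(K) is a multiplication (an η-space), and Y is any compact Hausdorff space, then every additive local multiplication on C(Y × K) is a multiplication. -/
theorem stmt6 {K : Type*} [TopologicalSpace K] [CompactSpace K] [T2Space K]
    {Y : Type*} [TopologicalSpace Y] [CompactSpace Y] [T2Space Y]
    (hK : IsEtaSpace K) : IsEtaSpace (Y × K) := by
  intro T hadd hloc
  -- T of a function vanishing at z vanishes at z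
  have hzero : ∀ (f : C(Y × K, ℂ)) (z : Y × K), f z = 0 → T f z = 0 := by
    intro f z hz
    obtain ⟨h, hh⟩ := hloc f
    rw [hh]
    simp [hz]
  have hsub : ∀ f g : C(Y × K, ℂ), T (f - g) = T f - T g := by
    intro f g
    have := hadd (f - g) g
    simp only [sub_add_cancel] at this
    rw [this]; ring
  -- T f z depends only on f z
  have hpt : ∀ (f : C(Y × K, ℂ)) (z : Y × K),
      T f z = T (ContinuousMap.const _ (f z)) z := by
    intro f z
    have h0 : (f - ContinuousMap.const (Y × K) (f z)) z = 0 := by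
      simp [ContinuousMap.sub_apply]
    have := hzero _ _ h0
    rw [hsub] at this
    simpa using sub_eq_zero.mp (by simpa using this)
  refine ⟨T 1, fun f => ?_⟩
  ext z
  obtain ⟨y, k⟩ := z
  -- restriction of T to functions pulled back from K, at slice y
  set sndm : C(Y × K, K) := ⟨Prod.snd, continuous_snd⟩ with hsndm
  set mky : C(K, Y × K) := ⟨fun k => (y, k), by continuity⟩ with hmky
  set Ty : C(K, ℂ) → C(K, ℂ) := fun g => (T (g.comp sndm)).comp mky with hTy
  have hTyadd : ∀ g₁ g₂, Ty (g₁ + g₂) = Ty g₁ + Ty g₂ := by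
    intro g₁ g₂
    ext x
    simp only [hTy, ContinuousMap.comp_apply, ContinuousMap.add_comp, hadd,
      ContinuousMap.add_apply]
  have hTyloc : ∀ g, ∃ h, Ty g = h * g := by
    intro g
    obtain ⟨h, hh⟩ := hloc (g.comp sndm)
    refine ⟨h.comp mky, ?_⟩
    ext x
    simp only [hTy, ContinuousMap.comp_apply, hh]
    simp [hmky, hsndm]
  obtain ⟨c, hc⟩ := hK Ty hTyadd hTyloc
  -- key: T (const α) (y,k) = c k * α
  have hconst : ∀ α : ℂ, T (ContinuousMap.const (Y × K) α) (y, k) = c k * α := by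
    intro α
    have h1 : (ContinuousMap.const K α).comp sndm = ContinuousMap.const (Y × K) α := by
      ext z; rfl
    have := congrArg (fun g => g k) (hc (ContinuousMap.const K α))
    simpa [hTy, h1, hmky] using this
  have hone : (1 : C(Y × K, ℂ)) = ContinuousMap.const (Y × K) (1 : ℂ) := rfl
  calc T f (y, k) = T (ContinuousMap.const _ (f (y, k))) (y, k) := hpt f (y, k)
    _ = c k * f (y, k) := hconst _
    _ = (c k * 1) * f (y, k) := by ring
    _ = T 1 (y, k) * f (y, k) := by rw [hone, hconst 1]
    _ = (T 1 * f) (y, k) := rfl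
end

section
/- Let X be a compact Hausdorff space, g ∈ C(X) nonzero, and let A = X ∖ Z(g) where Z(g) = {x : g(x)=0}. Define T(f) = g·conj(f). Then T is a local multiplication on C(X) if and only if A is an F-space. -/
/-- A topological space `A` is an F-space: every real-valued continuous function `f`
factors as `f = k * |f|` for some continuous `k`. -/
def IsFSpace (A : Type*) [TopologicalSpace A] : Prop :=
  ∀ f : C(A, ℝ), ∃ k : C(A, ℝ), f = k * |f|

noncomputable section AuxStmt8

variable {A : Type*} [TopologicalSpace A]


/-- clamp a continuous map to [-1,1] -/
def clampM (k : C(A, ℝ)) : C(A, ℝ) :=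
  ⟨fun x => max (-1) (min (k x) 1), by fun_prop⟩

lemma clampM_abs_le (k : C(A, ℝ)) (x : A) : |clampM k x| ≤ 1 := by
  rw [abs_le]
  constructor
  · exact le_max_left _ _
  · exact max_le (by norm_num) (min_le_right _ _)

lemma clampM_sign {k φ : C(A, ℝ)} (h : φ = k * |φ|) (x : A) :
    φ x = clampM k x * |φ x| := by
  have hx : φ x = k x * |φ x| := by
    have := congrFun (congrArg DFunLike.coe h) x
    simpa using this
  rcases eq_or_ne (φ x) 0 with h0 | h0
  · simp [h0]
  · have habs : |φ x| ≠ 0 := abs_ne_zero.mpr h0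
    have hk : |k x| = 1 := by
      have h2 : |φ x| = |k x| * |φ x| := by
        nth_rewrite 1 [hx]
        rw [abs_mul, abs_abs]
      have h3 : 0 < |φ x| := abs_pos.mpr h0
      nlinarith [h2, h3]
    rcases abs_eq (by norm_num : (0:ℝ) ≤ 1) |>.mp hk with h1 | h1
    · rw [hx]; simp [clampM, h1]
    · rw [hx]; simp [clampM, h1]

/-- the approximating sequence -/
def seqA (hF : IsFSpace A) (u r : C(A, ℝ)) : ℕ → C(A, ℝ)
  | 0 => 0
  | n + 1 =>
    seqA hF u r n +
      (((2:ℝ) ^ (n + 1))⁻¹) • clampM (Classical.choose (hF (u - seqA hF u r n * r)))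

lemma seqA_invariant (hF : IsFSpace A) (u r : C(A, ℝ)) (h : ∀ x, |u x| ≤ r x) :
    ∀ n x, |u x - seqA hF u r n x * r x| ≤ ((2:ℝ) ^ n)⁻¹ * r x := by
  intro n
  induction n with
  | zero => intro x; simpa [seqA] using h x
  | succ n ih =>
    intro x
    set φ : C(A, ℝ) := u - seqA hF u r n * r with hφ
    have hr0 : 0 ≤ r x := le_trans (abs_nonneg _) (h x)
    have hspec := Classical.choose_spec (hF φ)
    set k := Classical.choose (hF φ)
    have hsx : φ x = clampM k x * |φ x| := clampM_sign hspec x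
    have hφx : |φ x| ≤ ((2:ℝ) ^ n)⁻¹ * r x := by
      have := ih x
      simpa [hφ] using this
    have key : u x - seqA hF u r (n+1) x * r x
        = clampM k x * (|φ x| - ((2:ℝ) ^ (n+1))⁻¹ * r x) := by
      have : seqA hF u r (n+1) x = seqA hF u r n x + ((2:ℝ) ^ (n+1))⁻¹ * clampM k x := by
        simp [seqA]; rfl
      rw [this]
      have hφxval : φ x = u x - seqA hF u r n x * r x := by simp [hφ]
      nlinarith [hsx, hφxval]
    rw [key, abs_mul]
    have h1 : |(|φ x| - ((2:ℝ) ^ (n+1))⁻¹ * r x)| ≤ ((2:ℝ) ^ (n+1))⁻¹ * r x := by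
      rw [abs_le]
      have h2 : ((2:ℝ)^n)⁻¹ = 2 * ((2:ℝ)^(n+1))⁻¹ := by
        rw [pow_succ]; field_simp
      have h3 : 0 ≤ ((2:ℝ) ^ (n+1))⁻¹ * r x := by positivity
      constructor
      · nlinarith [abs_nonneg (φ x)]
      · nlinarith [hφx]
    calc |clampM k x| * |(|φ x| - ((2:ℝ) ^ (n+1))⁻¹ * r x)|
        ≤ 1 * (((2:ℝ) ^ (n+1))⁻¹ * r x) :=
          mul_le_mul (clampM_abs_le k x) h1 (abs_nonneg _) (by norm_num)
      _ = ((2:ℝ) ^ (n+1))⁻¹ * r x := by ring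

lemma seqA_step_bound (hF : IsFSpace A) (u r : C(A, ℝ)) (n : ℕ) (x : A) :
    |seqA hF u r (n+1) x - seqA hF u r n x| ≤ (1/2 : ℝ) ^ (n+1) := by
  have : seqA hF u r (n+1) x - seqA hF u r n x
      = ((2:ℝ) ^ (n + 1))⁻¹ * clampM (Classical.choose (hF (u - seqA hF u r n * r))) x := by
    simp [seqA]
  rw [this, abs_mul]
  have h2 : |((2:ℝ) ^ (n + 1))⁻¹| = (1/2:ℝ)^(n+1) := by
    rw [abs_of_nonneg (by positivity)]
    rw [one_div, inv_pow]
  rw [h2]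
  calc (1/2:ℝ)^(n+1) * |clampM _ x| ≤ (1/2:ℝ)^(n+1) * 1 :=
        mul_le_mul_of_nonneg_left (clampM_abs_le _ _) (by positivity)
    _ = (1/2:ℝ)^(n+1) := by ring

theorem div_lemma (hF : IsFSpace A) (u r : C(A, ℝ)) (h : ∀ x, |u x| ≤ r x) :
    ∃ a : C(A, ℝ), (∀ x, |a x| ≤ 1) ∧ ∀ x, a x * r x = u x := by
  set s := seqA hF u r with hs
  have hinc : ∀ (n : ℕ) (x : A), ‖s (n+1) x - s n x‖ ≤ (1/2:ℝ)^(n+1) := by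
    intro n x; simpa using seqA_step_bound hF u r n x
  have hsum : Summable (fun n : ℕ => (1/2:ℝ)^(n+1)) := by
    apply Summable.comp_injective (summable_geometric_two) (add_left_injective 1)
  have hcont : Continuous (fun x => ∑' n : ℕ, (s (n+1) x - s n x)) := by
    apply continuous_tsum (fun i => ((s (i+1)).continuous.sub (s i).continuous)) hsum
    intro n x; exact hinc n x
  set a0 : C(A, ℝ) := ⟨fun x => ∑' n : ℕ, (s (n+1) x - s n x), hcont⟩ with ha0
  have hlim : ∀ x, Filter.Tendsto (fun N => s N x) Filter.atTop (nhds (a0 x)) := by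
    intro x
    have hsx : Summable (fun n : ℕ => s (n+1) x - s n x) := by
      apply Summable.of_norm_bounded hsum (fun n => hinc n x)
    have := hsx.hasSum.tendsto_sum_nat
    have heq : ∀ N, ∑ i ∈ Finset.range N, (s (i+1) x - s i x) = s N x := by
      intro N
      rw [Finset.sum_range_sub (fun i => s i x) N]
      simp [hs, seqA]
    simp only [heq] at this
    exact this
  have hval : ∀ x, a0 x * r x = u x := by
    intro x
    have h1 : Filter.Tendsto (fun N => u x - s N x * r x) Filter.atTop
        (nhds (u x - a0 x * r x)) := by
      exact (tendsto_const_nhds.sub ((hlim x).mul tendsto_const_nhds))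
    have h2 : Filter.Tendsto (fun N => u x - s N x * r x) Filter.atTop (nhds 0) := by
      apply squeeze_zero_norm (fun N => seqA_invariant hF u r h N x)
      have : Filter.Tendsto (fun N : ℕ => ((2:ℝ)^N)⁻¹ * r x) Filter.atTop (nhds (0 * r x)) := by
        apply Filter.Tendsto.mul_const
        simpa using tendsto_pow_atTop_nhds_zero_of_lt_one (by norm_num : (0:ℝ) ≤ (1/2:ℝ)) (by norm_num) |>.congr (fun n => by rw [one_div, inv_pow])
      simpa using this
    have := tendsto_nhds_unique h1 h2
    linarith
  -- now clamp
  refine ⟨clampM a0, fun x => clampM_abs_le a0 x, fun x => ?_⟩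
  rcases eq_or_lt_of_le (le_trans (abs_nonneg _) (h x)) with hr | hr
  · have hu : u x = 0 := by
      have := h x; rw [← hr] at this; have := abs_nonpos_iff.mp (le_trans this le_rfl)
      exact this
    rw [← hr]; simp [hu]
  · have hv := hval x
    have habs : |a0 x| * r x = |u x| := by
      nth_rewrite 1 [← abs_of_nonneg hr.le]
      rw [← abs_mul, hv]
    have ha : |a0 x| ≤ 1 := by nlinarith [h x, habs, abs_nonneg (a0 x)]
    have hb := abs_le.mp ha
    have hc : clampM a0 x = a0 x := by
      show max (-1) (min (a0 x) 1) = a0 x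
      rw [min_eq_left hb.2, max_eq_right hb.1]
    rw [hc]; exact hval x


lemma extend_cont {X : Type*} [TopologicalSpace X] (g : C(X, ℂ))
    (F : {x : X // g x ≠ 0} → ℂ) (hF : Continuous F) (C : ℝ)
    (hb : ∀ a : {x : X // g x ≠ 0}, ‖F a‖ ≤ C * ‖g a.1‖) :
    Continuous (fun x => if h : g x ≠ 0 then F ⟨x, h⟩ else 0) := by
  set f : X → ℂ := fun x => if h : g x ≠ 0 then F ⟨x, h⟩ else 0 with hf
  rw [continuous_iff_continuousAt]
  intro x
  by_cases hx : g x ≠ 0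
  · set U : Set X := {y | g y ≠ 0} with hU
    have hUopen : IsOpen U := isOpen_ne_fun g.continuous continuous_const
    have hmem : U ∈ nhds x := hUopen.mem_nhds hx
    apply ContinuousOn.continuousAt _ hmem
    rw [continuousOn_iff_continuous_restrict]
    have : U.restrict f = F := by
      funext y
      exact dif_pos y.2
    rw [show U.domRestrict f = F from this]
    exact hF
  · push_neg at hx
    have hfx : f x = 0 := dif_neg (by simp [hx])
    unfold ContinuousAt
    rw [hfx]
    apply squeeze_zero_norm (a := fun y => |C| * ‖g y‖)
    · intro y
      by_cases hy : g y ≠ 0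
      · simp only [hf, dif_pos hy]
        calc ‖F ⟨y, hy⟩‖ ≤ C * ‖g y‖ := hb ⟨y, hy⟩
          _ ≤ |C| * ‖g y‖ := mul_le_mul_of_nonneg_right (le_abs_self C) (norm_nonneg _)
      · push_neg at hy
        simp [hf, hy]
    · have : Filter.Tendsto (fun y => |C| * ‖g y‖) (nhds x) (nhds (|C| * ‖g x‖)) := by
        exact (continuous_const.mul g.continuous.norm).tendsto x
      simpa [hx] using this


lemma mpr_dir {X : Type*} [TopologicalSpace X] (g : C(X, ℂ))
    (hF : IsFSpace {x : X // g x ≠ 0}) (f : C(X, ℂ)) :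
    ∃ h : C(X, ℂ), g * star f = h * f := by
  set A := {x : X // g x ≠ 0}
  set u : C(A, ℝ) := ⟨fun p => (f p.1).re, Complex.continuous_re.comp (f.continuous.comp continuous_subtype_val)⟩ with hu_def
  set v : C(A, ℝ) := ⟨fun p => (f p.1).im, Complex.continuous_im.comp (f.continuous.comp continuous_subtype_val)⟩ with hv_def
  set r : C(A, ℝ) := ⟨fun p => ‖f p.1‖, continuous_norm.comp (f.continuous.comp continuous_subtype_val)⟩ with hr_def
  obtain ⟨a, ha1, ha2⟩ := div_lemma hF u r (fun p => Complex.abs_re_le_norm (f p.1))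
  obtain ⟨b, hb1, hb2⟩ := div_lemma hF v r (fun p => Complex.abs_im_le_norm (f p.1))
  set k : A → ℂ := fun p => (a p : ℂ) + (b p : ℂ) * Complex.I with hk_def
  have kcont : Continuous k := by fun_prop
  have kf : ∀ p : A, k p * ((r p : ℝ) : ℂ) = f p.1 := by
    intro p
    have h1 : ((a p * r p : ℝ) : ℂ) + ((b p * r p : ℝ) : ℂ) * Complex.I = f p.1 := by
      rw [ha2 p, hb2 p]
      exact Complex.re_add_im _
    rw [← h1]
    push_cast
    ring
  have hbound : ∀ p : A, ‖g p.1 * ((starRingEnd ℂ) (k p)) ^ 2‖ ≤ 5 * ‖g p.1‖ := by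
    intro p
    have hknorm : ‖k p‖ ≤ 2 := by
      calc ‖k p‖ ≤ ‖(a p : ℂ)‖ + ‖(b p : ℂ) * Complex.I‖ := norm_add_le _ _
        _ = |a p| + |b p| := by simp
        _ ≤ 2 := by linarith [ha1 p, hb1 p]
    calc ‖g p.1 * ((starRingEnd ℂ) (k p)) ^ 2‖ = ‖g p.1‖ * ‖k p‖ ^ 2 := by
          rw [norm_mul, norm_pow, RCLike.norm_conj]
      _ ≤ ‖g p.1‖ * 2 ^ 2 := by
          apply mul_le_mul_of_nonneg_left _ (norm_nonneg _)
          exact pow_le_pow_left₀ (norm_nonneg _) hknorm 2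
      _ ≤ 5 * ‖g p.1‖ := by nlinarith [norm_nonneg (g p.1)]
  set H : X → ℂ := fun x => if h : g x ≠ 0 then g x * ((starRingEnd ℂ) (k ⟨x, h⟩)) ^ 2 else 0
    with hH_def
  have Hcont : Continuous H :=
    extend_cont g (fun p => g p.1 * ((starRingEnd ℂ) (k p)) ^ 2)
      ((g.continuous.comp continuous_subtype_val).mul ((continuous_star.comp kcont).pow 2))
      5 hbound
  refine ⟨⟨H, Hcont⟩, ?_⟩
  ext x
  simp only [ContinuousMap.mul_apply, ContinuousMap.star_apply, ContinuousMap.coe_mk]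
  by_cases hx : g x ≠ 0
  · have hHx : H x = g x * ((starRingEnd ℂ) (k ⟨x, hx⟩)) ^ 2 := dif_pos hx
    have hfx : f x = k ⟨x, hx⟩ * ((r ⟨x, hx⟩ : ℝ) : ℂ) := (kf ⟨x, hx⟩).symm
    rw [hHx, hfx]
    by_cases hr0 : r ⟨x, hx⟩ = 0
    · simp [hr0]
    · have hk1 : (starRingEnd ℂ) (k ⟨x, hx⟩) * k ⟨x, hx⟩ = 1 := by
        have habs : ‖k ⟨x, hx⟩‖ * r ⟨x, hx⟩ = r ⟨x, hx⟩ := by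
          have : ‖f x‖ = ‖k ⟨x, hx⟩‖ * r ⟨x, hx⟩ := by
            rw [hfx, norm_mul, Complex.norm_real, Real.norm_eq_abs, abs_of_nonneg]
            exact norm_nonneg (f x)
          have hrr : ‖f x‖ = r ⟨x, hx⟩ := rfl
          rw [hrr] at this
          linarith [this]
        have habs1 : ‖k ⟨x, hx⟩‖ = 1 := by
          apply mul_right_cancel₀ hr0
          rw [habs, one_mul]
        have hn : Complex.normSq (k ⟨x, hx⟩) = 1 := by
          rw [← Complex.sq_norm, habs1]; norm_num
        rw [mul_comm, Complex.mul_conj, hn]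
        norm_num
      rw [Complex.star_def, map_mul, Complex.conj_ofReal]
      linear_combination (-(g x * ((r ⟨x, hx⟩ : ℝ) : ℂ) * (starRingEnd ℂ) (k ⟨x, hx⟩))) * hk1
  · push_neg at hx
    have hHx : H x = 0 := dif_neg (by simp [hx])
    rw [hHx, hx]
    simp


lemma mp_dir {X : Type*} [TopologicalSpace X] (g : C(X, ℂ))
    (H : ∀ f : C(X, ℂ), ∃ h : C(X, ℂ), g * star f = h * f) :
    IsFSpace {x : X // g x ≠ 0} := by
  intro φ
  set A := {x : X // g x ≠ 0}
  have hden : ∀ p : A, (0:ℝ) < 1 + |φ p| := fun p => by positivity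
  set q1 : A → ℝ := fun p => max (φ p) 0 / (1 + |φ p|) with hq1
  set q2 : A → ℝ := fun p => max (-φ p) 0 / (1 + |φ p|) with hq2
  have hq1c : Continuous q1 := by
    apply Continuous.div
    · fun_prop
    · fun_prop
    · intro p; positivity
  have hq2c : Continuous q2 := by
    apply Continuous.div
    · fun_prop
    · fun_prop
    · intro p; positivity
  have hq1b : ∀ p, 0 ≤ q1 p ∧ q1 p ≤ 1 := by
    intro p
    constructor
    · apply div_nonneg (le_max_right _ _) (hden p).le
    · rw [div_le_one (hden p)]
      calc max (φ p) 0 ≤ |φ p| := max_le (le_abs_self _) (abs_nonneg _)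
        _ ≤ 1 + |φ p| := by linarith
  have hq2b : ∀ p, 0 ≤ q2 p ∧ q2 p ≤ 1 := by
    intro p
    constructor
    · apply div_nonneg (le_max_right _ _) (hden p).le
    · rw [div_le_one (hden p)]
      calc max (-φ p) 0 ≤ |φ p| := max_le (neg_le_abs _) (abs_nonneg _)
        _ ≤ 1 + |φ p| := by linarith
  set m : A → ℂ := fun p => (q1 p : ℂ) + (q2 p : ℂ) * Complex.I with hm_def
  have hmc : Continuous m := by fun_prop
  have hmb : ∀ p : A, ‖g p.1 * m p‖ ≤ 2 * ‖g p.1‖ := by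
    intro p
    have : ‖m p‖ ≤ 2 := by
      calc ‖m p‖ ≤ ‖(q1 p : ℂ)‖ + ‖(q2 p : ℂ) * Complex.I‖ := norm_add_le _ _
        _ = |q1 p| + |q2 p| := by simp
        _ ≤ 2 := by
            rw [abs_of_nonneg (hq1b p).1, abs_of_nonneg (hq2b p).1]
            linarith [(hq1b p).2, (hq2b p).2]
    calc ‖g p.1 * m p‖ = ‖g p.1‖ * ‖m p‖ := norm_mul _ _
      _ ≤ ‖g p.1‖ * 2 := mul_le_mul_of_nonneg_left this (norm_nonneg _)
      _ = 2 * ‖g p.1‖ := by ring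
  set fX : X → ℂ := fun x => if h : g x ≠ 0 then g x * m ⟨x, h⟩ else 0 with hfX
  have fXc : Continuous fX :=
    extend_cont g (fun p => g p.1 * m p)
      ((g.continuous.comp continuous_subtype_val).mul hmc) 2 hmb
  obtain ⟨h, hh⟩ := H ⟨fX, fXc⟩
  have kcont : Continuous fun p : A => (h p.1 * g p.1).re / Complex.normSq (g p.1) := by
    apply Continuous.div
    · exact Complex.continuous_re.comp ((h.continuous.comp continuous_subtype_val).mul (g.continuous.comp continuous_subtype_val))
    · exact Complex.continuous_normSq.comp (g.continuous.comp continuous_subtype_val)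
    · intro p
      exact fun hc => p.2 (Complex.normSq_eq_zero.mp hc)
  refine ⟨⟨_, kcont⟩, ?_⟩
  ext p
  simp only [ContinuousMap.mul_apply, ContinuousMap.coe_mk]
  have habs : |φ| p = |φ p| := rfl
  rw [habs]
  have heq : g p.1 * (starRingEnd ℂ) (fX p.1) = h p.1 * fX p.1 := by
    have := congrFun (congrArg DFunLike.coe hh) p.1
    simpa [Complex.star_def] using this
  have hfp : fX p.1 = g p.1 * m p := by
    have : p = ⟨p.1, p.2⟩ := rfl
    rw [hfX]
    simp only
    rw [dif_pos p.2]
  rcases lt_trichotomy (φ p) 0 with hlt | heq0 | hgt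
  · -- φ p < 0 : m p = q2 * I with q2 > 0
    have hm1 : q1 p = 0 := by
      rw [hq1]
      simp only
      rw [max_eq_right hlt.le, zero_div]
    have hq2pos : 0 < q2 p := by
      rw [hq2]
      simp only
      apply div_pos _ (hden p)
      rw [max_eq_left (by linarith : (0:ℝ) ≤ -φ p)]
      linarith
    have hmp : m p = (q2 p : ℂ) * Complex.I := by rw [hm_def]; simp [hm1]
    have hc : ((q2 p : ℝ) : ℂ) * Complex.I ≠ 0 :=
      mul_ne_zero (Complex.ofReal_ne_zero.mpr hq2pos.ne') Complex.I_ne_zero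
    have key : h p.1 * g p.1 * ((q2 p : ℂ) * Complex.I)
        = (-(g p.1 * (starRingEnd ℂ) (g p.1))) * ((q2 p : ℂ) * Complex.I) := by
      rw [hfp, hmp] at heq
      have hconj : (starRingEnd ℂ) (g p.1 * ((q2 p : ℂ) * Complex.I))
          = (starRingEnd ℂ) (g p.1) * (q2 p : ℂ) * (-Complex.I) := by
        simp only [map_mul, Complex.conj_ofReal, Complex.conj_I]
        ring
      rw [hconj] at heq
      linear_combination -heq
    have hkg : h p.1 * g p.1 = -(g p.1 * (starRingEnd ℂ) (g p.1)) :=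
      mul_right_cancel₀ hc key
    have hre : (h p.1 * g p.1).re = -(Complex.normSq (g p.1)) := by
      rw [hkg, Complex.mul_conj]
      simp
    rw [hre]
    have hns : Complex.normSq (g p.1) ≠ 0 := fun hc' => p.2 (Complex.normSq_eq_zero.mp hc')
    rw [neg_div, div_self hns]
    rw [abs_of_neg hlt]
    ring
  · simp [heq0]
  · -- φ p > 0 : m p = q1 real positive
    have hm2 : q2 p = 0 := by
      rw [hq2]
      simp only
      rw [max_eq_right (by linarith : -φ p ≤ 0), zero_div]
    have hq1pos : 0 < q1 p := by
      rw [hq1]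
      simp only
      apply div_pos _ (hden p)
      rw [max_eq_left hgt.le]
      exact hgt
    have hmp : m p = ((q1 p : ℝ) : ℂ) := by rw [hm_def]; simp [hm2]
    have hc : ((q1 p : ℝ) : ℂ) ≠ 0 := Complex.ofReal_ne_zero.mpr hq1pos.ne'
    have key : h p.1 * g p.1 * ((q1 p : ℝ) : ℂ)
        = (g p.1 * (starRingEnd ℂ) (g p.1)) * ((q1 p : ℝ) : ℂ) := by
      rw [hfp, hmp] at heq
      have hconj : (starRingEnd ℂ) (g p.1 * ((q1 p : ℝ) : ℂ))
          = (starRingEnd ℂ) (g p.1) * (q1 p : ℂ) := by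
        simp only [map_mul, Complex.conj_ofReal]
      rw [hconj] at heq
      linear_combination -heq
    have hkg : h p.1 * g p.1 = g p.1 * (starRingEnd ℂ) (g p.1) :=
      mul_right_cancel₀ hc key
    have hre : (h p.1 * g p.1).re = Complex.normSq (g p.1) := by
      rw [hkg, Complex.mul_conj]
      simp
    rw [hre]
    have hns : Complex.normSq (g p.1) ≠ 0 := fun hc' => p.2 (Complex.normSq_eq_zero.mp hc')
    rw [div_self hns]
    rw [abs_of_pos hgt]
    ring


end AuxStmt8

theorem stmt8 {X : Type*} [TopologicalSpace X] [CompactSpace X] [T2Space X]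
    (g : C(X, ℂ)) (hg : g ≠ 0) :
    (∀ f : C(X, ℂ), ∃ h : C(X, ℂ), g * star f = h * f) ↔
      IsFSpace {x : X // g x ≠ 0} := by
  constructor
  · exact fun H => mp_dir g H
  · intro hF f
    exact mpr_dir g hF f
end

section
/- Let X be a compact Hausdorff space. Then X is an F-space if and only if the set of ℝ-linear local multiplications on C(X) is exactly the set of maps of the form T(f) = T(1)·Re(f) + T(i)·Im(f). -/
/-- The real part of a complex-valued continuous map, as a complex-valued continuous map. -/
noncomputable def reC {X : Type*} [TopologicalSpace X] (f : C(X, ℂ)) : C(X, ℂ) :=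
  ⟨fun x => ((f x).re : ℂ), Complex.continuous_ofReal.comp (Complex.continuous_re.comp f.continuous)⟩

/-- The imaginary part of a complex-valued continuous map, as a complex-valued continuous map. -/
noncomputable def imC {X : Type*} [TopologicalSpace X] (f : C(X, ℂ)) : C(X, ℂ) :=
  ⟨fun x => ((f x).im : ℂ), Complex.continuous_ofReal.comp (Complex.continuous_im.comp f.continuous)⟩

lemma div_step {X : Type*} [TopologicalSpace X]
    (hF : ∀ f : C(X, ℝ), ∃ k : C(X, ℝ), f = k * |f|)
    (G F' : C(X, ℝ)) (c : ℝ) (hc : 0 < c) (hb : ∀ x, |F' x| ≤ c * G x) :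
    ∃ ψ : C(X, ℝ), (∀ x, |ψ x| ≤ c / 3) ∧ ∀ x, |F' x - ψ x * G x| ≤ (2 * c / 3) * G x := by
  have hG : ∀ x, 0 ≤ G x := by
    intro x
    have h0 : (0:ℝ) ≤ c * G x := le_trans (abs_nonneg _) (hb x)
    nlinarith
  set D : C(X, ℝ) := ⟨fun x => max (F' x - c / 3 * G x) 0 - max (-F' x - c / 3 * G x) 0, by
    fun_prop⟩ with hD
  obtain ⟨k, hk⟩ := hF D
  refine ⟨⟨fun x => max (-(c/3)) (min (c/3) (c/3 * k x)), by fun_prop⟩, ?_, ?_⟩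
  · intro x
    rw [abs_le]
    constructor
    · exact le_max_left _ _
    · apply max_le (by linarith) (min_le_left _ _)
  · intro x
    have hkx : D x = k x * |D x| := by
      have := ContinuousMap.congr_fun hk x
      simpa using this
    by_cases h1 : c / 3 * G x < F' x
    · have hcG : 0 ≤ c / 3 * G x := mul_nonneg (by linarith) (hG x)
      have hF'pos : 0 < F' x := lt_of_le_of_lt hcG h1
      have hDx : D x = F' x - c / 3 * G x := by
        simp only [hD, ContinuousMap.coe_mk]
        rw [max_eq_left (by linarith), max_eq_right (by nlinarith [hcG])]
        ring
      have hDpos : 0 < D x := by rw [hDx]; linarith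
      have hk1 : k x = 1 := by
        rw [abs_of_pos hDpos] at hkx
        exact mul_right_cancel₀ (ne_of_gt hDpos) (by linarith [hkx])
      have hψ : max (-(c/3)) (min (c/3) (c/3 * k x)) = c / 3 := by
        rw [hk1, mul_one, min_self, max_eq_right (by linarith)]
      simp only [ContinuousMap.coe_mk, hψ]
      have := hb x
      rw [abs_le] at this ⊢
      constructor <;> nlinarith [hG x]
    · by_cases h2 : F' x < -(c / 3 * G x)
      · have hcG : 0 ≤ c / 3 * G x := mul_nonneg (by linarith) (hG x)
        have hF'neg : F' x < 0 := lt_of_lt_of_le h2 (by linarith)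
        have hDx : D x = -(-F' x - c / 3 * G x) := by
          simp only [hD, ContinuousMap.coe_mk]
          rw [max_eq_right (by nlinarith [hcG]), max_eq_left (by linarith)]
          ring
        have hDneg : D x < 0 := by rw [hDx]; linarith
        have hk1 : k x = -1 := by
          rw [abs_of_neg hDneg] at hkx
          have h3 : D x ≠ 0 := ne_of_lt hDneg
          have : k x * -D x = (-1 : ℝ) * -D x := by linarith [hkx]
          exact mul_right_cancel₀ (by simpa using h3) this
        have hψ : max (-(c/3)) (min (c/3) (c/3 * k x)) = -(c / 3) := by
          rw [hk1]
          rw [min_eq_right (by linarith), max_eq_left (by linarith)]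
        simp only [ContinuousMap.coe_mk, hψ]
        have := hb x
        rw [abs_le] at this ⊢
        constructor <;> nlinarith [hG x]
      · push_neg at h1 h2
        have hmid : |F' x| ≤ c / 3 * G x := abs_le.2 ⟨by linarith, h1⟩
        have hψb : |max (-(c/3)) (min (c/3) (c/3 * k x))| ≤ c / 3 := by
          rw [abs_le]
          exact ⟨le_max_left _ _, max_le (by linarith) (min_le_left _ _)⟩
        simp only [ContinuousMap.coe_mk]
        set p := max (-(c/3)) (min (c/3) (c/3 * k x)) with hp
        rw [abs_le] at hmid hψb ⊢
        have hpm : p * G x ≤ c / 3 * G x := mul_le_mul_of_nonneg_right hψb.2 (hG x)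
        have hpm2 : -(c/3) * G x ≤ p * G x := mul_le_mul_of_nonneg_right hψb.1 (hG x)
        constructor <;> nlinarith [hG x]

lemma fspace_div {X : Type*} [TopologicalSpace X] [CompactSpace X] [T2Space X]
    (hF : ∀ f : C(X, ℝ), ∃ k : C(X, ℝ), f = k * |f|)
    (F G : C(X, ℝ)) (hFG : ∀ x, |F x| ≤ G x) :
    ∃ H : C(X, ℝ), F = H * G := by
  have step : ∀ p : C(X, ℝ) × ℝ, ∃ ψ : C(X, ℝ),
      ((0 < p.2 ∧ ∀ x, |p.1 x| ≤ p.2 * G x) →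
        (∀ x, |ψ x| ≤ p.2 / 3) ∧ ∀ x, |p.1 x - ψ x * G x| ≤ (2 * p.2 / 3) * G x) := by
    rintro ⟨F', c⟩
    by_cases h : 0 < c ∧ ∀ x, |F' x| ≤ c * G x
    · obtain ⟨ψ, h1, h2⟩ := div_step hF G F' c h.1 h.2
      exact ⟨ψ, fun _ => ⟨h1, h2⟩⟩
    · exact ⟨0, fun hh => absurd hh h⟩
  choose Ψ hΨ using step
  set rem : ℕ → C(X, ℝ) := fun n => Nat.rec F (fun n Fn => Fn - Ψ (Fn, (2/3)^n) * G) n with hrem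
  have hrem0 : rem 0 = F := rfl
  have hremS : ∀ n, rem (n+1) = rem n - Ψ (rem n, (2/3)^n) * G := fun n => rfl
  have hinv : ∀ n, ∀ x, |rem n x| ≤ (2/3)^n * G x := by
    intro n
    induction n with
    | zero => intro x; rw [hrem0]; simpa using hFG x
    | succ n ih =>
      intro x
      have h23 : (0:ℝ) < (2/3)^n := by positivity
      have := (hΨ (rem n, (2/3)^n) ⟨h23, ih⟩).2 x
      rw [hremS]
      simp only [ContinuousMap.sub_apply, ContinuousMap.mul_apply]
      calc |rem n x - (Ψ (rem n, (2/3)^n)) x * G x| ≤ (2 * (2/3)^n / 3) * G x := this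
        _ = (2/3)^(n+1) * G x := by ring
  set seq : ℕ → C(X, ℝ) := fun n => Ψ (rem n, (2/3)^n) with hseq
  have hnorm : ∀ n, ‖seq n‖ ≤ 1/3 * (2/3)^n := by
    intro n
    have h23 : (0:ℝ) < (2/3)^n := by positivity
    have hb := (hΨ (rem n, (2/3)^n) ⟨h23, hinv n⟩).1
    rw [ContinuousMap.norm_le _ (by positivity)]
    intro x
    calc ‖seq n x‖ = |seq n x| := rfl
      _ ≤ (2/3)^n / 3 := hb x
      _ = 1/3 * (2/3)^n := by ring
  have hgeo : Summable fun n : ℕ => 1/3 * (2/3 : ℝ)^n :=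
    (summable_geometric_of_lt_one (by norm_num) (by norm_num)).mul_left (1/3)
  have hS : Summable seq := Summable.of_norm_bounded hgeo hnorm
  refine ⟨∑' n, seq n, ?_⟩
  ext x
  have hpt : ∀ n, ‖seq n x‖ ≤ 1/3 * (2/3)^n := by
    intro n
    exact le_trans (ContinuousMap.norm_coe_le_norm (seq n) x) (hnorm n)
  have hps : Summable fun n => seq n x := Summable.of_norm_bounded hgeo hpt
  have hHx : (∑' n, seq n) x = ∑' n, seq n x := (ContinuousMap.tsum_apply hS x).symm
  have hpart : ∀ N, F x - (∑ n ∈ Finset.range N, seq n x) * G x = rem N x := by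
    intro N
    induction N with
    | zero => simp [hrem0]
    | succ N ih =>
      rw [Finset.sum_range_succ, hremS]
      simp only [ContinuousMap.sub_apply, ContinuousMap.mul_apply]
      nlinarith [ih]
  have t1 : Filter.Tendsto (fun N => ∑ n ∈ Finset.range N, seq n x) Filter.atTop
      (nhds (∑' n, seq n x)) := hps.hasSum.tendsto_sum_nat
  have t2 : Filter.Tendsto (fun N => F x - (∑ n ∈ Finset.range N, seq n x) * G x) Filter.atTop
      (nhds (F x - (∑' n, seq n x) * G x)) := tendsto_const_nhds.sub (t1.mul_const _)
  have t3 : Filter.Tendsto (fun N => F x - (∑ n ∈ Finset.range N, seq n x) * G x) Filter.atTop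
      (nhds 0) := by
    simp only [hpart]
    apply squeeze_zero_norm (fun n => hinv n x)
    have h0 := tendsto_pow_atTop_nhds_zero_of_lt_one (by norm_num : (0:ℝ) ≤ 2/3) (by norm_num)
    simpa using h0.mul_const (G x)
  have hz := tendsto_nhds_unique t2 t3
  simp only [ContinuousMap.mul_apply, hHx]
  linarith [hz]

theorem stmt10 {X : Type*} [TopologicalSpace X] [CompactSpace X] [T2Space X] :
    (∀ f : C(X, ℝ), ∃ k : C(X, ℝ), f = k * |f|) ↔
    (∀ T : C(X, ℂ) → C(X, ℂ),
      (((∀ f g, T (f + g) = T f + T g) ∧ (∀ (a : ℝ) (f : C(X, ℂ)), T (a • f) = a • T f)) ∧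
        (∀ f, ∃ h, T f = h * f)) ↔
      (∀ f, T f = T 1 * reC f + T (ContinuousMap.const X Complex.I) * imC f)) := by
  constructor
  · intro hF T
    constructor
    · rintro ⟨⟨hAdd, hSmul⟩, hLoc⟩
      have key : ∀ (f g : C(X, ℂ)) (x : X), f x = g x → T f x = T g x := by
        intro f g x hfg
        obtain ⟨h, hh⟩ := hLoc (f - g)
        have hfg' : f = g + (f - g) := by ring
        have h1 : T f = T g + T (f - g) := (congrArg T hfg').trans (hAdd g (f - g))
        have hx := ContinuousMap.congr_fun h1 x
        rw [hh] at hx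
        simpa [hfg] using hx
      intro f
      ext x
      have hdecomp : f x = (((f x).re : ℝ) • (1 : C(X, ℂ)) +
          ((f x).im : ℝ) • ContinuousMap.const X Complex.I) x := by
        simp only [ContinuousMap.add_apply, ContinuousMap.smul_apply, ContinuousMap.one_apply,
          ContinuousMap.const_apply, Complex.real_smul, mul_one]
        exact (Complex.re_add_im (f x)).symm
      have h2 := key f _ x hdecomp
      rw [h2, hAdd, ContinuousMap.add_apply, hSmul, hSmul]
      simp only [ContinuousMap.smul_apply, ContinuousMap.mul_apply, ContinuousMap.add_apply,
        reC, imC, ContinuousMap.coe_mk, Complex.real_smul]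
      ring
    · intro hR
      have h1 : ∀ f g : C(X, ℂ), T (f + g) = T f + T g := by
        intro f g
        rw [hR (f + g), hR f, hR g]
        ext x
        simp only [ContinuousMap.add_apply, ContinuousMap.mul_apply, reC, imC,
          ContinuousMap.coe_mk, Complex.add_re, Complex.add_im]
        push_cast
        ring
      have h2 : ∀ (a : ℝ) (f : C(X, ℂ)), T (a • f) = a • T f := by
        intro a f
        rw [hR (a • f), hR f]
        ext x
        simp only [ContinuousMap.add_apply, ContinuousMap.mul_apply, ContinuousMap.smul_apply,
          reC, imC, ContinuousMap.coe_mk, Complex.real_smul, Complex.mul_re, Complex.mul_im,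
          Complex.ofReal_re, Complex.ofReal_im]
        push_cast
        ring
      refine ⟨⟨h1, h2⟩, ?_⟩
      intro f
      obtain ⟨α, hα⟩ := fspace_div hF ⟨fun x => (f x).re, Complex.continuous_re.comp f.continuous⟩
        ⟨fun x => ‖f x‖, continuous_norm.comp f.continuous⟩
        (fun x => by simpa using Complex.abs_re_le_norm (f x))
      obtain ⟨β, hβ⟩ := fspace_div hF ⟨fun x => (f x).im, Complex.continuous_im.comp f.continuous⟩
        ⟨fun x => ‖f x‖, continuous_norm.comp f.continuous⟩
        (fun x => by simpa using Complex.abs_im_le_norm (f x))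
      have hax : ∀ x, (f x).re = α x * ‖f x‖ := by
        intro x; simpa using ContinuousMap.congr_fun hα x
      have hbx : ∀ x, (f x).im = β x * ‖f x‖ := by
        intro x; simpa using ContinuousMap.congr_fun hβ x
      set u : C(X, ℂ) := ⟨fun x => (α x : ℂ) * ((α x : ℂ) - (β x : ℂ) * Complex.I), by fun_prop⟩
        with hu_def
      set v : C(X, ℂ) := ⟨fun x => (β x : ℂ) * ((α x : ℂ) - (β x : ℂ) * Complex.I), by fun_prop⟩
        with hv_def
      have hn : ∀ x, ‖f x‖ ≠ 0 →
          (α x : ℂ) ^ 2 + (β x : ℂ) ^ 2 = 1 := by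
        intro x hx
        have hsq : (f x).re ^ 2 + (f x).im ^ 2 = ‖f x‖ ^ 2 := by
          rw [Complex.sq_norm, Complex.normSq_apply]; ring
        rw [hax x, hbx x] at hsq
        have : α x ^ 2 + β x ^ 2 = 1 := by
          have h2 : (α x ^ 2 + β x ^ 2) * ‖f x‖ ^ 2 = 1 * ‖f x‖ ^ 2 := by
            rw [one_mul]; nlinarith [hsq]
          exact mul_right_cancel₀ (pow_ne_zero 2 hx) h2
        exact_mod_cast congrArg (fun t : ℝ => (t : ℂ)) this
      have hfx : ∀ x, f x = ((α x * ‖f x‖ : ℝ) : ℂ) +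
          ((β x * ‖f x‖ : ℝ) : ℂ) * Complex.I := by
        intro x
        rw [← hax x, ← hbx x]
        exact (Complex.re_add_im (f x)).symm
      have hu : reC f = u * f := by
        ext x
        simp only [reC, ContinuousMap.coe_mk, ContinuousMap.mul_apply, hu_def]
        by_cases hr0 : ‖f x‖ = 0
        · have hf0 : f x = 0 := by simpa using hr0
          simp [hf0]
        · have haC : ((f x).re : ℂ) = (α x : ℂ) * (‖f x‖ : ℂ) := by
            rw [hax x]; push_cast; ring
          have hfC : f x = (α x : ℂ) * (‖f x‖ : ℂ) +
              (β x : ℂ) * (‖f x‖ : ℂ) * Complex.I := by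
            have := hfx x; push_cast at this; exact this
          linear_combination haC + (-(α x : ℂ) * ((α x : ℂ) - (β x : ℂ) * Complex.I)) * hfC +
            (-((α x : ℂ) * (‖f x‖ : ℂ))) * hn x hr0 +
            ((α x : ℂ) * (β x : ℂ) ^ 2 * (‖f x‖ : ℂ)) * Complex.I_sq
      have hv : imC f = v * f := by
        ext x
        simp only [imC, ContinuousMap.coe_mk, ContinuousMap.mul_apply, hv_def]
        by_cases hr0 : ‖f x‖ = 0
        · have hf0 : f x = 0 := by simpa using hr0
          simp [hf0]
        · have hbC : ((f x).im : ℂ) = (β x : ℂ) * (‖f x‖ : ℂ) := by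
            rw [hbx x]; push_cast; ring
          have hfC : f x = (α x : ℂ) * (‖f x‖ : ℂ) +
              (β x : ℂ) * (‖f x‖ : ℂ) * Complex.I := by
            have := hfx x; push_cast at this; exact this
          linear_combination hbC + (-(β x : ℂ) * ((α x : ℂ) - (β x : ℂ) * Complex.I)) * hfC +
            (-((β x : ℂ) * (‖f x‖ : ℂ))) * hn x hr0 +
            ((β x : ℂ) ^ 3 * (‖f x‖ : ℂ)) * Complex.I_sq
      refine ⟨T 1 * u + T (ContinuousMap.const X Complex.I) * v, ?_⟩
      rw [hR f, hu, hv]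
      ring
  · intro hT f
    have hRe : ∀ u : C(X, ℂ), reC u = reC 1 * reC u +
        reC (ContinuousMap.const X Complex.I) * imC u := by
      intro u
      have e1 : reC (1 : C(X, ℂ)) = 1 := by
        ext x; simp [reC]
      have e2 : reC (ContinuousMap.const X Complex.I) = 0 := by
        ext x; simp [reC]
      rw [e1, e2]
      ring
    obtain ⟨⟨-, -⟩, hLoc⟩ := (hT reC).mpr hRe
    obtain ⟨h, hh⟩ := hLoc ⟨fun x => ((f x : ℝ) : ℂ) + ((|f x| : ℝ) : ℂ) * Complex.I, by fun_prop⟩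
    refine ⟨⟨fun x => -2 * (h x).im, by fun_prop⟩, ?_⟩
    ext x
    have hx := ContinuousMap.congr_fun hh x
    simp only [reC, ContinuousMap.coe_mk, ContinuousMap.mul_apply] at hx
    have hre : (((f x : ℝ) : ℂ) + ((|f x| : ℝ) : ℂ) * Complex.I).re = f x := by simp
    rw [hre] at hx
    -- hx : ((f x : ℝ) : ℂ) = h x * (↑(f x) + ↑|f x| * I)
    have e1 := congrArg Complex.re hx
    have e2 := congrArg Complex.im hx
    simp only [Complex.mul_re, Complex.mul_im, Complex.add_re, Complex.add_im,
      Complex.ofReal_re, Complex.ofReal_im, Complex.mul_re, Complex.I_re, Complex.I_im,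
      mul_zero, mul_one, zero_mul, add_zero, zero_add, sub_zero] at e1 e2
    simp only [ContinuousMap.mul_apply, ContinuousMap.coe_mk, ContinuousMap.abs_apply]
    by_cases hA : f x = 0
    · simp [hA]
    · have hB2 : |f x| ^ 2 = f x ^ 2 := sq_abs _
      have hBne : |f x| ≠ 0 := fun h0 => hA (abs_eq_zero.mp h0)
      have keyx : |f x| * (f x - -2 * (h x).im * |f x|) = 0 := by
        linear_combination (|f x|) * e1 - (f x) * e2 + (h x).im * hB2
      rcases mul_eq_zero.mp keyx with h0 | h0
      · exact absurd h0 hBne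
      · linarith
end

section
/- Let X be a compact Hausdorff space. There exists a nonzero g ∈ C(X) such that the map T(f) = g·conj(f) is a local multiplication on C(X) if and only if there is a nonempty open F_σ subset of X that is an F-space. -/
open Filter Topology

section Aux

variable {X : Type*} [TopologicalSpace X]

lemma extZeroAux {X : Type*} [TopologicalSpace X] {A : Set X} (hA : IsOpen A)
    (p : X → ℝ) (hp : Continuous p) (hp0 : ∀ x ∉ A, p x = 0)
    (u : ↑A → ℂ) (hu : Continuous u) (hub : ∀ a : ↑A, ‖u a‖ ≤ p a) :
    ∃ w : C(X, ℂ), (∀ x (h : x ∈ A), w x = u ⟨x, h⟩) ∧ (∀ x ∉ A, w x = 0) := by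
  classical
  set v : X → ℂ := fun x => if h : x ∈ A then u ⟨x, h⟩ else 0 with hv
  have hvb : ∀ y, ‖v y‖ ≤ p y := by
    intro y
    by_cases hy : y ∈ A
    · simpa [v, dif_pos hy] using hub ⟨y, hy⟩
    · simp [v, dif_neg hy, hp0 y hy]
  have hcont : Continuous v := by
    rw [continuous_iff_continuousAt]
    intro x
    by_cases hx : x ∈ A
    · refine ContinuousOn.continuousAt ?_ (hA.mem_nhds hx)
      rw [continuousOn_iff_continuous_restrict]
      have : A.domRestrict v = u := by
        funext a
        simp [v, dif_pos a.2]
      rw [this]; exact hu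
    · have h0 : v x = 0 := dif_neg hx
      unfold ContinuousAt
      rw [h0]
      have hpt : Tendsto p (𝓝 x) (𝓝 0) := by
        have := hp.continuousAt (x := x)
        rwa [ContinuousAt, hp0 x hx] at this
      exact squeeze_zero_norm hvb hpt
  exact ⟨⟨v, hcont⟩, fun x h => by simp [v, dif_pos h], fun x h => by simp [v, dif_neg h]⟩

lemma cozeroAux {X : Type*} [TopologicalSpace X] [NormalSpace X] {A : Set X}
    (hA : IsOpen A) (F : ℕ → Set X) (hFc : ∀ n, IsClosed (F n)) (hAF : A = ⋃ n, F n) :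
    ∃ p : C(X, ℝ), (∀ x, 0 ≤ p x) ∧ (∀ x ∉ A, p x = 0) ∧ (∀ x ∈ A, 0 < p x) := by
  have hsub : ∀ n, F n ⊆ A := fun n => hAF ▸ Set.subset_iUnion F n
  have hg : ∀ n : ℕ, ∃ g : C(X, ℝ), Set.EqOn g 0 Aᶜ ∧ Set.EqOn g 1 (F n) ∧
      ∀ x, g x ∈ Set.Icc (0:ℝ) 1 := by
    intro n
    exact exists_continuous_zero_one_of_isClosed (isClosed_compl_iff.mpr hA) (hFc n)
      (Set.disjoint_left.mpr fun x hx hx' => hx (hsub n hx'))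
  choose g hg0 hg1 hgI using hg
  set q : X → ℝ := fun x => ∑' n : ℕ, (1/2 : ℝ) ^ (n+1) * g n x with hq
  have hsumu : Summable (fun n : ℕ => (1/2 : ℝ) ^ (n+1)) := by
    have h0 := summable_geometric_of_lt_one (by norm_num : (0:ℝ) ≤ 1/2) (by norm_num)
    exact (h0.mul_left (1/2)).congr fun n => (pow_succ' (1/2:ℝ) n).symm
  have hbd : ∀ (n : ℕ) (x : X), ‖(1/2 : ℝ) ^ (n+1) * g n x‖ ≤ (1/2:ℝ) ^ (n+1) := by
    intro n x
    have h := hgI n x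
    rw [Real.norm_eq_abs, abs_mul, abs_of_nonneg (by positivity : (0:ℝ) ≤ (1/2:ℝ)^(n+1))]
    rw [abs_of_nonneg h.1]
    exact mul_le_of_le_one_right (by positivity) h.2
  have hqc : Continuous q :=
    continuous_tsum (fun n => continuous_const.mul (g n).continuous) hsumu hbd
  have hterm_nonneg : ∀ (x : X) (n : ℕ), 0 ≤ (1/2:ℝ)^(n+1) * g n x := by
    intro x n; have := (hgI n x).1; positivity
  have hsumx : ∀ x, Summable (fun n : ℕ => (1/2:ℝ)^(n+1) * g n x) := by
    intro x
    exact Summable.of_nonneg_of_le (hterm_nonneg x) (fun n => by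
      have := hbd n x; rwa [Real.norm_eq_abs, abs_of_nonneg (hterm_nonneg x n)] at this) hsumu
  refine ⟨⟨q, hqc⟩, ?_, ?_, ?_⟩
  · intro x; exact tsum_nonneg (hterm_nonneg x)
  · intro x hx
    have hz : (fun n : ℕ => (1/2:ℝ)^(n+1) * g n x) = fun _ => (0:ℝ) := by
      funext n; rw [hg0 n hx]; simp
    show (∑' n : ℕ, (1/2:ℝ)^(n+1) * g n x) = 0
    rw [hz, tsum_zero]
  · intro x hx
    obtain ⟨n, hn⟩ : ∃ n, x ∈ F n := by
      rw [hAF] at hx; exact Set.mem_iUnion.mp hx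
    have h1 : (1/2:ℝ)^(n+1) * g n x = (1/2:ℝ)^(n+1) := by rw [hg1 n hn]; simp
    calc (0:ℝ) < (1/2:ℝ)^(n+1) * g n x := by rw [h1]; positivity
    _ ≤ q x := Summable.le_tsum (hsumx x) n (fun j _ => hterm_nonneg x j)

lemma sepAux {Y : Type*} [TopologicalSpace Y] (hFS : IsFSpace Y)
    (a b : C(Y, ℝ)) (ha : ∀ x, 0 ≤ a x) (hb : ∀ x, 0 ≤ b x)
    (hab : ∀ x, a x * b x = 0) :
    ∃ φ : C(Y, ℝ), (∀ x, |φ x| ≤ 1) ∧ (∀ x, a x ≠ 0 → φ x = 1) ∧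
      (∀ x, b x ≠ 0 → φ x = -1) := by
  obtain ⟨k, hk⟩ := hFS (a - b)
  have hk' : ∀ x, a x - b x = k x * |a x - b x| := by
    intro x
    have := ContinuousMap.congr_fun hk x
    simpa [ContinuousMap.abs_apply] using this
  refine ⟨(k ⊓ 1) ⊔ (-1), ?_, ?_, ?_⟩
  · intro x
    simp only [ContinuousMap.sup_apply, ContinuousMap.inf_apply, ContinuousMap.one_apply,
      ContinuousMap.neg_apply]
    rw [abs_le]
    exact ⟨le_max_right _ _, max_le (min_le_right _ _) (by norm_num)⟩
  · intro x hax
    have hbx : b x = 0 := by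
      rcases mul_eq_zero.mp (hab x) with h | h
      · exact absurd h hax
      · exact h
    have h1 : k x = 1 := by
      have h := hk' x
      rw [hbx, sub_zero, abs_of_nonneg (ha x)] at h
      have : k x * a x = 1 * a x := by linarith
      exact mul_right_cancel₀ hax this
    simp only [ContinuousMap.sup_apply, ContinuousMap.inf_apply, ContinuousMap.one_apply,
      ContinuousMap.neg_apply, h1]
    norm_num
  · intro x hbx
    have hax : a x = 0 := by
      rcases mul_eq_zero.mp (hab x) with h | h
      · exact h
      · exact absurd h hbx
    have h1 : k x = -1 := by
      have h := hk' x
      rw [hax, zero_sub, abs_neg, abs_of_nonneg (hb x)] at h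
      have : k x * b x = (-1) * b x := by linarith
      exact mul_right_cancel₀ hbx this
    simp only [ContinuousMap.sup_apply, ContinuousMap.inf_apply, ContinuousMap.one_apply,
      ContinuousMap.neg_apply, h1]
    norm_num

/-- In an F-space, if `|η| ≤ e` pointwise with `e ≥ 0`, then `e` divides `η`. -/

lemma divAux {Y : Type*} [TopologicalSpace Y] (hFS : IsFSpace Y)
    (e η : C(Y, ℝ)) (he : ∀ x, 0 ≤ e x) (hle : ∀ x, |η x| ≤ e x) :
    ∃ k : C(Y, ℝ), ∀ x, η x = k x * e x := by
  classical
  have step : ∀ (n : ℕ) (k : BoundedContinuousFunction Y ℝ),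
      (∀ x, |η x - k x * e x| ≤ (2/3 : ℝ) ^ n * e x) →
      ∃ t : BoundedContinuousFunction Y ℝ, ‖t‖ ≤ (1/3 : ℝ) * (2/3) ^ n ∧
        ∀ x, |η x - (k + t) x * e x| ≤ (2/3 : ℝ) ^ (n+1) * e x := by
    intro n k hk
    set ε : ℝ := (2/3 : ℝ) ^ n with hε
    have hεpos : 0 < ε := by positivity
    have hε3 : (0:ℝ) < ε/3 := by positivity
    set δ : Y → ℝ := fun x => η x - k x * e x with hδ
    have hδc : Continuous δ := η.continuous.sub (k.continuous.mul e.continuous)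
    set a : C(Y, ℝ) := ⟨fun x => max (δ x - (ε/3) * e x) 0,
      ((hδc.sub (continuous_const.mul e.continuous)).max continuous_const)⟩ with hadef
    set b : C(Y, ℝ) := ⟨fun x => max (-(δ x) - (ε/3) * e x) 0,
      ((hδc.neg.sub (continuous_const.mul e.continuous)).max continuous_const)⟩ with hbdef
    have hane : ∀ x, a x ≠ 0 → (ε/3) * e x < δ x := by
      intro x hax
      by_contra hcon
      push_neg at hcon
      exact hax (max_eq_right (by linarith))
    have hbne : ∀ x, b x ≠ 0 → δ x < -((ε/3) * e x) := by
      intro x hbx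
      by_contra hcon
      push_neg at hcon
      exact hbx (max_eq_right (by linarith))
    obtain ⟨φ, hφ1, hφa, hφb⟩ := sepAux hFS a b
      (fun x => le_max_right _ _) (fun x => le_max_right _ _)
      (by
        intro x
        by_cases hax : a x = 0
        · rw [hax, zero_mul]
        · have h1 := hane x hax
          have h2 : 0 ≤ (ε/3) * e x := mul_nonneg hε3.le (he x)
          have : b x = 0 := max_eq_right (by linarith)
          rw [this, mul_zero])
    have htbnd : ∀ x, ‖(ε/3) * φ x‖ ≤ (1/3 : ℝ) * (2/3) ^ n := by
      intro x
      rw [Real.norm_eq_abs, abs_mul, abs_of_nonneg hε3.le]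
      calc ε/3 * |φ x| ≤ ε/3 * 1 := by nlinarith [hφ1 x]
        _ = (1/3) * (2/3)^n := by rw [hε]; ring
    set t : BoundedContinuousFunction Y ℝ :=
      BoundedContinuousFunction.ofNormedAddCommGroup (fun x => (ε/3) * φ x)
        (continuous_const.mul φ.continuous) ((1/3) * (2/3)^n) htbnd with htdef
    refine ⟨t, (BoundedContinuousFunction.norm_le (by positivity)).mpr
      (fun x => htbnd x), ?_⟩
    intro x
    have hδx : δ x = η x - k x * e x := rfl
    have hd1 : -(ε * e x) ≤ δ x := by
      rw [hδx]; linarith [(abs_le.mp (hk x)).1]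
    have hd2 : δ x ≤ ε * e x := by
      rw [hδx]; linarith [(abs_le.mp (hk x)).2]
    have hr2 : (2/3:ℝ)^(n+1) * e x = 2/3 * (ε * e x) := by rw [hε]; ring
    have htx : (k + t) x * e x = k x * e x + ε/3 * φ x * e x := by
      rw [BoundedContinuousFunction.add_apply]
      have : t x = ε/3 * φ x := rfl
      rw [this]; ring
    rw [htx]
    have habs : |η x - (k x * e x + ε/3 * φ x * e x)| = |δ x - ε/3 * φ x * e x| := by
      rw [hδx]; ring_nf
    rw [habs, hr2]
    have hP : 0 ≤ ε * e x := mul_nonneg hεpos.le (he x)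
    have hr1 : ε/3 * e x = 1/3 * (ε * e x) := by ring
    by_cases hax : a x = 0
    · by_cases hbx : b x = 0
      · have h1 : δ x ≤ ε/3 * e x := by
          by_contra hcon
          push_neg at hcon
          have h0 : (0:ℝ) = δ x - ε/3 * e x := by
            rw [← hax]; exact max_eq_left (by linarith)
          linarith
        have h2 : -(ε/3 * e x) ≤ δ x := by
          by_contra hcon
          push_neg at hcon
          have h0 : (0:ℝ) = -(δ x) - ε/3 * e x := by
            rw [← hbx]; exact max_eq_left (by linarith)
          linarith
        have h3 : |ε/3 * φ x * e x| ≤ ε/3 * e x := by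
          rw [abs_mul, abs_mul, abs_of_nonneg hε3.le, abs_of_nonneg (he x)]
          nlinarith [hφ1 x, he x]
        have h3' := abs_le.mp h3
        rw [abs_le]
        constructor <;> linarith [h3'.1, h3'.2]
      · have hφx : φ x = -1 := hφb x hbx
        have h1 := hbne x hbx
        rw [hφx, abs_le]
        constructor <;> [linarith; nlinarith [he x, hεpos]]
    · have hφx : φ x = 1 := hφa x hax
      have h1 := hane x hax
      rw [hφx, abs_le]
      constructor <;> [nlinarith [he x, hεpos]; linarith]
  -- build the sequence of approximations
  have base : ∀ x, |η x - (0 : BoundedContinuousFunction Y ℝ) x * e x| ≤ (2/3:ℝ)^0 * e x := by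
    intro x
    simpa using hle x
  let G : ∀ n : ℕ, {k : BoundedContinuousFunction Y ℝ //
      ∀ x, |η x - k x * e x| ≤ (2/3:ℝ)^n * e x} :=
    fun n => Nat.rec ⟨0, base⟩
      (fun n p => ⟨p.1 + Classical.choose (step n p.1 p.2),
        (Classical.choose_spec (step n p.1 p.2)).2⟩) n
  have hGdist : ∀ n, dist ((G n).1) ((G (n+1)).1) ≤ (1/3 : ℝ) * (2/3) ^ n := by
    intro n
    have hGn1 : (G (n+1)).1 = (G n).1 + Classical.choose (step n (G n).1 (G n).2) := rfl
    rw [hGn1, dist_eq_norm]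
    have : (G n).1 - ((G n).1 + Classical.choose (step n (G n).1 (G n).2)) =
        -(Classical.choose (step n (G n).1 (G n).2)) := by ring
    rw [this, norm_neg]
    exact (Classical.choose_spec (step n (G n).1 (G n).2)).1
  have hcauchy : CauchySeq (fun n => (G n).1) :=
    cauchySeq_of_le_geometric (2/3) (1/3) (by norm_num) hGdist
  obtain ⟨L, hL⟩ := cauchySeq_tendsto_of_complete hcauchy
  refine ⟨⟨L, L.continuous⟩, ?_⟩
  intro x
  have hev : Filter.Tendsto (fun n => (G n).1 x) Filter.atTop (nhds (L x)) := by
    have hc : Continuous (fun f : BoundedContinuousFunction Y ℝ => f x) :=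
      continuous_eval_const x
    exact (hc.tendsto L).comp hL
  have h1 : Filter.Tendsto (fun n => η x - (G n).1 x * e x) Filter.atTop
      (nhds (η x - L x * e x)) :=
    tendsto_const_nhds.sub (hev.mul tendsto_const_nhds)
  have h2 : Filter.Tendsto (fun n => η x - (G n).1 x * e x) Filter.atTop (nhds 0) := by
    have hnorm : ∀ n : ℕ, ‖η x - (G n).1 x * e x‖ ≤ (2/3:ℝ)^n * e x := fun n => by
      rw [Real.norm_eq_abs]; exact (G n).2 x
    have hten : Filter.Tendsto (fun n : ℕ => (2/3:ℝ)^n * e x) Filter.atTop (nhds 0) := by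
      have := (tendsto_pow_atTop_nhds_zero_of_lt_one (by norm_num : (0:ℝ) ≤ 2/3)
        (by norm_num)).mul (tendsto_const_nhds (x := e x))
      simpa using this
    exact squeeze_zero_norm hnorm hten
  have h3 : η x - L x * e x = 0 := tendsto_nhds_unique h1 h2
  have : η x = L x * e x := by linarith
  simpa [ContinuousMap.coe_mk] using this

lemma fwdAux (g : C(X, ℂ)) (hg0 : g ≠ 0)
    (hloc : ∀ f : C(X, ℂ), ∃ h : C(X, ℂ), g * star f = h * f) :
    ∃ A : Set X, A.Nonempty ∧ IsOpen A ∧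
      (∃ F : ℕ → Set X, (∀ n, IsClosed (F n)) ∧ A = ⋃ n, F n) ∧ IsFSpace A := by
  classical
  set A : Set X := {x | g x ≠ 0} with hAdef
  have hmem : ∀ x, x ∈ A ↔ g x ≠ 0 := fun x => Iff.rfl
  refine ⟨A, ?_, ?_, ?_, ?_⟩
  · -- nonempty
    by_contra hne
    rw [Set.not_nonempty_iff_eq_empty] at hne
    apply hg0
    ext x
    have : x ∉ A := hne ▸ Set.notMem_empty x
    simpa [hmem x, not_not] using this
  · -- open
    have : A = (⇑g) ⁻¹' ({0}ᶜ) := rfl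
    rw [this]
    exact (isOpen_compl_singleton).preimage g.continuous
  · -- Fσ
    refine ⟨fun n => {x | 1/((n:ℝ)+1) ≤ ‖g x‖}, ?_, ?_⟩
    · intro n
      exact isClosed_le continuous_const (g.continuous.norm)
    · ext x
      simp only [Set.mem_iUnion, Set.mem_setOf_eq, hmem x]
      constructor
      · intro hx
        have hpos : 0 < ‖g x‖ := norm_pos_iff.mpr hx
        obtain ⟨n, hn⟩ := exists_nat_one_div_lt hpos
        exact ⟨n, hn.le⟩
      · rintro ⟨n, hn⟩
        have : (0:ℝ) < 1/((n:ℝ)+1) := by positivity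
        exact norm_pos_iff.mp (lt_of_lt_of_le this hn)
  · -- F-space
    intro f
    set f₁ : C(↑A, ℝ) := ⟨fun x => f x / (1 + |f x|),
      f.continuous.div (continuous_const.add (continuous_abs.comp f.continuous))
        (fun x => by positivity)⟩ with hf₁def
    have hden : ∀ x : ↑A, (0:ℝ) < 1 + |f x| := fun x => by positivity
    have hb : ∀ x : ↑A, |f₁ x| ≤ 1 := by
      intro x
      show |f x / (1 + |f x|)| ≤ 1
      rw [abs_div, abs_of_pos (hden x), div_le_one (hden x)]
      linarith [abs_nonneg (f x)]
    set u : ↑A → ℂ := fun x => (‖g x.1‖ : ℂ) * ((f₁ x : ℂ) + (|f₁ x| : ℝ) * Complex.I)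
      with hudef
    have hu : Continuous u := by
      apply Continuous.mul
      · exact Complex.continuous_ofReal.comp
          ((g.continuous.comp continuous_subtype_val).norm)
      · apply Continuous.add
        · exact Complex.continuous_ofReal.comp f₁.continuous
        · exact (Complex.continuous_ofReal.comp (continuous_abs.comp f₁.continuous)).mul
            continuous_const
    have hub : ∀ x : ↑A, ‖u x‖ ≤ 2 * ‖g x.1‖ := by
      intro x
      rw [hudef]
      simp only []
      rw [norm_mul, Complex.norm_real, Real.norm_eq_abs, abs_norm]
      have h1 : ‖(f₁ x : ℂ) + (|f₁ x| : ℝ) * Complex.I‖ ≤ 2 := by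
        calc ‖(f₁ x : ℂ) + (|f₁ x| : ℝ) * Complex.I‖
            ≤ ‖(f₁ x : ℂ)‖ + ‖((|f₁ x| : ℝ) : ℂ) * Complex.I‖ := norm_add_le _ _
          _ = |f₁ x| + |f₁ x| := by
              rw [norm_mul, Complex.norm_real, Complex.norm_I, mul_one,
                Complex.norm_real, Real.norm_eq_abs, Real.norm_eq_abs, abs_abs]
          _ ≤ 2 := by linarith [hb x]
      calc ‖g x.1‖ * ‖(f₁ x : ℂ) + (|f₁ x| : ℝ) * Complex.I‖ ≤ ‖g x.1‖ * 2 :=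
            mul_le_mul_of_nonneg_left h1 (norm_nonneg _)
        _ = 2 * ‖g x.1‖ := by ring
    obtain ⟨w, hw1, hw2⟩ := extZeroAux (A := A)
      (by rw [show A = (⇑g) ⁻¹' ({0}ᶜ) from rfl];
          exact (isOpen_compl_singleton).preimage g.continuous)
      (fun x => 2 * ‖g x‖) (continuous_const.mul g.continuous.norm)
      (fun x hx => by
        have hgz : g x = 0 := not_not.mp hx
        show 2 * ‖g x‖ = 0
        rw [hgz]; simp)
      u hu hub
    obtain ⟨h, hh⟩ := hloc w
    set k : C(↑A, ℝ) := ⟨fun x => (Complex.I * h x.1 / g x.1).re,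
      Complex.continuous_re.comp
        (((continuous_const.mul (h.continuous.comp continuous_subtype_val)).div
          (g.continuous.comp continuous_subtype_val) (fun x => x.2)))⟩ with hkdef
    refine ⟨k, ?_⟩
    ext x
    rw [ContinuousMap.mul_apply, ContinuousMap.abs_apply]
    show f x = k x * |f x|
    by_cases hfx : f x = 0
    · rw [hfx]; simp
    · have hgx : g x.1 ≠ 0 := x.2
      have hgnorm : (0:ℝ) < ‖g x.1‖ := norm_pos_iff.mpr hgx
      have hcne : f₁ x ≠ 0 := by
        show f x / (1 + |f x|) ≠ 0
        exact div_ne_zero hfx (ne_of_gt (hden x))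
      -- pointwise equation
      have heq : g x.1 * star (w x.1) = h x.1 * w x.1 := by
        have := ContinuousMap.congr_fun hh x.1
        simpa [ContinuousMap.mul_apply, ContinuousMap.star_apply] using this
      have hwx : w x.1 = u x := by
        have := hw1 x.1 x.2
        simpa using this
      have h1I : (1 + Complex.I) ≠ 0 := by
        intro H
        have := congrArg Complex.re H
        simp at this
      have h1I' : (1 - Complex.I) ≠ 0 := by
        intro H
        have := congrArg Complex.re H
        simp at this
      rcases lt_or_gt_of_ne hfx with hneg | hpos
      · -- f x < 0
        have hcneg : f₁ x < 0 := div_neg_of_neg_of_pos hneg (hden x)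
        have habs : |f₁ x| = -(f₁ x) := abs_of_neg hcneg
        set r : ℝ := ‖g x.1‖ * f₁ x with hrdef
        have hrne : (r : ℂ) ≠ 0 := by
          simp only [ne_eq, Complex.ofReal_eq_zero]
          exact ne_of_lt (mul_neg_of_pos_of_neg hgnorm hcneg)
        have hux : u x = (r : ℂ) * (1 - Complex.I) := by
          rw [hudef]
          simp only [habs, hrdef]
          push_cast
          ring
        have hstar : star (w x.1) = (r : ℂ) * (1 + Complex.I) := by
          rw [hwx, hux, star_mul']
          have e1 : star ((r:ℂ)) = (r:ℂ) := by rw [Complex.star_def, Complex.conj_ofReal]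
          have e2 : star (1 - Complex.I) = 1 + Complex.I := by
            rw [Complex.star_def, map_sub, map_one, Complex.conj_I]; ring
          rw [e1, e2]
        have heq2 : g x.1 * (1 + Complex.I) = h x.1 * (1 - Complex.I) := by
          have := heq
          rw [hstar, hwx, hux] at this
          have h3 : (r:ℂ) * (g x.1 * (1 + Complex.I)) = (r:ℂ) * (h x.1 * (1 - Complex.I)) := by
            ring_nf
            ring_nf at this
            linear_combination this
          exact mul_left_cancel₀ hrne h3
        have hhval : h x.1 = Complex.I * g x.1 := by
          apply mul_right_cancel₀ h1I'
          rw [← heq2]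
          linear_combination (g x.1) * Complex.I_sq
        have hkval : k x = -1 := by
          show (Complex.I * h x.1 / g x.1).re = -1
          rw [hhval]
          have : Complex.I * (Complex.I * g x.1) / g x.1 = -1 := by
            field_simp
            linear_combination Complex.I_sq
          rw [this]
          simp
        rw [hkval, abs_of_neg hneg]
        ring
      · -- f x > 0
        have hcpos : 0 < f₁ x := div_pos hpos (hden x)
        have habs : |f₁ x| = f₁ x := abs_of_pos hcpos
        set r : ℝ := ‖g x.1‖ * f₁ x with hrdef
        have hrne : (r : ℂ) ≠ 0 := by
          simp only [ne_eq, Complex.ofReal_eq_zero]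
          exact ne_of_gt (mul_pos hgnorm hcpos)
        have hux : u x = (r : ℂ) * (1 + Complex.I) := by
          rw [hudef]
          simp only [habs, hrdef]
          push_cast
          ring
        have hstar : star (w x.1) = (r : ℂ) * (1 - Complex.I) := by
          rw [hwx, hux, star_mul']
          have e1 : star ((r:ℂ)) = (r:ℂ) := by rw [Complex.star_def, Complex.conj_ofReal]
          have e2 : star (1 + Complex.I) = 1 - Complex.I := by
            rw [Complex.star_def, map_add, map_one, Complex.conj_I]; ring
          rw [e1, e2]
        have heq2 : g x.1 * (1 - Complex.I) = h x.1 * (1 + Complex.I) := by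
          have := heq
          rw [hstar, hwx, hux] at this
          have h3 : (r:ℂ) * (g x.1 * (1 - Complex.I)) = (r:ℂ) * (h x.1 * (1 + Complex.I)) := by
            ring_nf
            ring_nf at this
            linear_combination this
          exact mul_left_cancel₀ hrne h3
        have hhval : h x.1 = -Complex.I * g x.1 := by
          apply mul_right_cancel₀ h1I
          rw [← heq2]
          linear_combination (g x.1) * Complex.I_sq
        have hkval : k x = 1 := by
          show (Complex.I * h x.1 / g x.1).re = 1
          rw [hhval]
          have : Complex.I * (-Complex.I * g x.1) / g x.1 = 1 := by
            field_simp
            linear_combination (-1 : ℂ) * Complex.I_sq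
          rw [this]
          simp
        rw [hkval, abs_of_pos hpos]
        ring

lemma revAux [CompactSpace X] [T2Space X] {A : Set X} (hne : A.Nonempty)
    (hAopen : IsOpen A) (F : ℕ → Set X) (hFc : ∀ n, IsClosed (F n)) (hAF : A = ⋃ n, F n)
    (hFS : IsFSpace ↑A) :
    ∃ g : C(X, ℂ), g ≠ 0 ∧ ∀ f : C(X, ℂ), ∃ h : C(X, ℂ), g * star f = h * f := by
  classical
  obtain ⟨x₀, hx₀⟩ := hne
  obtain ⟨p, hp0, hpz, hppos⟩ := cozeroAux hAopen F hFc hAF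
  set g : C(X, ℂ) := ⟨fun x => (p x : ℂ), Complex.continuous_ofReal.comp p.continuous⟩
    with hgdef
  have hgx : ∀ x, g x = (p x : ℂ) := fun x => rfl
  refine ⟨g, ?_, ?_⟩
  · intro hzero
    have := ContinuousMap.congr_fun hzero x₀
    rw [hgx] at this
    simp only [ContinuousMap.zero_apply, Complex.ofReal_eq_zero] at this
    exact (ne_of_gt (hppos x₀ hx₀)) this
  · intro f
    set e : C(↑A, ℝ) := ⟨fun a => ‖f a.1‖,
      (f.continuous.comp continuous_subtype_val).norm⟩ with hedef
    set η₁ : C(↑A, ℝ) := ⟨fun a => (f a.1).re,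
      Complex.continuous_re.comp (f.continuous.comp continuous_subtype_val)⟩ with hη₁def
    set η₂ : C(↑A, ℝ) := ⟨fun a => (f a.1).im,
      Complex.continuous_im.comp (f.continuous.comp continuous_subtype_val)⟩ with hη₂def
    have hee : ∀ a : ↑A, 0 ≤ e a := fun a => by show (0:ℝ) ≤ ‖f a.1‖; exact norm_nonneg _
    obtain ⟨a, haA⟩ := divAux hFS e η₁ hee (fun x => by
      show |(f x.1).re| ≤ ‖f x.1‖
      exact Complex.abs_re_le_norm _)
    obtain ⟨b, hbA⟩ := divAux hFS e η₂ hee (fun x => by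
      show |(f x.1).im| ≤ ‖f x.1‖
      exact Complex.abs_im_le_norm _)
    set a' : ↑A → ℝ := fun x => max (-1) (min 1 (a x)) with ha'def
    set b' : ↑A → ℝ := fun x => max (-1) (min 1 (b x)) with hb'def
    have ha'c : Continuous a' := continuous_const.max (continuous_const.min a.continuous)
    have hb'c : Continuous b' := continuous_const.max (continuous_const.min b.continuous)
    have htrunc : ∀ (c : C(↑A, ℝ)) (η : C(↑A, ℝ)), (∀ x, η x = c x * e x) →
        (∀ x, |η x| ≤ e x) →
        ∀ x : ↑A, η x = (max (-1) (min 1 (c x))) * e x ∧ |max (-1) (min 1 (c x))| ≤ 1 := by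
      intro c η hcη hηe x
      constructor
      · by_cases he0 : e x = 0
        · rw [he0, mul_zero, hcη x, he0, mul_zero]
        · have hepos : 0 < e x := lt_of_le_of_ne (hee x) (Ne.symm he0)
          have hc1 : |c x| ≤ 1 := by
            have h1 : |c x| * e x = |η x| := by
              rw [hcη x, abs_mul, abs_of_pos hepos]
            have h2 : |c x| * e x ≤ 1 * e x := by
              rw [h1, one_mul]; exact hηe x
            exact le_of_mul_le_mul_right h2 hepos
          have := abs_le.mp hc1
          rw [min_eq_right this.2, max_eq_right this.1]
          exact hcη x
      · rw [abs_le]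
        constructor
        · exact le_max_left _ _
        · exact max_le (by norm_num) (min_le_left _ _)
    have ha' : ∀ x : ↑A, η₁ x = a' x * e x ∧ |a' x| ≤ 1 :=
      htrunc a η₁ haA (fun x => by
        show |(f x.1).re| ≤ ‖f x.1‖
        exact Complex.abs_re_le_norm _)
    have hb' : ∀ x : ↑A, η₂ x = b' x * e x ∧ |b' x| ≤ 1 :=
      htrunc b η₂ hbA (fun x => by
        show |(f x.1).im| ≤ ‖f x.1‖
        exact Complex.abs_im_le_norm _)
    set u : ↑A → ℂ := fun x => (p x.1 : ℂ) * ((a' x : ℂ) - (b' x : ℂ) * Complex.I) ^ 2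
      with hudef
    have hu : Continuous u := by
      apply Continuous.mul
      · exact Complex.continuous_ofReal.comp (p.continuous.comp continuous_subtype_val)
      · exact ((Complex.continuous_ofReal.comp ha'c).sub
          ((Complex.continuous_ofReal.comp hb'c).mul continuous_const)).pow 2
    have hub : ∀ x : ↑A, ‖u x‖ ≤ 2 * p x.1 := by
      intro x
      rw [hudef]
      simp only []
      rw [norm_mul, norm_pow, Complex.norm_real, Real.norm_eq_abs,
        abs_of_nonneg (hp0 x.1)]
      have hsq : ‖(a' x : ℂ) - (b' x : ℂ) * Complex.I‖ ^ 2 ≤ 2 := by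
        have hz : ((a' x : ℂ) - (b' x : ℂ) * Complex.I) =
            Complex.mk (a' x) (-(b' x)) := by
          apply Complex.ext <;> simp
        rw [hz]
        rw [Complex.sq_norm, Complex.normSq_mk]
        nlinarith [(ha' x).2, (hb' x).2, abs_le.mp (ha' x).2, abs_le.mp (hb' x).2]
      calc p x.1 * ‖(a' x : ℂ) - (b' x : ℂ) * Complex.I‖ ^ 2 ≤ p x.1 * 2 :=
            mul_le_mul_of_nonneg_left hsq (hp0 x.1)
        _ = 2 * p x.1 := by ring
    obtain ⟨w, hw1, hw2⟩ := extZeroAux hAopen (fun x => 2 * p x)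
      (continuous_const.mul p.continuous)
      (fun x hx => by show 2 * p x = 0; rw [hpz x hx]; ring) u hu hub
    refine ⟨w, ?_⟩
    ext x
    rw [ContinuousMap.mul_apply, ContinuousMap.mul_apply, ContinuousMap.star_apply]
    by_cases hx : x ∈ A
    · rw [hw1 x hx]
      set xa : ↑A := ⟨x, hx⟩ with hxadef
      by_cases hfx : f x = 0
      · rw [hgx, hfx]
        simp only [star_zero, mul_zero]
      · have hex : e xa ≠ 0 := by
          show ‖f x‖ ≠ 0
          simpa using hfx
        set m : ℂ := (a' xa : ℂ) + (b' xa : ℂ) * Complex.I with hmdef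
        have hfm : f x = m * (e xa : ℂ) := by
          apply Complex.ext
          · simp only [hmdef, Complex.add_re, Complex.mul_re, Complex.ofReal_re,
              Complex.ofReal_im, Complex.I_re, Complex.I_im, Complex.mul_im]
            have := (ha' xa).1
            simp only [hη₁def, ContinuousMap.coe_mk] at this
            rw [this]; ring
          · simp only [hmdef, Complex.add_im, Complex.mul_re, Complex.ofReal_re,
              Complex.ofReal_im, Complex.I_re, Complex.I_im, Complex.mul_im]
            have := (hb' xa).1
            simp only [hη₂def, ContinuousMap.coe_mk] at this
            rw [this]; ring
        have hm1 : (starRingEnd ℂ) m * m = 1 := by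
          have hnm : ‖m‖ = 1 := by
            have h1 : ‖f x‖ = ‖m‖ * e xa := by
              rw [hfm, norm_mul, Complex.norm_real, Real.norm_eq_abs,
                abs_of_nonneg (hee xa)]
            have h2 : e xa = ‖m‖ * e xa := by
              show ‖f x‖ = ‖m‖ * e xa
              exact h1
            have hepos : 0 < e xa := lt_of_le_of_ne (hee xa) (Ne.symm hex)
            nlinarith [h2]
          have hns : ((Complex.normSq m : ℝ) : ℂ) = 1 := by
            rw [← Complex.sq_norm, hnm]
            norm_num
          rw [← Complex.normSq_eq_conj_mul_self]
          exact hns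
        have hcm : (starRingEnd ℂ) m = (a' xa : ℂ) - (b' xa : ℂ) * Complex.I := by
          rw [hmdef, map_add, map_mul, Complex.conj_I, Complex.conj_ofReal,
            Complex.conj_ofReal]
          ring
        have hstarfm : star (f x) = (starRingEnd ℂ) m * (e xa : ℂ) := by
          rw [hfm, star_mul']
          have e1 : star ((e xa : ℝ) : ℂ) = ((e xa : ℝ) : ℂ) := by
            rw [Complex.star_def, Complex.conj_ofReal]
          have e2 : star m = (starRingEnd ℂ) m := rfl
          rw [e1, e2]
        have hkey : ((a' xa : ℂ) - (b' xa : ℂ) * Complex.I) ^ 2 * f x = star (f x) := by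
          rw [← hcm, hstarfm, hfm]
          calc ((starRingEnd ℂ) m) ^ 2 * (m * (e xa : ℂ))
              = (starRingEnd ℂ) m * (((starRingEnd ℂ) m * m) * (e xa : ℂ)) := by ring
            _ = (starRingEnd ℂ) m * (e xa : ℂ) := by rw [hm1, one_mul]
        show (p x : ℂ) * star (f x) =
          (p x : ℂ) * ((a' xa : ℂ) - (b' xa : ℂ) * Complex.I) ^ 2 * f x
        rw [← hkey]
        ring
    · rw [hw2 x hx, hgx, hpz x hx]
      simp

end Aux

theorem stmt11 {X : Type*} [TopologicalSpace X] [CompactSpace X] [T2Space X] :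
    (∃ g : C(X, ℂ), g ≠ 0 ∧ ∀ f : C(X, ℂ), ∃ h : C(X, ℂ), g * star f = h * f) ↔
    (∃ A : Set X, A.Nonempty ∧ IsOpen A ∧
      (∃ F : ℕ → Set X, (∀ n, IsClosed (F n)) ∧ A = ⋃ n, F n) ∧
      IsFSpace A) := by
  constructor
  · rintro ⟨g, hg0, hloc⟩
    exact fwdAux g hg0 hloc
  · rintro ⟨A, hne, hAopen, ⟨F, hFc, hAF⟩, hFS⟩
    exact revAux hne hAopen F hFc hAF hFS
end

section
/- Let X be a compact Hausdorff space. Then no nonempty open F_σ subset of X is an F-space if and only if every ℝ-linear local multiplication on C(X) is a multiplication. -/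
open Complex Filter Topology

noncomputable section

lemma smul_ext_continuous {Y E : Type*} [TopologicalSpace Y] [NormedAddCommGroup E]
    [NormedSpace ℝ E] {a : Y → ℝ} (ha : Continuous a) {σ : Y → E} {C : ℝ}
    (hσ : ContinuousOn σ {y | a y ≠ 0}) (hC : ∀ y, ‖σ y‖ ≤ C) :
    Continuous fun y => a y • σ y := by
  rw [continuous_iff_continuousAt]
  intro y
  by_cases h : a y ≠ 0
  · have hopen : IsOpen {y | a y ≠ 0} := isOpen_compl_singleton.preimage ha
    exact ha.continuousAt.smul (hσ.continuousAt (hopen.mem_nhds h))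
  · push_neg at h
    have h0 : (fun z => a z • σ z) y = 0 := by simp [h]
    unfold ContinuousAt
    rw [show (fun y => a y • σ y) y = (0:E) from h0]
    apply squeeze_zero_norm (a := fun z => |a z| * C)
    · intro z
      rw [norm_smul, Real.norm_eq_abs]
      exact mul_le_mul_of_nonneg_left (hC z) (abs_nonneg _)
    · have : Tendsto (fun z => |a z| * C) (𝓝 y) (𝓝 (|a y| * C)) :=
        (ha.abs.tendsto y).mul tendsto_const_nhds
      simpa [h] using this

lemma fspace_step {A : Type*} [TopologicalSpace A]
    (hFsp : ∀ φ : C(A, ℝ), ∃ κ : C(A, ℝ), φ = κ * |φ|)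
    (a : A → ℝ) (ha : Continuous a) (hapos : ∀ x, 0 ≤ a x)
    (ψ : {x : A // a x ≠ 0} → ℝ) (hψ : Continuous ψ)
    (M : ℝ) (hM : 0 ≤ M) (hb : ∀ s, |ψ s| ≤ M) :
    ∃ φ : C(A, ℝ), (∀ x, |φ x| ≤ M / 3) ∧
      ∀ s : {x : A // a x ≠ 0}, |ψ s - φ ↑s| ≤ 2 / 3 * M := by
  rcases eq_or_lt_of_le hM with hM0 | hMpos
  · refine ⟨0, fun x => by simpa using div_nonneg hM (by norm_num), fun s => ?_⟩
    have := hb s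
    simp only [ContinuousMap.zero_apply, sub_zero]
    linarith
  · set σ : {x : A // a x ≠ 0} → ℝ := fun s => max (-1) (min 1 (3 / M * ψ s)) with hσdef
    have hσcont : Continuous σ := (continuous_const.max (continuous_const.min
      (continuous_const.mul hψ)))
    have hσbd : ∀ s, |σ s| ≤ 1 := by
      intro s
      rw [abs_le]
      constructor
      · exact le_max_left _ _
      · exact max_le (by norm_num) (min_le_left _ _)
    set σ' : A → ℝ := fun x => if h : a x ≠ 0 then σ ⟨x, h⟩ else 0 with hσ'def
    have hres : Set.domRestrict {x | a x ≠ 0} σ' = σ := by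
      funext s
      exact dif_pos s.2
    have hσ'cont : ContinuousOn σ' {x | a x ≠ 0} := by
      rw [continuousOn_iff_continuous_restrict, hres]
      exact hσcont
    have hσ'bd : ∀ x, ‖σ' x‖ ≤ 1 := by
      intro x
      rw [Real.norm_eq_abs]
      show |if h : a x ≠ 0 then σ ⟨x, h⟩ else 0| ≤ 1
      split_ifs with h
      · exact hσbd _
      · norm_num
    set τ : C(A, ℝ) := ⟨fun x => a x • σ' x, smul_ext_continuous ha hσ'cont hσ'bd⟩ with hτdef
    obtain ⟨κ, hκ⟩ := hFsp τ
    refine ⟨⟨fun x => M / 3 * max (-1) (min 1 (κ x)), by fun_prop⟩, ?_, ?_⟩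
    · intro x
      simp only [ContinuousMap.coe_mk]
      rw [abs_mul, _root_.abs_of_nonneg (by linarith : (0:ℝ) ≤ M / 3)]
      have h1 : |max (-1) (min 1 (κ x))| ≤ 1 := by
        rw [abs_le]
        exact ⟨le_max_left _ _, max_le (by norm_num) (min_le_left _ _)⟩
      nlinarith [abs_nonneg (max (-1) (min 1 (κ x)))]
    · intro s
      have hbs := hb s
      have haspos : 0 < a ↑s := lt_of_le_of_ne (hapos ↑s) (Ne.symm s.2)
      have hκs : τ ↑s = κ ↑s * |τ ↑s| := by
        have := ContinuousMap.congr_fun hκ ↑s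
        simpa [ContinuousMap.abs_apply] using this
      have hτs : τ ↑s = a ↑s * σ s := by
        show a ↑s • (if h : a ↑s ≠ 0 then σ ⟨↑s, h⟩ else 0) = a ↑s * σ s
        rw [dif_pos s.2, smul_eq_mul]
      simp only [ContinuousMap.coe_mk]
      rcases le_or_gt (M / 3) (ψ s) with hc | hc
      · -- σ s = 1, τ > 0, κ = 1
        have hσs : σ s = 1 := by
          have : (1:ℝ) ≤ 3 / M * ψ s := by
            rw [div_mul_eq_mul_div, le_div_iff₀ hMpos]
            linarith
          simp [hσdef, min_eq_left this]
        have hτpos : 0 < τ ↑s := by rw [hτs, hσs]; linarith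
        have hκ1 : κ ↑s = 1 := by
          rw [abs_of_pos hτpos] at hκs
          have h' : κ ↑s * τ ↑s = 1 * τ ↑s := by rw [one_mul]; linarith
          exact mul_right_cancel₀ (ne_of_gt hτpos) h'
        rw [hκ1]
        have : max (-1) (min 1 (1:ℝ)) = 1 := by norm_num
        rw [this]
        rw [abs_le]
        constructor <;> [linarith [hb s]; linarith [abs_le.mp (hb s)]]
      · rcases le_or_gt (ψ s) (-(M / 3)) with hc2 | hc2
        · have hσs : σ s = -1 := by
            have : 3 / M * ψ s ≤ -1 := by
              rw [div_mul_eq_mul_div, div_le_iff₀ hMpos]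
              linarith
            have hmin : min 1 (3 / M * ψ s) = 3 / M * ψ s := min_eq_right (by linarith)
            simp only [hσdef, hmin]
            exact max_eq_left this
          have hτneg : τ ↑s < 0 := by rw [hτs, hσs]; nlinarith
          have hκ1 : κ ↑s = -1 := by
            rw [abs_of_neg hτneg] at hκs
            ring_nf at hκs
            have h' : κ ↑s * τ ↑s = (-1) * τ ↑s := by nlinarith [hκs]
            exact mul_right_cancel₀ (ne_of_lt hτneg) h'
          rw [hκ1]
          have : max (-1) (min 1 (-1:ℝ)) = -1 := by norm_num
          rw [this]
          rw [abs_le]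
          constructor <;> [linarith [abs_le.mp (hb s)]; linarith [abs_le.mp (hb s)]]
        · -- middle case
          have h1 : |M / 3 * max (-1) (min 1 (κ ↑s))| ≤ M / 3 := by
            rw [abs_mul, _root_.abs_of_nonneg (by linarith : (0:ℝ) ≤ M / 3)]
            have : |max (-1) (min 1 (κ ↑s))| ≤ 1 :=
              abs_le.mpr ⟨le_max_left _ _, max_le (by norm_num) (min_le_left _ _)⟩
            nlinarith [abs_nonneg (max (-1) (min 1 (κ ↑s)))]
          have h2 : |ψ s| ≤ M / 3 := abs_le.mpr ⟨by linarith, by linarith⟩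
          calc |ψ s - M / 3 * max (-1) (min 1 (κ ↑s))| ≤ |ψ s| + |M / 3 * max (-1) (min 1 (κ ↑s))| := abs_sub _ _
            _ ≤ 2 / 3 * M := by linarith

lemma fspace_extend {A : Type*} [TopologicalSpace A]
    (hFsp : ∀ φ : C(A, ℝ), ∃ κ : C(A, ℝ), φ = κ * |φ|)
    (a : A → ℝ) (ha : Continuous a) (hapos : ∀ x, 0 ≤ a x)
    (ψ : {x : A // a x ≠ 0} → ℝ) (hψ : Continuous ψ)
    (M : ℝ) (hM : 0 ≤ M) (hb : ∀ s, |ψ s| ≤ M) :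
    ∃ Φ : BoundedContinuousFunction A ℝ, ∀ s : {x : A // a x ≠ 0}, Φ ↑s = ψ s := by
  have key : ∀ (n : ℕ) (p : BoundedContinuousFunction A ℝ),
      (∀ s : {x : A // a x ≠ 0}, |ψ s - p ↑s| ≤ (2/3)^n * M) →
      ∃ q : BoundedContinuousFunction A ℝ,
        (∀ s : {x : A // a x ≠ 0}, |ψ s - q ↑s| ≤ (2/3)^(n+1) * M) ∧
        dist p q ≤ (2/3)^n * M := by
    intro n p hp
    have hM' : (0:ℝ) ≤ (2/3)^n * M := by positivity
    obtain ⟨φ, hφ1, hφ2⟩ := fspace_step hFsp a ha hapos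
      (fun s => ψ s - p ↑s) (hψ.sub (p.continuous.comp continuous_subtype_val))
      ((2/3)^n * M) hM' hp
    set φb : BoundedContinuousFunction A ℝ :=
      BoundedContinuousFunction.ofNormedAddCommGroup φ φ.continuous ((2/3)^n * M / 3)
        (fun x => by rw [Real.norm_eq_abs]; exact hφ1 x) with hφbdef
    refine ⟨p + φb, ?_, ?_⟩
    · intro s
      have := hφ2 s
      have hev : (p + φb) ↑s = p ↑s + φ ↑s := rfl
      rw [hev]
      calc |ψ s - (p ↑s + φ ↑s)| = |(ψ s - p ↑s) - φ ↑s| := by ring_nf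
        _ ≤ 2/3 * ((2/3)^n * M) := hφ2 s
        _ = (2/3)^(n+1) * M := by ring
    · have h1 : dist p (p + φb) = ‖φb‖ := by
        rw [dist_eq_norm]
        simp
      rw [h1]
      have h2 : ‖φb‖ ≤ (2/3)^n * M / 3 := by
        rw [hφbdef]
        exact BoundedContinuousFunction.norm_ofNormedAddCommGroup_le _ (by positivity) _
      linarith
  -- build the sequence
  let Fseq : ∀ n : ℕ, {p : BoundedContinuousFunction A ℝ //
      ∀ s : {x : A // a x ≠ 0}, |ψ s - p ↑s| ≤ (2/3)^n * M} := fun n =>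
    Nat.rec ⟨0, by intro s; simpa using hb s⟩
      (fun n prev => ⟨(key n prev.1 prev.2).choose, (key n prev.1 prev.2).choose_spec.1⟩) n
  have hdist : ∀ n, dist ((Fseq n).1) ((Fseq (n+1)).1) ≤ M * (2/3)^n := by
    intro n
    have := (key n (Fseq n).1 (Fseq n).2).choose_spec.2
    calc dist ((Fseq n).1) ((Fseq (n+1)).1) ≤ (2/3)^n * M := this
      _ = M * (2/3)^n := by ring
  have hcauchy : CauchySeq (fun n => (Fseq n).1) :=
    cauchySeq_of_le_geometric (2/3) M (by norm_num) hdist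
  obtain ⟨Φ, hΦ⟩ := cauchySeq_tendsto_of_complete hcauchy
  refine ⟨Φ, fun s => ?_⟩
  have hev : Filter.Tendsto (fun n => (Fseq n).1 ↑s) Filter.atTop (𝓝 (Φ ↑s)) :=
    ((continuous_eval_const (↑s : A)).continuousAt.tendsto).comp hΦ
  have hev2 : Filter.Tendsto (fun n => (Fseq n).1 ↑s) Filter.atTop (𝓝 (ψ s)) := by
    rw [tendsto_iff_dist_tendsto_zero]
    apply squeeze_zero (fun n => dist_nonneg) (fun n => ?_)
    · have : Filter.Tendsto (fun n : ℕ => (2/3:ℝ)^n * M) Filter.atTop (𝓝 (0 * M)) :=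
        (tendsto_pow_atTop_nhds_zero_of_lt_one (by norm_num) (by norm_num)).mul
          tendsto_const_nhds
      simpa using this
    · rw [Real.dist_eq, abs_sub_comm]
      exact (Fseq n).2 s
  exact tendsto_nhds_unique hev hev2

lemma propQ {X : Type*} [TopologicalSpace X] (g : C(X, ℝ))
    (hFsp : ∀ φ : C({x : X | g x ≠ 0}, ℝ), ∃ κ, φ = κ * |φ|) (f : C(X, ℂ)) :
    ∃ k : C(X, ℂ), ∀ x, k x * f x = (g x : ℂ) * ((f x).re : ℂ) := by
  set A := {x : X | g x ≠ 0} with hAdef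
  set a : A → ℝ := fun s => ‖f ↑s‖ with hadef
  have ha : Continuous a := (f.continuous.comp continuous_subtype_val).norm
  have hapos : ∀ s, 0 ≤ a s := fun s => norm_nonneg _
  have hfne : ∀ s : {s : A // a s ≠ 0}, f ↑↑s ≠ 0 := by
    intro s hs
    exact s.2 (by simp [hadef, hs])
  set q : {s : A // a s ≠ 0} → ℂ := fun s => ((f ↑↑s).re : ℂ) / f ↑↑s with hqdef
  have hfS : Continuous fun s : {s : A // a s ≠ 0} => f ↑↑s :=
    f.continuous.comp (continuous_subtype_val.comp continuous_subtype_val)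
  have hq : Continuous q :=
    (Complex.continuous_ofReal.comp (Complex.continuous_re.comp hfS)).div hfS hfne
  have hqbd : ∀ s, ‖q s‖ ≤ 1 := by
    intro s
    rw [hqdef]
    simp only [norm_div, Complex.norm_real, Real.norm_eq_abs]
    rw [div_le_one (norm_pos_iff.mpr (hfne s))]
    exact Complex.abs_re_le_norm _
  obtain ⟨Φre, hΦre⟩ := fspace_extend hFsp a ha hapos (fun s => (q s).re)
    (Complex.continuous_re.comp hq) 1 zero_le_one
    (fun s => le_trans (Complex.abs_re_le_norm _) (hqbd s))
  obtain ⟨Φim, hΦim⟩ := fspace_extend hFsp a ha hapos (fun s => (q s).im)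
    (Complex.continuous_im.comp hq) 1 zero_le_one
    (fun s => le_trans (Complex.abs_im_le_norm _) (hqbd s))
  set σ : X → ℂ := fun x =>
    if h : g x ≠ 0 then (↑(Φre ⟨x, h⟩) + ↑(Φim ⟨x, h⟩) * Complex.I) else 0 with hσdef
  have hC : ∀ x, ‖σ x‖ ≤ ‖Φre‖ + ‖Φim‖ := by
    intro x
    show ‖if h : g x ≠ 0 then (↑(Φre ⟨x, h⟩) + ↑(Φim ⟨x, h⟩) * Complex.I) else 0‖ ≤ _
    split_ifs with h
    · calc ‖(↑(Φre ⟨x, h⟩) : ℂ) + ↑(Φim ⟨x, h⟩) * Complex.I‖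
          ≤ ‖(↑(Φre ⟨x, h⟩) : ℂ)‖ + ‖(↑(Φim ⟨x, h⟩) : ℂ) * Complex.I‖ := norm_add_le _ _
        _ = ‖Φre ⟨x, h⟩‖ + ‖Φim ⟨x, h⟩‖ := by
            rw [norm_mul, Complex.norm_I, mul_one, Complex.norm_real, Complex.norm_real]
        _ ≤ ‖Φre‖ + ‖Φim‖ := add_le_add
            (BoundedContinuousFunction.norm_coe_le_norm _ _)
            (BoundedContinuousFunction.norm_coe_le_norm _ _)
    · simp only [norm_zero]
      positivity
  have hσcont : ContinuousOn σ {x | g x ≠ 0} := by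
    rw [continuousOn_iff_continuous_restrict]
    have hres : Set.domRestrict {x | g x ≠ 0} σ =
        fun s : A => (↑(Φre s) + ↑(Φim s) * Complex.I) := funext fun s => dif_pos s.2
    rw [hres]
    exact (Complex.continuous_ofReal.comp Φre.continuous).add
      ((Complex.continuous_ofReal.comp Φim.continuous).mul continuous_const)
  refine ⟨⟨fun x => g x • σ x, smul_ext_continuous g.continuous hσcont hC⟩, ?_⟩
  intro x
  show g x • σ x * f x = (g x : ℂ) * ((f x).re : ℂ)
  by_cases hg : g x ≠ 0
  · by_cases hf : f x = 0
    · rw [hf]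
      simp
    · have ha0 : a ⟨x, hg⟩ ≠ 0 := by
        simp only [hadef]
        exact fun hc => hf (by simpa using norm_eq_zero.mp hc)
      have hσx : σ x = ((f x).re : ℂ) / f x := by
        rw [show σ x = ↑(Φre ⟨x, hg⟩) + ↑(Φim ⟨x, hg⟩) * Complex.I from dif_pos hg,
          hΦre ⟨⟨x, hg⟩, ha0⟩, hΦim ⟨⟨x, hg⟩, ha0⟩]
        exact Complex.re_add_im _
      rw [hσx, Complex.real_smul, mul_assoc, div_mul_cancel₀ _ hf]
  · push_neg at hg
    rw [hg]
    simp

lemma propP {X : Type*} [TopologicalSpace X] (γ : C(X, ℂ))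
    (hp : ∀ f : C(X, ℂ), ∃ k : C(X, ℂ), ∀ x, k x * f x = γ x * ((f x).re : ℂ)) :
    ∀ φ : C({x : X | γ x ≠ 0}, ℝ), ∃ κ, φ = κ * |φ| := by
  set A := {x : X | γ x ≠ 0} with hAdef
  intro φ
  set a : X → ℝ := fun x => ‖γ x‖ with hadef
  have ha : Continuous a := γ.continuous.norm
  have hAa : {x : X | a x ≠ 0} = A := by
    ext x
    simp [hadef, hAdef, map_ne_zero]
  -- bounded data on A
  set b : A → ℝ := fun s => φ s / (1 + |φ s|) with hbdef
  set c : A → ℝ := fun s => |φ s| / (1 + |φ s|) with hcdef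
  have hden : ∀ s : A, (0:ℝ) < 1 + |φ s| := fun s => by positivity
  have hbc : Continuous b := φ.continuous.div
    (continuous_const.add φ.continuous.abs) (fun s => ne_of_gt (hden s))
  have hcc : Continuous c := φ.continuous.abs.div
    (continuous_const.add φ.continuous.abs) (fun s => ne_of_gt (hden s))
  have hbbd : ∀ s : A, |b s| ≤ 1 := by
    intro s
    rw [hbdef, abs_div, abs_of_pos (hden s), div_le_one (hden s)]
    linarith [abs_nonneg (φ s)]
  have hcbd : ∀ s : A, |c s| ≤ 1 := by
    intro s
    rw [hcdef, abs_div, abs_of_pos (hden s), div_le_one (hden s)]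
    rw [_root_.abs_abs]
    linarith [abs_nonneg (φ s)]
  -- zero-extensions
  set σu : X → ℝ := fun x => if h : γ x ≠ 0 then b ⟨x, h⟩ else 0 with hσudef
  set σw : X → ℝ := fun x => if h : γ x ≠ 0 then c ⟨x, h⟩ else 0 with hσwdef
  have hσubd : ∀ x, ‖σu x‖ ≤ 1 := by
    intro x
    rw [Real.norm_eq_abs]
    show |if h : γ x ≠ 0 then b ⟨x, h⟩ else 0| ≤ 1
    split_ifs with h
    · exact hbbd _
    · norm_num
  have hσwbd : ∀ x, ‖σw x‖ ≤ 1 := by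
    intro x
    rw [Real.norm_eq_abs]
    show |if h : γ x ≠ 0 then c ⟨x, h⟩ else 0| ≤ 1
    split_ifs with h
    · exact hcbd _
    · norm_num
  have hσucont : ContinuousOn σu {x | a x ≠ 0} := by
    rw [hAa, continuousOn_iff_continuous_restrict]
    have hres : Set.domRestrict A σu = b := funext fun s => dif_pos s.2
    rw [hres]; exact hbc
  have hσwcont : ContinuousOn σw {x | a x ≠ 0} := by
    rw [hAa, continuousOn_iff_continuous_restrict]
    have hres : Set.domRestrict A σw = c := funext fun s => dif_pos s.2
    rw [hres]; exact hcc
  set u : X → ℝ := fun x => a x • σu x with hudef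
  set w : X → ℝ := fun x => a x • σw x with hwdef
  have hu : Continuous u := smul_ext_continuous ha hσucont hσubd
  have hw : Continuous w := smul_ext_continuous ha hσwcont hσwbd
  set fC : C(X, ℂ) := ⟨fun x => (u x : ℂ) + (w x : ℂ) * Complex.I,
    (Complex.continuous_ofReal.comp hu).add
      ((Complex.continuous_ofReal.comp hw).mul continuous_const)⟩ with hfCdef
  have hfre : ∀ x, (fC x).re = u x := by
    intro x
    simp [hfCdef, Complex.add_re, Complex.mul_re]
  obtain ⟨k, hk⟩ := hp fC
  set κ : C(A, ℝ) := ⟨fun s => -2 * (k ↑s / γ ↑s).im,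
    continuous_const.mul (Complex.continuous_im.comp
      (((k.continuous.comp continuous_subtype_val)).div
        (γ.continuous.comp continuous_subtype_val) (fun s => s.2)))⟩ with hκdef
  refine ⟨κ, ?_⟩
  ext s
  rw [ContinuousMap.mul_apply, ContinuousMap.abs_apply]
  by_cases hφ : φ s = 0
  · rw [hφ]; simp
  · have hγs : γ ↑s ≠ 0 := s.2
    set t : ℝ := a ↑s / (1 + |φ s|) with htdef
    have hapos' : 0 < a ↑s := by
      rw [hadef]
      exact norm_pos_iff.mpr hγs
    have ht : 0 < t := div_pos hapos' (hden s)
    have hus : u ↑s = t * φ s := by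
      rw [hudef]
      simp only [smul_eq_mul]
      rw [show σu ↑s = b ⟨↑s, hγs⟩ from dif_pos hγs]
      rw [hbdef, htdef]
      have : (⟨↑s, hγs⟩ : A) = s := Subtype.eta _ _
      rw [this]
      field_simp
    have hws : w ↑s = t * |φ s| := by
      rw [hwdef]
      simp only [smul_eq_mul]
      rw [show σw ↑s = c ⟨↑s, hγs⟩ from dif_pos hγs]
      rw [hcdef, htdef]
      have : (⟨↑s, hγs⟩ : A) = s := Subtype.eta _ _
      rw [this]
      field_simp
    have hkx := hk ↑s
    have hfCs : fC ↑s = (t : ℂ) * φ s + ((t : ℂ) * |φ s|) * Complex.I := by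
      show (u ↑s : ℂ) + (w ↑s : ℂ) * Complex.I = _
      rw [hus, hws]
      push_cast
      ring
    rw [hfre ↑s, hus, hfCs] at hkx
    have htφ : ((t : ℂ) * (φ s : ℂ)) ≠ 0 := by
      apply mul_ne_zero
      · exact_mod_cast ne_of_gt ht
      · exact_mod_cast hφ
    rcases lt_or_gt_of_ne hφ with hneg | hpos
    · -- φ s < 0 : |φ s| = -φ s
      have habs : |φ s| = -φ s := abs_of_neg hneg
      have h1 : k ↑s * (1 - Complex.I) = γ ↑s := by
        apply mul_right_cancel₀ htφ
        push_cast [habs] at hkx ⊢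
        linear_combination hkx
      have h2 : k ↑s = γ ↑s * ((1 + Complex.I) / 2) := by
        linear_combination ((1 + Complex.I) / 2) * h1 + (k ↑s / 2) * Complex.I_sq
      have h3 : k ↑s / γ ↑s = (1 + Complex.I) / 2 := by
        rw [h2]
        field_simp
      have h4 : κ s = -1 := by
        rw [hκdef]
        show -2 * (k ↑s / γ ↑s).im = -1
        rw [h3]
        simp [Complex.div_im]
      rw [h4, habs]
      ring
    · -- φ s > 0 : |φ s| = φ s
      have habs : |φ s| = φ s := abs_of_pos hpos
      have h1 : k ↑s * (1 + Complex.I) = γ ↑s := by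
        apply mul_right_cancel₀ htφ
        push_cast [habs] at hkx ⊢
        linear_combination hkx
      have h2 : k ↑s = γ ↑s * ((1 - Complex.I) / 2) := by
        linear_combination ((1 - Complex.I) / 2) * h1 + (k ↑s / 2) * Complex.I_sq
      have h3 : k ↑s / γ ↑s = (1 - Complex.I) / 2 := by
        rw [h2]
        field_simp
      have h4 : κ s = 1 := by
        rw [hκdef]
        show -2 * (k ↑s / γ ↑s).im = 1
        rw [h3]
        simp [Complex.div_im]
        norm_num
      rw [h4, habs]
      ring

end

theorem stmt12 {X : Type*} [TopologicalSpace X] [CompactSpace X] [T2Space X] :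
    (¬ ∃ A : Set X, A.Nonempty ∧ IsOpen A ∧
        (∃ F : ℕ → Set X, (∀ n, IsClosed (F n)) ∧ A = ⋃ n, F n) ∧
        IsFSpace A) ↔
    (∀ T : C(X, ℂ) → C(X, ℂ),
      (∀ f g, T (f + g) = T f + T g) →
      (∀ (a : ℝ) (f : C(X, ℂ)), T (a • f) = a • T f) →
      (∀ f, ∃ h, T f = h * f) →
      ∃ h, ∀ f, T f = h * f) := by
  constructor
  · -- no F-space ⇒ every local multiplication is a multiplication
    intro hL T hadd hsmul hloc
    have hTzero : ∀ (d : C(X, ℂ)) (x : X), d x = 0 → T d x = 0 := by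
      intro d x hdx
      obtain ⟨h, hh⟩ := hloc d
      rw [hh, ContinuousMap.mul_apply, hdx, mul_zero]
    have key : ∀ (f : C(X, ℂ)) (x : X),
        T f x = T 1 x * ((f x).re : ℂ) + T (Complex.I • 1) x * ((f x).im : ℂ) := by
      intro f x
      set c : C(X, ℂ) := (f x).re • (1 : C(X, ℂ)) + (f x).im • (Complex.I • (1 : C(X, ℂ)))
        with hcdef
      have hcx : c x = f x := by
        simp only [hcdef, ContinuousMap.add_apply, ContinuousMap.smul_apply,
          ContinuousMap.one_apply, smul_eq_mul, Complex.real_smul]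
        push_cast
        simp only [mul_one]
        exact Complex.re_add_im (f x)
      have hsplit : f = (f - c) + c := (sub_add_cancel f c).symm
      have hTf : T f = T (f - c) + ((f x).re • T 1 + (f x).im • T (Complex.I • 1)) := by
        nth_rewrite 1 [hsplit]
        rw [hadd, hcdef, hadd, hsmul, hsmul]
      have hdx : (f - c) x = 0 := by
        rw [ContinuousMap.sub_apply, hcx, sub_self]
      have := hTzero (f - c) x hdx
      rw [hTf]
      simp only [ContinuousMap.add_apply, ContinuousMap.smul_apply, this, zero_add,
        Complex.real_smul]
      ring
    set γ : C(X, ℂ) := T 1 + Complex.I • T (Complex.I • 1) with hγdef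
    have hγx : ∀ x, γ x = T 1 x + Complex.I * T (Complex.I • 1) x := by
      intro x
      simp [hγdef, ContinuousMap.add_apply, ContinuousMap.smul_apply, smul_eq_mul]
    have hprop : ∀ f : C(X, ℂ), ∃ k : C(X, ℂ), ∀ x, k x * f x = γ x * ((f x).re : ℂ) := by
      intro f
      obtain ⟨h, hh⟩ := hloc f
      refine ⟨h + Complex.I • T (Complex.I • 1), fun x => ?_⟩
      have h1 : h x * f x = T 1 x * ((f x).re : ℂ) + T (Complex.I • 1) x * ((f x).im : ℂ) := by
        rw [← key f x, hh, ContinuousMap.mul_apply]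
      have h2 := Complex.re_add_im (f x)
      rw [ContinuousMap.add_apply, ContinuousMap.smul_apply, smul_eq_mul, hγx x]
      linear_combination h1 - (Complex.I * T (Complex.I • 1) x) * h2 +
        (T (Complex.I • 1) x * ((f x).im : ℂ)) * Complex.I_sq
    have hγ0 : ∀ x, γ x = 0 := by
      by_contra hc
      push_neg at hc
      obtain ⟨x₀, hx₀⟩ := hc
      apply hL
      refine ⟨{x : X | γ x ≠ 0}, ⟨x₀, hx₀⟩, ?_, ⟨fun n => {x | 1 / (n + 1) ≤ ‖γ x‖},
        fun n => ?_, ?_⟩, propP γ hprop⟩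
      · have : IsOpen (γ ⁻¹' ({0}ᶜ)) := isOpen_compl_singleton.preimage γ.continuous
        convert this using 1
        rfl
      · exact IsClosed.preimage (γ.continuous.norm) isClosed_Ici
      · ext y
        simp only [Set.mem_setOf_eq, Set.mem_iUnion]
        constructor
        · intro hy
          obtain ⟨n, hn⟩ := exists_nat_one_div_lt (norm_pos_iff.mpr hy)
          exact ⟨n, le_of_lt hn⟩
        · rintro ⟨n, hn⟩ h0
          rw [h0] at hn
          simp only [norm_zero] at hn
          have : (0:ℝ) < 1 / (n + 1) := by positivity
          linarith
    refine ⟨T 1, fun f => ?_⟩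
    ext x
    rw [ContinuousMap.mul_apply, key f x]
    have hγ0x : T 1 x + Complex.I * T (Complex.I • 1) x = 0 := by rw [← hγx x]; exact hγ0 x
    have h2 := Complex.re_add_im (f x)
    linear_combination (T 1 x) * h2 - (((f x).im : ℂ) * Complex.I) * hγ0x +
      (T (Complex.I • 1) x * ((f x).im : ℂ)) * Complex.I_sq
  · -- multiplication property ⇒ no F-space
    intro hR
    by_contra hL
    obtain ⟨A, hne, hopen, ⟨F, hFcl, hAeq⟩, hFsp⟩ := hL
    have hFA : ∀ n, F n ⊆ A := fun n => hAeq ▸ Set.subset_iUnion F n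
    have hgn : ∀ n : ℕ, ∃ gn : C(X, ℝ), Set.EqOn gn 0 Aᶜ ∧ Set.EqOn gn 1 (F n) ∧
        ∀ x, gn x ∈ Set.Icc (0:ℝ) 1 := by
      intro n
      exact exists_continuous_zero_one_of_isClosed (isClosed_compl_iff.mpr hopen) (hFcl n)
        (Set.disjoint_left.mpr fun x hx hx' => hx (hFA n hx'))
    choose gn hgn0 hgn1 hgn01 using hgn
    have hbd : ∀ (n : ℕ) (x : X), ‖(1/2:ℝ)^n * gn n x‖ ≤ (1/2:ℝ)^n := by
      intro n x
      rw [Real.norm_eq_abs, abs_mul, _root_.abs_of_nonneg (by positivity : (0:ℝ) ≤ (1/2:ℝ)^n)]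
      have h1 := (hgn01 n x).1
      have h2 := (hgn01 n x).2
      have : |gn n x| ≤ 1 := abs_le.mpr ⟨by linarith, h2⟩
      nlinarith [abs_nonneg (gn n x), pow_pos (by norm_num : (0:ℝ) < 1/2) n]
    have hgcont : Continuous fun x => ∑' n, (1/2:ℝ)^n * gn n x :=
      continuous_tsum (fun n => continuous_const.mul (gn n).continuous)
        summable_geometric_two hbd
    set gC : C(X, ℝ) := ⟨fun x => ∑' n, (1/2:ℝ)^n * gn n x, hgcont⟩ with hgCdef
    have hsx : ∀ x, Summable fun n => (1/2:ℝ)^n * gn n x := by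
      intro x
      apply Summable.of_norm_bounded summable_geometric_two (hbd · x)
    have hgzero : ∀ x ∉ A, gC x = 0 := by
      intro x hx
      show ∑' n, (1/2:ℝ)^n * gn n x = 0
      have : ∀ n : ℕ, (1/2:ℝ)^n * gn n x = 0 := by
        intro n
        rw [hgn0 n hx]
        simp
      rw [tsum_congr this, tsum_zero]
    have hgpos : ∀ x ∈ A, 0 < gC x := by
      intro x hx
      rw [hAeq] at hx
      obtain ⟨s, ⟨n, rfl⟩, hn⟩ := hx
      show 0 < ∑' m, (1/2:ℝ)^m * gn m x
      apply Summable.tsum_pos (hsx x) ?_ n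
      · rw [hgn1 n hn]
        simp only [Pi.one_apply]
        positivity
      · intro m
        have := (hgn01 m x).1
        positivity
    have hAset : {x : X | gC x ≠ 0} = A := by
      ext x
      simp only [Set.mem_setOf_eq]
      constructor
      · intro hx
        by_contra hc
        exact hx (hgzero x hc)
      · intro hx
        exact ne_of_gt (hgpos x hx)
    have hFsp' : ∀ φ : C({x : X | gC x ≠ 0}, ℝ), ∃ κ, φ = κ * |φ| := by
      rw [hAset]
      exact hFsp
    set T : C(X, ℂ) → C(X, ℂ) := fun f =>
      ⟨fun x => (gC x : ℂ) * ((f x).re : ℂ),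
        (Complex.continuous_ofReal.comp hgcont).mul
          (Complex.continuous_ofReal.comp (Complex.continuous_re.comp f.continuous))⟩ with hTdef
    obtain ⟨h, hh⟩ := hR T
      (by
        intro f1 f2
        ext x
        show (gC x : ℂ) * (((f1 + f2) x).re : ℂ) = _
        simp only [ContinuousMap.add_apply, Complex.add_re]
        show _ = (gC x : ℂ) * ((f1 x).re : ℂ) + (gC x : ℂ) * ((f2 x).re : ℂ)
        push_cast
        ring)
      (by
        intro a f
        ext x
        show (gC x : ℂ) * (((a • f) x).re : ℂ) = a • ((gC x : ℂ) * ((f x).re : ℂ))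
        rw [ContinuousMap.smul_apply, Complex.real_smul, Complex.real_smul]
        have : ((a:ℂ) * f x).re = a * (f x).re := by
          simp [Complex.mul_re]
        rw [this]
        push_cast
        ring)
      (by
        intro f
        obtain ⟨k, hk⟩ := propQ gC hFsp' f
        refine ⟨k, ?_⟩
        ext x
        rw [ContinuousMap.mul_apply, hk x]
        rfl)
    obtain ⟨x₀, hx₀⟩ := hne
    have e1 : (gC x₀ : ℂ) = h x₀ := by
      have := ContinuousMap.congr_fun (hh 1) x₀
      simp only [hTdef, ContinuousMap.coe_mk, ContinuousMap.mul_apply,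
        ContinuousMap.one_apply, Complex.one_re, Complex.ofReal_one, mul_one] at this
      exact this
    have e2 : h x₀ * Complex.I = 0 := by
      have := ContinuousMap.congr_fun (hh (Complex.I • 1)) x₀
      simp only [hTdef, ContinuousMap.coe_mk, ContinuousMap.mul_apply,
        ContinuousMap.smul_apply, ContinuousMap.one_apply, smul_eq_mul, mul_one,
        Complex.I_re, Complex.ofReal_zero, mul_zero] at this
      exact this.symm
    have hh0 : h x₀ = 0 := by
      rcases mul_eq_zero.mp e2 with h0 | h0
      · exact h0
      · exact absurd h0 Complex.I_ne_zero
    rw [hh0] at e1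
    have : gC x₀ = 0 := by exact_mod_cast e1
    exact absurd this (ne_of_gt (hgpos x₀ hx₀))
end

section
/- Let T be an additive local multiplication on C(β(ℕ)) ≅ ℓ^∞ (bounded complex sequences). Then there exists N ∈ ℕ such that T(f)(n) = T(1)(n)·f(n) for all n ≥ N and all bounded real sequences f; in particular T(f) = T(1)·f on β(ℕ)∖ℕ for every real-valued f. -/
open Filter BoundedContinuousFunction

theorem stmt13 (T : (BoundedContinuousFunction ℕ ℂ) → (BoundedContinuousFunction ℕ ℂ))
    (hadd : ∀ f g, T (f + g) = T f + T g)
    (hloc : ∀ f, ∃ h : BoundedContinuousFunction ℕ ℂ, T f = h * f) :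
    ∃ N : ℕ, ∀ f : BoundedContinuousFunction ℕ ℂ, (∀ n, (f n).im = 0) →
      (∀ n, N ≤ n → T f n = T 1 n * f n) ∧
      Filter.Tendsto (fun n => T f n - T 1 n * f n) Filter.atTop (nhds 0) := by
  classical
  have hsub : ∀ f g, T (f - g) = T f - T g := by
    intro f g
    have h := hadd (f - g) g
    rw [sub_add_cancel] at h
    rw [h]; abel
  -- locality: T f n depends only on f n
  have happly : ∀ (f g : BoundedContinuousFunction ℕ ℂ) (n : ℕ), f n = g n → T f n = T g n := by
    intro f g n hn
    obtain ⟨h, hh⟩ := hloc (f - g)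
    have h1 : T f n - T g n = h n * (f n - g n) := by
      have := congrArg (fun u : BoundedContinuousFunction ℕ ℂ => u n) hh
      simpa [hsub] using this
    rw [hn, sub_self, mul_zero] at h1
    exact sub_eq_zero.mp h1
  set φ : ℕ → ℂ → ℂ := fun n z => T (const ℕ z) n with hφdef
  have hTφ : ∀ (f : BoundedContinuousFunction ℕ ℂ) (n : ℕ), T f n = φ n (f n) := by
    intro f n
    exact happly f (const ℕ (f n)) n (by simp)
  have hφadd : ∀ n z w, φ n (z + w) = φ n z + φ n w := by
    intro n z w
    have hc : (const ℕ (z + w) : BoundedContinuousFunction ℕ ℂ) = const ℕ z + const ℕ w := by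
      ext m; simp
    have h2 : T (const ℕ (z + w)) = T (const ℕ z) + T (const ℕ w) := by
      rw [hc]; exact hadd _ _
    have := congrArg (fun u : BoundedContinuousFunction ℕ ℂ => u n) h2
    simpa [hφdef] using this
  let Ψ : ℕ → ℝ →+ ℂ := fun n => AddMonoidHom.mk'
      (fun t : ℝ => φ n (t : ℂ) - φ n 1 * (t : ℂ))
      (by intro a b; push_cast; rw [hφadd]; ring)
  have hΨ : ∀ n (t : ℝ), Ψ n t = φ n (t : ℂ) - φ n 1 * (t : ℂ) := fun n t => rfl
  have hΨ1 : ∀ n, Ψ n 1 = 0 := by intro n; rw [hΨ]; push_cast; ring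
  have hΨint : ∀ n (k : ℤ), Ψ n (k : ℝ) = 0 := by
    intro n k
    have h : (k : ℝ) = k • (1 : ℝ) := by simp
    rw [h, map_zsmul, hΨ1, smul_zero]
  -- amplification
  have hamp : ∀ n (t : ℝ), Ψ n t ≠ 0 → ∀ M : ℝ, ∃ s : ℝ, 0 ≤ s ∧ s < 1 ∧ M ≤ ‖Ψ n s‖ := by
    intro n t ht M
    have hc : 0 < ‖Ψ n t‖ := norm_pos_iff.mpr ht
    set m : ℕ := ⌈M / ‖Ψ n t‖⌉₊ with hm
    refine ⟨Int.fract ((m : ℝ) * t), Int.fract_nonneg _, Int.fract_lt_one _, ?_⟩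
    have h1 : Ψ n (Int.fract ((m : ℝ) * t)) = m • Ψ n t := by
      rw [Int.fract, map_sub, hΨint, sub_zero]
      have h2 : (m : ℝ) * t = m • t := by simp
      rw [h2, map_nsmul]
    rw [h1, nsmul_eq_mul, norm_mul]
    simp only [Complex.norm_natCast]
    calc M = (M / ‖Ψ n t‖) * ‖Ψ n t‖ := (div_mul_cancel₀ M hc.ne').symm
      _ ≤ (m : ℝ) * ‖Ψ n t‖ := by
          apply mul_le_mul_of_nonneg_right (Nat.le_ceil _) hc.le
  -- the key finiteness claim
  have key : ∃ N : ℕ, ∀ n, N ≤ n → ∀ t : ℝ, Ψ n t = 0 := by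
    by_contra hcon
    push_neg at hcon
    -- hcon : ∀ N, ∃ n, N ≤ n ∧ ∃ t, Ψ n t ≠ 0
    have hS : {n : ℕ | ∃ t : ℝ, Ψ n t ≠ 0}.Infinite := by
      apply Set.infinite_of_not_bddAbove
      rintro ⟨b, hb⟩
      obtain ⟨n, hn1, hn2⟩ := hcon (b + 1)
      have := hb hn2
      omega
    let E := Set.Infinite.natEmbedding _ hS
    let e : ℕ → ℕ := fun k => (E k : ℕ)
    have heinj : Function.Injective e := fun a b hab => E.injective (Subtype.ext hab)
    have heS : ∀ k, ∃ t : ℝ, Ψ (e k) t ≠ 0 := fun k => (E k).2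
    have hsk : ∀ k : ℕ, ∃ s : ℝ, 0 ≤ s ∧ s < 1 ∧ (k : ℝ) ≤ ‖Ψ (e k) s‖ := by
      intro k
      obtain ⟨t, ht⟩ := heS k
      exact hamp (e k) t ht k
    choose s hs0 hs1 hsΨ using hsk
    let g : ℕ → ℂ := fun n => if hn : ∃ k, e k = n then ((s hn.choose : ℝ) : ℂ) else 0
    have hgbound : ∀ n, ‖g n‖ ≤ 1 := by
      intro n
      by_cases hn : ∃ k, e k = n
      · simp only [g, dif_pos hn]
        rw [Complex.norm_real, Real.norm_eq_abs, abs_of_nonneg (hs0 _)]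
        exact (hs1 _).le
      · simp [g, dif_neg hn]
    let f : BoundedContinuousFunction ℕ ℂ :=
      BoundedContinuousFunction.ofNormedAddCommGroup g continuous_of_discreteTopology 1 hgbound
    have hfg : ∀ n, f n = g n := fun n => rfl
    have hfe : ∀ k, f (e k) = ((s k : ℝ) : ℂ) := by
      intro k
      have hn : ∃ k', e k' = e k := ⟨k, rfl⟩
      rw [hfg]
      simp only [g, dif_pos hn]
      congr 2
      exact heinj hn.choose_spec
    obtain ⟨h, hh⟩ := hloc f
    obtain ⟨K, hK⟩ := exists_nat_gt (‖h‖ + ‖T 1‖)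
    have h1 : T f (e K) = h (e K) * f (e K) := by
      have := congrArg (fun u : BoundedContinuousFunction ℕ ℂ => u (e K)) hh
      simpa using this
    have hφ1 : φ (e K) 1 = T 1 (e K) := happly (const ℕ 1) 1 (e K) (by simp)
    have hA : φ (e K) ((s K : ℝ) : ℂ) = h (e K) * f (e K) := by
      rw [← hfe K, ← hTφ f (e K)]; exact h1
    have hs2 : ‖((s K : ℝ) : ℂ)‖ ≤ 1 := by
      rw [Complex.norm_real, Real.norm_eq_abs, abs_of_nonneg (hs0 _)]
      exact (hs1 _).le
    have hbound : ‖Ψ (e K) (s K)‖ ≤ ‖h‖ + ‖T 1‖ := by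
      rw [hΨ, hA, hφ1]
      calc ‖h (e K) * f (e K) - T 1 (e K) * ((s K : ℝ) : ℂ)‖
          ≤ ‖h (e K) * f (e K)‖ + ‖T 1 (e K) * ((s K : ℝ) : ℂ)‖ := norm_sub_le _ _
        _ = ‖h (e K)‖ * ‖f (e K)‖ + ‖T 1 (e K)‖ * ‖((s K : ℝ) : ℂ)‖ := by
            rw [norm_mul, norm_mul]
        _ ≤ ‖h‖ * 1 + ‖T 1‖ * 1 := by
            gcongr
            · exact norm_coe_le_norm h (e K)
            · rw [hfe K]; exact hs2
            · exact norm_coe_le_norm (T 1) (e K)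
        _ = ‖h‖ + ‖T 1‖ := by ring
    have := hsΨ K
    linarith
  obtain ⟨N, hN⟩ := key
  refine ⟨N, fun f hf => ?_⟩
  have hmain : ∀ n, N ≤ n → T f n = T 1 n * f n := by
    intro n hn
    have hfr : ((f n).re : ℂ) = f n := Complex.ext (by simp) (by simp [hf n])
    have h0 := hN n hn ((f n).re)
    rw [hΨ] at h0
    have hφ1 : φ n 1 = T 1 n := happly (const ℕ 1) 1 n (by simp)
    rw [hTφ f n, ← hfr, ← hφ1]
    exact sub_eq_zero.mp h0
  refine ⟨hmain, ?_⟩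
  have hev : (fun n => T f n - T 1 n * f n) =ᶠ[atTop] (fun _ => (0 : ℂ)) := by
    filter_upwards [eventually_ge_atTop N] with n hn
    rw [hmain n hn, sub_self]
  exact Filter.Tendsto.congr' hev.symm tendsto_const_nhds
end

section
/- Let X be a compact Hausdorff space and T : C(X) → C(X) any map. Then: (a) T is a local multiplication if and only if T leaves invariant every ideal of C(X); and (b) T is zero-preserving (f(x)=0 implies T(f)(x)=0 for all x) if and only if T leaves invariant every closed ideal of C(X). -/
theorem stmt14 {X : Type*} [TopologicalSpace X] [CompactSpace X] [T2Space X]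
    (T : C(X, ℂ) → C(X, ℂ)) :
    ((∀ f, ∃ h, T f = h * f) ↔
      (∀ I : Ideal C(X, ℂ), ∀ f ∈ I, T f ∈ I)) ∧
    ((∀ f : C(X, ℂ), ∀ x : X, f x = 0 → T f x = 0) ↔
      (∀ I : Ideal C(X, ℂ), IsClosed (I : Set C(X, ℂ)) → ∀ f ∈ I, T f ∈ I)) := by
  constructor
  · constructor
    · rintro h I f hf
      obtain ⟨g, hg⟩ := h f
      rw [hg]
      exact I.mul_mem_left g hf
    · intro h f
      have := h (Ideal.span {f}) f (Ideal.subset_span rfl)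
      rw [Ideal.mem_span_singleton] at this
      obtain ⟨c, hc⟩ := this
      exact ⟨c, by rw [hc, mul_comm]⟩
  · constructor
    · intro h I hI f hf
      rw [← ContinuousMap.idealOfSet_ofIdeal_isClosed hI] at hf ⊢
      rw [ContinuousMap.mem_idealOfSet] at hf ⊢
      exact fun x hx => h f x (hf hx)
    · intro h f x hfx
      have := h (ContinuousMap.idealOfSet ℂ ({x}ᶜ : Set X))
        (ContinuousMap.idealOfSet_closed ℂ _) f
        ((ContinuousMap.mem_idealOfSet_compl_singleton x f).mpr hfx)
      exact (ContinuousMap.mem_idealOfSet_compl_singleton x (T f)).mp this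
end

section
/- Let A be a unital algebra over a field F such that for every nonzero x ∈ A there is an algebra homomorphism h : A → F with h(x) ≠ 0. Let T : A → A be a linear map such that for every unital algebra homomorphism s : A → F and every a ∈ A, s(a) = 0 implies s(T(a)) = 0. Then T(a) = T(1)·a for all a ∈ A. -/
theorem stmt15 {F A : Type*} [Field F] [Ring A] [Algebra F A]
    (hsep : ∀ x : A, x ≠ 0 → ∃ h : A →ₐ[F] F, h x ≠ 0)
    (T : A →ₗ[F] A)
    (hT : ∀ (s : A →ₐ[F] F) (a : A), s a = 0 → s (T a) = 0) :
    ∀ a : A, T a = T 1 * a := by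
  intro a
  by_contra h
  have hx : T a - T 1 * a ≠ 0 := sub_ne_zero.mpr h
  obtain ⟨s, hs⟩ := hsep _ hx
  apply hs
  have key : s (T (a - s a • 1)) = 0 := by
    apply hT
    simp [Algebra.algebraMap_eq_smul_one]
  rw [map_sub, map_smul] at key
  have : s (T a) = s a * s (T 1) := by
    rw [map_sub] at key
    have := sub_eq_zero.mp key
    simpa [smul_eq_mul, mul_comm] using this
  simp [map_sub, map_mul, this, mul_comm]
end

section
/- Let X be a compact Hausdorff space. Every ℝ-linear map T on C_R(X) that is zero-preserving (f(x)=0 implies T(f)(x)=0) is a multiplication, i.e., T(f) = T(1)·f for all f ∈ C_R(X). -/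
theorem stmt16 {X : Type*} [TopologicalSpace X] [CompactSpace X] [T2Space X]
    (T : C(X, ℝ) →ₗ[ℝ] C(X, ℝ))
    (hzp : ∀ f : C(X, ℝ), ∀ x : X, f x = 0 → T f x = 0) :
    ∀ f : C(X, ℝ), T f = T 1 * f := by
  intro f
  ext x
  have h := hzp (f - f x • 1) x (by simp)
  simp [map_sub, map_smul] at h
  rw [sub_eq_zero] at h; simpa [mul_comm] using h
end

section
/- Let X be a compact Hausdorff space and x ∈ X. Then x is a q-point (there is a pairwise disjoint sequence {K_n} of compact subsets of X with each K_n disjoint from the closure of the union of the others, and x lies in the closure of ⋃K_n but not in ⋃K_n) if and only if x is not a P-point (i.e., it is not the case that every f ∈ C(X) is constant on some open neighborhood of x). -/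
/-- `x` is a q-point of `X`: there is a pairwise disjoint sequence of compact sets,
each disjoint from the closure of the union of the others, with `x` in the closure
of the union but not in the union. -/
def IsQPoint {X : Type*} [TopologicalSpace X] (x : X) : Prop :=
  ∃ K : ℕ → Set X,
    (∀ n, IsCompact (K n)) ∧
    (Pairwise (Function.onFun Disjoint K)) ∧
    (∀ n, Disjoint (K n) (closure (⋃ m ∈ {m : ℕ | m ≠ n}, K m))) ∧
    x ∈ closure (⋃ n, K n) ∧ x ∉ ⋃ n, K n

/-- `x` is a P-point of `X`: every continuous complex-valued function is constant
on some open neighborhood of `x`. -/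
def IsPPoint {X : Type*} [TopologicalSpace X] (x : X) : Prop :=
  ∀ f : C(X, ℂ), ∃ U : Set X, IsOpen U ∧ x ∈ U ∧ ∀ y ∈ U, f y = f x

/-- For `0 < t ≤ 1` there is `k` with `2⁻¹ ^ (k+1) ≤ t ≤ 2⁻¹ ^ k`. -/
lemma exists_pow_interval {t : ℝ} (ht : 0 < t) (ht1 : t ≤ 1) :
    ∃ k : ℕ, (2:ℝ)⁻¹ ^ (k + 1) ≤ t ∧ t ≤ (2:ℝ)⁻¹ ^ k := by
  have hex : ∃ n : ℕ, (2:ℝ)⁻¹ ^ n < t := exists_pow_lt_of_lt_one ht (by norm_num)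
  set n := Nat.find hex with hn
  have hspec : (2:ℝ)⁻¹ ^ n < t := Nat.find_spec hex
  have hn0 : n ≠ 0 := by
    intro h
    rw [h] at hspec
    simp at hspec
    linarith
  obtain ⟨k, hk⟩ := Nat.exists_eq_succ_of_ne_zero hn0
  rw [Nat.succ_eq_add_one] at hk
  refine ⟨k, ?_, ?_⟩
  · rw [← hk]; exact hspec.le
  · have := Nat.find_min hex (m := k) (by omega)
    linarith [not_lt.mp this]

/-- Helper: if a continuous real function vanishes at `x` and `x` is in the closure of the
union of preimages of a "spread-out" family of dyadic intervals, then `x` is a q-point. -/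
lemma qpoint_of_fun {X : Type*} [TopologicalSpace X] [CompactSpace X] [T2Space X]
    (x : X) (g : C(X, ℝ)) (hg0 : g x = 0) (e : ℕ → ℕ)
    (he : ∀ {n m : ℕ}, n < m → e n + 2 ≤ e m)
    (hx : x ∈ closure (⋃ n, g ⁻¹' Set.Icc ((2:ℝ)⁻¹ ^ (e n + 1)) ((2:ℝ)⁻¹ ^ (e n)))) :
    IsQPoint x := by
  set c : ℝ := (2:ℝ)⁻¹ with hc
  have hc0 : (0:ℝ) < c := by norm_num
  have hc1 : c < 1 := by norm_num
  set K : ℕ → Set X := fun n => g ⁻¹' Set.Icc (c ^ (e n + 1)) (c ^ (e n)) with hK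
  have hKcomp : ∀ n, IsCompact (K n) :=
    fun n => (isClosed_Icc.preimage g.continuous).isCompact
  have hdisj : ∀ n m : ℕ, n < m → Disjoint (K n) (K m) := by
    intro n m hnm
    rw [Set.disjoint_left]
    intro y hyn hym
    have h1 : c ^ (e n + 1) ≤ g y := hyn.1
    have h2 : g y ≤ c ^ (e m) := hym.2
    have h3 : c ^ (e m) < c ^ (e n + 1) :=
      pow_lt_pow_right_of_lt_one₀ hc0 hc1 (by have := he hnm; omega)
    linarith
  refine ⟨K, hKcomp, ?_, ?_, hx, ?_⟩
  · intro n m hnm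
    rcases hnm.lt_or_gt with h | h
    · exact hdisj n m h
    · exact (hdisj m n h).symm
  · intro n
    set C : Set ℝ := Set.Iic (c ^ (e n + 2)) ∪ Set.Ici (2 * c ^ (e n)) with hCdef
    have hCclosed : IsClosed C := isClosed_Iic.union isClosed_Ici
    have hsub : (⋃ m ∈ {m : ℕ | m ≠ n}, K m) ⊆ g ⁻¹' C := by
      intro y hy
      simp only [Set.mem_iUnion, Set.mem_setOf_eq] at hy
      obtain ⟨m, hm, hym⟩ := hy
      rcases (Ne.lt_or_gt hm) with hlt | hlt
      · -- m < n : values of K m are large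
        right
        have h1 : c ^ (e n) ≤ c ^ (e m + 2) :=
          pow_le_pow_of_le_one hc0.le hc1.le (he hlt)
        have h2 : c ^ (e m + 2) = c * c ^ (e m + 1) := by ring
        have h3 : c ^ (e m + 1) ≤ g y := hym.1
        have : 2 * c ^ (e n) ≤ 2 * (c * c ^ (e m + 1)) := by linarith
        have h4 : 2 * (c * c ^ (e m + 1)) = c ^ (e m + 1) := by
          rw [hc]; ring
        simp only [Set.mem_Ici]
        linarith
      · -- n < m : values of K m are small
        left
        have h1 : c ^ (e m) ≤ c ^ (e n + 2) :=
          pow_le_pow_of_le_one hc0.le hc1.le (he hlt)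
        have h2 : g y ≤ c ^ (e m) := hym.2
        simp only [Set.mem_Iic]
        linarith
    have hclsub : closure (⋃ m ∈ {m : ℕ | m ≠ n}, K m) ⊆ g ⁻¹' C :=
      closure_minimal hsub (hCclosed.preimage g.continuous)
    refine Disjoint.mono_right hclsub ?_
    rw [Set.disjoint_left]
    intro y hyK hyC
    have h1 : c ^ (e n + 1) ≤ g y := hyK.1
    have h2 : g y ≤ c ^ (e n) := hyK.2
    have hpos : 0 < c ^ (e n) := pow_pos hc0 _
    have h3 : c ^ (e n + 2) < c ^ (e n + 1) :=
      pow_lt_pow_right_of_lt_one₀ hc0 hc1 (by omega)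
    rcases hyC with h | h
    · simp only [Set.mem_Iic] at h; linarith
    · simp only [Set.mem_Ici] at h; linarith
  · intro hmem
    simp only [Set.mem_iUnion] at hmem
    obtain ⟨n, hn⟩ := hmem
    have : c ^ (e n + 1) ≤ g x := hn.1
    have hpos : 0 < c ^ (e n + 1) := pow_pos hc0 _
    rw [hg0] at this
    linarith

theorem stmt17 {X : Type*} [TopologicalSpace X] [CompactSpace X] [T2Space X] (x : X) :
    IsQPoint x ↔ ¬ IsPPoint x := by
  constructor
  · -- q-point → not P-point
    rintro ⟨K, hKcomp, hKdisj, hKsep, hxcl, hxnot⟩ hP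
    set c : ℝ := (2:ℝ)⁻¹ with hc
    have hc0 : (0:ℝ) < c := by norm_num
    have hc1 : c < 1 := by norm_num
    -- Urysohn functions
    have hgex : ∀ n, ∃ g : C(X, ℝ),
        Set.EqOn g 0 (closure (⋃ m ∈ {m : ℕ | m ≠ n}, K m)) ∧ Set.EqOn g 1 (K n) ∧
        ∀ y, g y ∈ Set.Icc (0:ℝ) 1 := fun n =>
      exists_continuous_zero_one_of_isClosed isClosed_closure (hKcomp n).isClosed
        (hKsep n).symm
    choose g hg0 hg1 hgmem using hgex
    -- the sum
    have hnorm : ∀ n, ‖(c ^ n) • g n‖ ≤ c ^ n := by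
      intro n
      rw [ContinuousMap.norm_le _ (pow_nonneg hc0.le n)]
      intro y
      rw [ContinuousMap.smul_apply, smul_eq_mul, Real.norm_eq_abs, abs_mul,
        abs_of_nonneg (pow_nonneg hc0.le n)]
      have h1 : |(g n) y| ≤ 1 := abs_le.mpr ⟨by linarith [(hgmem n y).1], (hgmem n y).2⟩
      calc c ^ n * |(g n) y| ≤ c ^ n * 1 :=
            mul_le_mul_of_nonneg_left h1 (pow_nonneg hc0.le n)
        _ = c ^ n := mul_one _
    have hsumm : Summable (fun n => (c ^ n) • g n) :=
      Summable.of_norm_bounded (summable_geometric_of_lt_one hc0.le hc1) hnorm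
    set F : C(X, ℝ) := ∑' n, (c ^ n) • g n with hF
    have hFy : ∀ y : X, F y = ∑' n, c ^ n * g n y := by
      intro y
      have := (ContinuousMap.evalCLM ℝ y : C(X, ℝ) →L[ℝ] ℝ).map_tsum hsumm
      simpa using this
    -- F equals c ^ n on K n
    have hFK : ∀ n, ∀ y ∈ K n, F y = c ^ n := by
      intro n y hy
      rw [hFy y]
      have hterm : ∀ m : ℕ, m ≠ n → c ^ m * g m y = 0 := by
        intro m hm
        have hycl : y ∈ closure (⋃ m' ∈ {m' : ℕ | m' ≠ m}, K m') := by
          apply subset_closure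
          exact Set.mem_biUnion (show n ∈ {m' : ℕ | m' ≠ m} from fun h => hm h.symm) hy
        rw [hg0 m hycl]
        simp
      rw [tsum_eq_single n hterm, hg1 n hy]
      simp
    -- the complex function
    set fC : C(X, ℂ) := ⟨fun y => ((F y : ℝ) : ℂ),
      Complex.continuous_ofReal.comp F.continuous⟩ with hfC
    obtain ⟨U, hUopen, hxU, hconst⟩ := hP fC
    -- U meets some K n
    obtain ⟨y, hyU, hyK⟩ := mem_closure_iff.mp hxcl U hUopen hxU
    simp only [Set.mem_iUnion] at hyK
    obtain ⟨n, hyn⟩ := hyK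
    -- x is in the closure of the union of the others
    have hxcl' : x ∈ closure (⋃ m ∈ {m : ℕ | m ≠ n}, K m) := by
      have hsub : (⋃ m, K m) ⊆ K n ∪ ⋃ m ∈ {m : ℕ | m ≠ n}, K m := by
        intro z hz
        simp only [Set.mem_iUnion] at hz
        obtain ⟨m, hm⟩ := hz
        by_cases hmn : m = n
        · left; rwa [← hmn]
        · right; exact Set.mem_biUnion hmn hm
      have := closure_mono hsub hxcl
      rw [closure_union, (hKcomp n).isClosed.closure_eq] at this
      rcases this with h | h
      · exact absurd (Set.mem_iUnion.mpr ⟨n, h⟩) hxnot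
      · exact h
    obtain ⟨z, hzU, hzK⟩ := mem_closure_iff.mp hxcl' U hUopen hxU
    simp only [Set.mem_iUnion, Set.mem_setOf_eq] at hzK
    obtain ⟨m, hm, hzm⟩ := hzK
    -- contradiction
    have h1 : fC y = fC x := hconst y hyU
    have h2 : fC z = fC x := hconst z hzU
    have h3 : (F y : ℂ) = (F z : ℂ) := by rw [show (F y : ℂ) = fC y from rfl,
      show (F z : ℂ) = fC z from rfl, h1, h2]
    have h4 : F y = F z := by exact_mod_cast h3
    rw [hFK n y hyn, hFK m z hzm] at h4
    rcases Ne.lt_or_gt hm with hlt | hlt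
    · have := pow_lt_pow_right_of_lt_one₀ hc0 hc1 hlt
      linarith
    · have := pow_lt_pow_right_of_lt_one₀ hc0 hc1 hlt
      linarith
  · -- not P-point → q-point
    intro hP
    rw [IsPPoint] at hP
    push_neg at hP
    obtain ⟨f, hf⟩ := hP
    set g : C(X, ℝ) := ⟨fun y => min ‖f y - f x‖ 1,
      ((f.continuous.sub continuous_const).norm.min continuous_const)⟩ with hg
    have hg0 : g x = 0 := by simp [hg]
    set c : ℝ := (2:ℝ)⁻¹ with hc
    set S : ℕ → Set X := fun k => g ⁻¹' Set.Icc (c ^ (k + 1)) (c ^ k) with hS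
    have key : x ∈ closure ((⋃ n, S (2 * n)) ∪ (⋃ n, S (2 * n + 1))) := by
      rw [mem_closure_iff]
      intro U hUopen hxU
      obtain ⟨y, hyU, hyne⟩ := hf U hUopen hxU
      have hgy0 : 0 < g y := by
        have : 0 < ‖f y - f x‖ := by
          rw [norm_pos_iff]
          exact sub_ne_zero_of_ne hyne
        simp only [hg, ContinuousMap.coe_mk]
        exact lt_min this one_pos
      have hgy1 : g y ≤ 1 := min_le_right _ _
      obtain ⟨k, hk1, hk2⟩ := exists_pow_interval hgy0 hgy1
      refine ⟨y, hyU, ?_⟩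
      rcases Nat.even_or_odd k with ⟨j, hj⟩ | ⟨j, hj⟩
      · left
        simp only [Set.mem_iUnion]
        refine ⟨j, ?_⟩
        have hjk : 2 * j = k := by omega
        rw [hS]
        simp only [Set.mem_preimage, Set.mem_Icc, hjk]
        exact ⟨hk1, hk2⟩
      · right
        simp only [Set.mem_iUnion]
        refine ⟨j, ?_⟩
        have hjk : 2 * j + 1 = k := by omega
        rw [hS]
        simp only [Set.mem_preimage, Set.mem_Icc, hjk]
        exact ⟨hk1, hk2⟩
    rw [closure_union] at key
    rcases key with h | h
    · exact qpoint_of_fun x g hg0 (fun n => 2 * n) (fun {n m} hnm => by omega) h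
    · exact qpoint_of_fun x g hg0 (fun n => 2 * n + 1) (fun {n m} hnm => by omega) h
end

section
/- Let X be a compact Hausdorff space and A the set of q-points of X. Then X ∖ closure(A) equals the set of isolated points of X. In particular, the set of q-points is dense in X if and only if X has no isolated points. -/
open Set Filter Topology

/-- An isolated point is not a q-point. -/
lemma not_isQPoint_of_isOpen_singleton {X : Type*} [TopologicalSpace X] {x : X}
    (hx : IsOpen ({x} : Set X)) : ¬ IsQPoint x := by
  rintro ⟨K, -, -, -, hcl, hnm⟩
  obtain ⟨w, hw1, hw2⟩ := mem_closure_iff.1 hcl {x} hx rfl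
  exact hnm (hw1 ▸ hw2)

/-- Near every non-isolated point of a compact Hausdorff space there is a q-point. -/
lemma exists_qpoint_near {X : Type*} [TopologicalSpace X] [CompactSpace X] [T2Space X]
    {x : X} (hx : ¬ IsOpen ({x} : Set X)) {U : Set X} (hU : IsOpen U) (hxU : x ∈ U) :
    ∃ z ∈ U, IsQPoint z := by
  obtain ⟨V, hVopen, hxV, hVU⟩ :=
    normal_exists_closure_subset isClosed_singleton hU (Set.singleton_subset_iff.2 hxU)
  have hxV' : x ∈ V := hxV rfl
  -- step: from an open set G containing x, produce y ∈ W with closure W ⊆ G, and a smaller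
  -- open G' containing x, disjoint from closure W.
  have step : ∀ G : {G : Set X // IsOpen G ∧ x ∈ G},
      ∃ p : X × Set X × {G' : Set X // IsOpen G' ∧ x ∈ G'},
        p.1 ∈ p.2.1 ∧ IsOpen p.2.1 ∧ closure p.2.1 ⊆ G.1 ∧
        p.2.2.1 ⊆ G.1 ∧ Disjoint p.2.2.1 (closure p.2.1) := by
    rintro ⟨G, hGo, hxG⟩
    have hexy : ∃ y ∈ G, y ≠ x := by
      by_contra h
      push_neg at h
      have hGx : G = {x} :=
        subset_antisymm (fun y hy => h y hy) (Set.singleton_subset_iff.2 hxG)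
      exact hx (hGx ▸ hGo)
    obtain ⟨y, hyG, hyx⟩ := hexy
    obtain ⟨O1, O2, hO1, hO2, hyO1, hxO2, hO12⟩ := t2_separation hyx
    obtain ⟨W, hWo, hyW, hWc⟩ := normal_exists_closure_subset isClosed_singleton
      (hO1.inter hGo) (Set.singleton_subset_iff.2 ⟨hyO1, hyG⟩)
    have hxnW : x ∉ closure W := fun h =>
      (Set.disjoint_iff.1 hO12) ⟨(hWc h).1, hxO2⟩
    refine ⟨⟨y, W, ⟨G ∩ (closure W)ᶜ, hGo.inter isClosed_closure.isOpen_compl,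
      ⟨hxG, hxnW⟩⟩⟩, hyW rfl, hWo, fun w hw => (hWc hw).2,
      Set.inter_subset_left, Set.disjoint_left.2 fun a ha hb => ha.2 hb⟩
  choose f hf1 hf2 hf3 hf4 hf5 using step
  set seq : ℕ → {G : Set X // IsOpen G ∧ x ∈ G} :=
    fun n => Nat.rec ⟨V, hVopen, hxV'⟩ (fun _ G => (f G).2.2) n with hseq
  set y : ℕ → X := fun n => (f (seq n)).1 with hy
  set W : ℕ → Set X := fun n => (f (seq n)).2.1 with hW
  have hyW : ∀ n, y n ∈ W n := fun n => hf1 (seq n)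
  have hWo : ∀ n, IsOpen (W n) := fun n => hf2 (seq n)
  have hWcl : ∀ n, closure (W n) ⊆ (seq n).1 := fun n => hf3 (seq n)
  have hsub : ∀ n, (seq (n + 1)).1 ⊆ (seq n).1 := fun n => hf4 (seq n)
  have hdisj : ∀ n, Disjoint (seq (n + 1)).1 (closure (W n)) := fun n => hf5 (seq n)
  have hanti : ∀ m n, m ≤ n → (seq n).1 ⊆ (seq m).1 := by
    intro m n hmn
    induction n with
    | zero => simp [Nat.le_zero.1 hmn]
    | succ k ih =>
      rcases Nat.lt_or_ge m (k + 1) with h | h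
      · exact (hsub k).trans (ih (Nat.lt_succ_iff.1 h))
      · have hm : m = k + 1 := le_antisymm hmn h
        simp [hm]
  have hWseq : ∀ n, W n ⊆ (seq n).1 := fun n => subset_closure.trans (hWcl n)
  have hyseq : ∀ n, y n ∈ (seq n).1 := fun n => hWseq n (hyW n)
  have hsep : ∀ m n, m ≠ n → y m ∉ W n := by
    intro m n hmn hmem
    rcases Nat.lt_or_ge m n with h | h
    · -- m < n : W n ⊆ (seq (m+1)).1, which is disjoint from closure (W m) ∋ y m
      have h1 : y m ∈ (seq (m + 1)).1 := hanti (m + 1) n h ((hWseq n) hmem)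
      exact Set.disjoint_left.1 (hdisj m) h1 (subset_closure (hyW m))
    · -- n < m : y m ∈ (seq m).1 ⊆ (seq (n+1)).1, disjoint from closure (W n) ∋ y m
      have hnm' : n < m := lt_of_le_of_ne h (Ne.symm hmn)
      have h1 : y m ∈ (seq (n + 1)).1 := hanti (n + 1) m hnm' (hyseq m)
      exact Set.disjoint_left.1 (hdisj n) h1 (subset_closure hmem)
  have hinj : Function.Injective y := by
    intro m n hmn
    by_contra h
    exact hsep m n h (hmn ▸ hyW n)
  have hyV : ∀ n, y n ∈ V := fun n => hanti 0 n (Nat.zero_le n) (hyseq n)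
  -- get an accumulation point of the range of y
  have hSinf : (Set.range y).Infinite := Set.infinite_range_of_injective hinj
  obtain ⟨z, hz⟩ := hSinf.exists_accPt_principal
  rw [accPt_principal_iff_clusterPt] at hz
  have hzcl : z ∈ closure (Set.range y \ {z}) := mem_closure_iff_clusterPt.2 hz
  have hzclS : z ∈ closure (Set.range y) := closure_mono Set.diff_subset hzcl
  have hznS : z ∉ Set.range y := by
    rintro ⟨n, rfl⟩
    obtain ⟨w, hw1, hw2, hw3⟩ := mem_closure_iff.1 hzcl (W n) (hWo n) (hyW n)
    obtain ⟨m, rfl⟩ := hw2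
    have hmn : m ≠ n := fun h => hw3 (h ▸ rfl)
    exact hsep m n hmn hw1
  refine ⟨z, hVU (closure_mono (Set.range_subset_iff.2 hyV) hzclS), fun n => {y n}, ?_, ?_, ?_, ?_, ?_⟩
  · exact fun n => isCompact_singleton
  · intro m n hmn
    simpa [Function.onFun] using hinj.ne hmn
  · intro n
    rw [Set.disjoint_left]
    rintro a rfl hcl
    have hsubc : (⋃ m ∈ {m : ℕ | m ≠ n}, ({y m} : Set X)) ⊆ (W n)ᶜ := by
      simp only [Set.iUnion_subset_iff]
      rintro m hm a rfl
      exact hsep m n hm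
    have := (closure_minimal hsubc (hWo n).isClosed_compl) hcl
    exact this (hyW n)
  · simpa [Set.iUnion_singleton_eq_range] using hzclS
  · simpa [Set.iUnion_singleton_eq_range] using hznS

theorem stmt18 {X : Type*} [TopologicalSpace X] [CompactSpace X] [T2Space X]
    (A : Set X) (hA : A = {x : X | IsQPoint x}) :
    (Set.univ \ closure A = {x : X | IsOpen ({x} : Set X)}) ∧
    (Dense A ↔ ∀ x : X, ¬ IsOpen ({x} : Set X)) := by
  have h1 : ∀ x : X, IsOpen ({x} : Set X) → x ∉ closure A := by
    intro x hop hcl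
    obtain ⟨w, hw1, hw2⟩ := mem_closure_iff.1 hcl {x} hop rfl
    rw [hA] at hw2
    exact not_isQPoint_of_isOpen_singleton (hw1 ▸ hop) (hw1 ▸ hw2)
  have h2 : ∀ x : X, ¬ IsOpen ({x} : Set X) → x ∈ closure A := by
    intro x hop
    rw [mem_closure_iff]
    intro O hO hxO
    obtain ⟨z, hzO, hzq⟩ := exists_qpoint_near hop hO hxO
    exact ⟨z, hzO, hA ▸ hzq⟩
  constructor
  · ext x
    simp only [Set.mem_diff, Set.mem_univ, true_and, Set.mem_setOf_eq]
    exact ⟨fun h => by by_contra hc; exact h (h2 x hc), fun h => h1 x h⟩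
  · rw [dense_iff_closure_eq]
    constructor
    · intro h x hop
      exact h1 x hop (h ▸ Set.mem_univ x)
    · intro h
      exact Set.eq_univ_of_forall fun x => h2 x (h x)
end
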